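/- arXiv:2511.18952 — 6 statements merged into one kernel-verified Lean document; each statement's English description precedes it below -/
import Mathlib

section
/- Let D = (V, A) be a digraph, k ≥ 0 and c ≥ 1 integers, T_1, …, T_k pairwise arc-disjoint spanning arborescences of D, and F a spanning c-branching of D arc-disjoint from T_1, …, T_k, with components T^1, …, T^c. Set A' := A \ (A(T^1) ∪ … ∪ A(T^{c−1})) and U := V(T^1) ∪ … ∪ V(T^{c−1}). Call a subpartition P of V tight if Σ_{X∈P} d_{A'}^-(X) = k(|P| − 1). Assume that for every arc of A with tail in U and head in V(T^c) there exists a tight subpartition one of whose members is entered by that arc. Let X_0 be inclusion-minimal among all subsets X ⊆ V such that X belongs to some tight subpartition and some arc of A with tail in U and head in V(T^c) enters X. Then X_0 ⊆ V(T^c). -/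
/-!
Digraphs may have parallel arcs but no loops.  We model a digraph `D = (V, A)` by a finite
vertex type `V`, a finite arc type `α` and maps `tail head : α → V` with `tail a ≠ head a`.
Subdigraphs are given by their arc sets (`Finset α`) together with vertex sets (`Finset V`).
-/

attribute [local instance] Classical.propDecidable

/-- One step from `u` to `w` along an arc of the arc set `B`. -/
def DiStep {V α : Type} (tail head : α → V) (B : Finset α) (u w : V) : Prop :=
  ∃ a ∈ B, tail a = u ∧ head a = w

/-- `w` is reachable from `u` by a directed path using arcs of `B`. -/
def DiReach {V α : Type} (tail head : α → V) (B : Finset α) (u w : V) : Prop :=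
  Relation.ReflTransGen (DiStep tail head B) u w

/-- `d_B^-(X)`: the number of arcs of `B` with tail outside `X` and head in `X`. -/
noncomputable def inDeg {V α : Type} (tail head : α → V) (B : Finset α) (X : Finset V) : ℕ :=
  (B.filter fun a => tail a ∉ X ∧ head a ∈ X).card

/-- The arc set `B` is an `r`-arborescence with vertex set `S`:  all arcs have both ends in
`S`, the root `r` has in-degree `0`, every other vertex of `S` has in-degree exactly `1`, and
every vertex of `S` is reachable from `r` (hence there is exactly one directed path from `r`
to each vertex, and the underlying graph is a tree). -/
def IsArborescence {V α : Type} (tail head : α → V) (S : Finset V) (B : Finset α)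
    (r : V) : Prop :=
  r ∈ S ∧ (∀ a ∈ B, tail a ∈ S ∧ head a ∈ S) ∧
    (∀ a ∈ B, head a ≠ r) ∧
    (∀ v ∈ S, v ≠ r → (B.filter fun a => head a = v).card = 1) ∧
    ∀ v ∈ S, DiReach tail head B r v

/-- The arc set `B` is a branching with vertex set `S` and root set `R`: every component is
an arborescence rooted at the member of `R` it contains. -/
def IsBranching {V α : Type} (tail head : α → V) (S : Finset V) (B : Finset α)
    (R : Finset V) : Prop :=
  R ⊆ S ∧ (∀ a ∈ B, tail a ∈ S ∧ head a ∈ S) ∧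
    (∀ r ∈ R, ∀ a ∈ B, head a ≠ r) ∧
    (∀ v ∈ S, v ∉ R → (B.filter fun a => head a = v).card = 1) ∧
    ∀ v ∈ S, ∃ r ∈ R, DiReach tail head B r v

/-- The arc set of the component of a branching `B` rooted at `r`. -/
noncomputable def compArcs {V α : Type} (tail head : α → V) (B : Finset α) (r : V) :
    Finset α :=
  B.filter fun a => DiReach tail head B r (head a)

/-- A subpartition of the vertex set: a family of pairwise disjoint nonempty subsets. -/
def IsSubpartition {V : Type} (P : Finset (Finset V)) : Prop :=
  (∀ X ∈ P, X.Nonempty) ∧ ∀ X ∈ P, ∀ Y ∈ P, X ≠ Y → Disjoint X Y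

/-- The vertex set of the component of a branching `B` rooted at `r`. -/
noncomputable def compVerts {V α : Type} [Fintype V] (tail head : α → V) (B : Finset α)
    (r : V) : Finset V :=
  Finset.univ.filter (DiReach tail head B r)

noncomputable def rcnt {V : Type} {k : ℕ} (rt : Fin k → V) (X : Finset V) : ℕ :=
  (Finset.univ.filter fun i : Fin k => rt i ∈ X).card

lemma diReach_cross {V α : Type} (tl hd : α → V) (B : Finset α) (X : Finset V) {u w : V}
    (h : DiReach tl hd B u w) (hu : u ∉ X) : w ∈ X → ∃ a ∈ B, tl a ∉ X ∧ hd a ∈ X := by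
  induction h with
  | refl => exact fun hw => (hu hw).elim
  | tail hbc hstep ih =>
    intro hw
    rename_i b c
    by_cases hb : b ∈ X
    · exact ih hb
    · obtain ⟨a, ha, h1, h2⟩ := hstep
      exact ⟨a, ha, h1 ▸ hb, h2 ▸ hw⟩

lemma inDeg_submod {V α : Type} (tl hd : α → V) (Ar : Finset α) (X Y : Finset V) :
    inDeg tl hd Ar (X ∩ Y) + inDeg tl hd Ar (X ∪ Y) ≤ inDeg tl hd Ar X + inDeg tl hd Ar Y := by
  simp only [inDeg, Finset.card_filter]
  rw [← Finset.sum_add_distrib, ← Finset.sum_add_distrib]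
  apply Finset.sum_le_sum
  intro a _
  by_cases h1 : tl a ∈ X <;> by_cases h2 : tl a ∈ Y <;> by_cases h3 : hd a ∈ X <;>
    by_cases h4 : hd a ∈ Y <;>
    simp [Finset.mem_inter, Finset.mem_union, h1, h2, h3, h4]

lemma rcnt_modular {V : Type} {k : ℕ} (rt : Fin k → V) (X Y : Finset V) :
    rcnt rt (X ∩ Y) + rcnt rt (X ∪ Y) = rcnt rt X + rcnt rt Y := by
  simp only [rcnt, Finset.card_filter]
  rw [← Finset.sum_add_distrib, ← Finset.sum_add_distrib]
  apply Finset.sum_congr rfl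
  intro i _
  by_cases h1 : rt i ∈ X <;> by_cases h2 : rt i ∈ Y <;>
    simp [Finset.mem_inter, Finset.mem_union, h1, h2]

lemma rcnt_mono {V : Type} {k : ℕ} (rt : Fin k → V) {X Y : Finset V} (h : X ⊆ Y) :
    rcnt rt X ≤ rcnt rt Y := by
  apply Finset.card_le_card
  intro i hi
  simp only [Finset.mem_filter, Finset.mem_univ, true_and] at *
  exact h hi

lemma sum_const_le_eq {β : Type*} {s : Finset β} {f : β → ℕ} {c : ℕ}
    (h : ∀ x ∈ s, c ≤ f x) (hs : ∑ x ∈ s, f x ≤ c * s.card) : ∀ x ∈ s, f x = c := by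
  intro x hx
  have h1 : ∑ y ∈ s.erase x, f y + f x = ∑ y ∈ s, f y := Finset.sum_erase_add s f hx
  have h2 : c * (s.erase x).card ≤ ∑ y ∈ s.erase x, f y := by
    rw [mul_comm]
    exact Finset.card_nsmul_le_sum _ _ _ (fun y hy => h y (Finset.mem_of_mem_erase hy))
  have h3 : (s.erase x).card = s.card - 1 := Finset.card_erase_of_mem hx
  have h4 : 1 ≤ s.card := Finset.card_pos.mpr ⟨x, hx⟩
  have h6 := h x hx
  have h5 : c * s.card = c * (s.card - 1) + c := by
    have h7 : s.card - 1 + 1 = s.card := Nat.succ_pred_eq_of_pos h4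
    calc c * s.card = c * (s.card - 1 + 1) := by rw [h7]
    _ = c * (s.card - 1) + c := by ring
  rw [h3] at h2
  omega

lemma sum_le_const_eq {β : Type*} {s : Finset β} {f : β → ℕ} {c : ℕ}
    (h : ∀ x ∈ s, f x ≤ c) (hs : c * s.card ≤ ∑ x ∈ s, f x) : ∀ x ∈ s, f x = c := by
  intro x hx
  have h1 : ∑ y ∈ s.erase x, f y + f x = ∑ y ∈ s, f y := Finset.sum_erase_add s f hx
  have h2 : ∑ y ∈ s.erase x, f y ≤ c * (s.erase x).card := by
    rw [mul_comm]
    exact Finset.sum_le_card_nsmul _ _ _ (fun y hy => h y (Finset.mem_of_mem_erase hy))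
  have h3 : (s.erase x).card = s.card - 1 := Finset.card_erase_of_mem hx
  have h4 : 1 ≤ s.card := Finset.card_pos.mpr ⟨x, hx⟩
  have h6 := h x hx
  have h5 : c * s.card = c * (s.card - 1) + c := by
    have h7 : s.card - 1 + 1 = s.card := Nat.succ_pred_eq_of_pos h4
    calc c * s.card = c * (s.card - 1 + 1) := by rw [h7]
    _ = c * (s.card - 1) + c := by ring
  rw [h3] at h2
  omega

lemma rcnt_sum_swap {V : Type} {k : ℕ} (rt : Fin k → V) (Q : Finset (Finset V)) :
    ∑ X ∈ Q, rcnt rt X = ∑ i : Fin k, (Q.filter fun X => rt i ∈ X).card := by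
  simp only [rcnt, Finset.card_filter]
  rw [Finset.sum_comm]

lemma cnt_le_one {V : Type} {k : ℕ} (rt : Fin k → V) {Q : Finset (Finset V)}
    (hQ : IsSubpartition Q) (i : Fin k) : (Q.filter fun X => rt i ∈ X).card ≤ 1 := by
  apply Finset.card_le_one.mpr
  intro X hX Y hY
  simp only [Finset.mem_filter] at hX hY
  by_contra hne
  exact Finset.disjoint_left.mp (hQ.2 X hX.1 Y hY.1 hne) hX.2 hY.2

lemma subpart_forward {V α : Type} (tail head : α → V) (A' : Finset α) {k : ℕ}
    (rt : Fin k → V)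
    (hlb : ∀ X : Finset V, X.Nonempty → k ≤ inDeg tail head A' X + rcnt rt X)
    (Q : Finset (Finset V)) (hQ : IsSubpartition Q)
    (hsum : ∑ X ∈ Q, (inDeg tail head A' X : ℤ) = (k : ℤ) * ((Q.card : ℤ) - 1)) :
    (∀ X ∈ Q, inDeg tail head A' X + rcnt rt X = k) ∧
      (∀ i : Fin k, ∃ X ∈ Q, rt i ∈ X) := by
  have hr_le : ∑ X ∈ Q, rcnt rt X ≤ k := by
    rw [rcnt_sum_swap]
    calc ∑ i : Fin k, (Q.filter fun X => rt i ∈ X).card ≤ ∑ i : Fin k, 1 :=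
          Finset.sum_le_sum fun i _ => cnt_le_one rt hQ i
    _ = k := by simp
  have hterm : ∀ X ∈ Q, k ≤ inDeg tail head A' X + rcnt rt X :=
    fun X hX => hlb X (hQ.1 X hX)
  have hlbsum : k * Q.card ≤ ∑ X ∈ Q, (inDeg tail head A' X + rcnt rt X) := by
    rw [mul_comm]
    exact Finset.card_nsmul_le_sum _ _ _ hterm
  rw [Finset.sum_add_distrib] at hlbsum
  -- from hsum : ∑ inDeg = k*Q.card - k  (in ℤ)
  have hd_nat : (∑ X ∈ Q, inDeg tail head A' X : ℤ) + (k : ℤ) = (k : ℤ) * Q.card := by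
    rw [hsum]; ring
  have hdk : ∑ X ∈ Q, inDeg tail head A' X + k = k * Q.card := by exact_mod_cast hd_nat
  have hrk : ∑ X ∈ Q, rcnt rt X = k := by omega
  constructor
  · apply sum_const_le_eq hterm
    rw [Finset.sum_add_distrib]; omega
  · intro i
    have := sum_le_const_eq (s := (Finset.univ : Finset (Fin k)))
      (f := fun i => (Q.filter fun X => rt i ∈ X).card) (c := 1)
      (fun i _ => cnt_le_one rt hQ i)
      (by rw [← rcnt_sum_swap, hrk]; simp) i (Finset.mem_univ i)
    have hpos : 0 < (Q.filter fun X => rt i ∈ X).card := by omega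
    obtain ⟨X, hX⟩ := Finset.card_pos.mp hpos
    simp only [Finset.mem_filter] at hX
    exact ⟨X, hX.1, hX.2⟩

lemma subpart_backward {V α : Type} (tail head : α → V) (A' : Finset α) {k : ℕ}
    (rt : Fin k → V)
    (Q : Finset (Finset V)) (hQ : IsSubpartition Q)
    (htight : ∀ X ∈ Q, inDeg tail head A' X + rcnt rt X = k)
    (hcov : ∀ i : Fin k, ∃ X ∈ Q, rt i ∈ X) :
    ∑ X ∈ Q, (inDeg tail head A' X : ℤ) = (k : ℤ) * ((Q.card : ℤ) - 1) := by
  have hcnt : ∀ i : Fin k, (Q.filter fun X => rt i ∈ X).card = 1 := by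
    intro i
    refine le_antisymm (cnt_le_one rt hQ i) ?_
    obtain ⟨X, hX, hrX⟩ := hcov i
    exact Finset.card_pos.mpr ⟨X, Finset.mem_filter.mpr ⟨hX, hrX⟩⟩
  have hrk : ∑ X ∈ Q, rcnt rt X = k := by
    rw [rcnt_sum_swap]
    simp [hcnt]
  have : ∑ X ∈ Q, ((inDeg tail head A' X : ℤ) + (rcnt rt X : ℤ)) = (k : ℤ) * Q.card := by
    rw [Finset.sum_congr rfl (g := fun X => (k : ℤ)) (fun X hX => by have := htight X hX; push_cast; exact_mod_cast this)]
    rw [Finset.sum_const, nsmul_eq_mul, mul_comm]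
  rw [Finset.sum_add_distrib] at this
  have h2 : ∑ X ∈ Q, (rcnt rt X : ℤ) = (k : ℤ) := by exact_mod_cast hrk
  rw [h2] at this
  linarith [this]

lemma tight_uncross {V α : Type} (tail head : α → V) (A' : Finset α) {k : ℕ}
    (rt : Fin k → V)
    (hlb : ∀ X : Finset V, X.Nonempty → k ≤ inDeg tail head A' X + rcnt rt X)
    {X Y : Finset V} (hX : inDeg tail head A' X + rcnt rt X = k)
    (hY : inDeg tail head A' Y + rcnt rt Y = k) (hne : (X ∩ Y).Nonempty) :
    inDeg tail head A' (X ∩ Y) + rcnt rt (X ∩ Y) = k := by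
  have h1 := hlb _ hne
  obtain ⟨v, hv⟩ := hne
  have h2 := hlb (X ∪ Y) ⟨v, Finset.mem_union_left _ (Finset.mem_inter.mp hv).1⟩
  have h3 := inDeg_submod tail head A' X Y
  have h4 := rcnt_modular rt X Y
  omega

lemma refine_subpart {V α : Type} (tail head : α → V) (A' : Finset α) {k : ℕ}
    (rt : Fin k → V)
    (hlb : ∀ X : Finset V, X.Nonempty → k ≤ inDeg tail head A' X + rcnt rt X)
    (P Q : Finset (Finset V)) (hP : IsSubpartition P) (hQ : IsSubpartition Q)
    (hPsum : ∑ X ∈ P, (inDeg tail head A' X : ℤ) = (k : ℤ) * ((P.card : ℤ) - 1))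
    (hQsum : ∑ X ∈ Q, (inDeg tail head A' X : ℤ) = (k : ℤ) * ((Q.card : ℤ) - 1))
    {X Y : Finset V} (hXP : X ∈ P) (hYQ : Y ∈ Q) (hne : (X ∩ Y).Nonempty) :
    ∃ R : Finset (Finset V), IsSubpartition R ∧
      (∑ Z ∈ R, (inDeg tail head A' Z : ℤ) = (k : ℤ) * ((R.card : ℤ) - 1)) ∧ X ∩ Y ∈ R := by
  obtain ⟨hPt, hPcov⟩ := subpart_forward tail head A' rt hlb P hP hPsum
  obtain ⟨hQt, hQcov⟩ := subpart_forward tail head A' rt hlb Q hQ hQsum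
  set R : Finset (Finset V) :=
    ((P ×ˢ Q).image fun p => p.1 ∩ p.2).filter (fun Z => Z.Nonempty) with hR
  have hmemR : ∀ Z, Z ∈ R ↔ (∃ X' ∈ P, ∃ Y' ∈ Q, X' ∩ Y' = Z) ∧ Z.Nonempty := by
    intro Z
    simp only [hR, Finset.mem_filter, Finset.mem_image, Finset.mem_product, Prod.exists]
    constructor
    · rintro ⟨⟨x, y, ⟨hx, hy⟩, hZ⟩, hne'⟩
      exact ⟨⟨x, hx, y, hy, hZ⟩, hne'⟩
    · rintro ⟨⟨x, hx, y, hy, hZ⟩, hne'⟩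
      exact ⟨⟨x, y, ⟨hx, hy⟩, hZ⟩, hne'⟩
  have hRsub : IsSubpartition R := by
    constructor
    · intro Z hZ
      exact ((hmemR Z).mp hZ).2
    · intro Z₁ hZ₁ Z₂ hZ₂ hne'
      obtain ⟨⟨x₁, hx₁, y₁, hy₁, hZ₁e⟩, -⟩ := (hmemR Z₁).mp hZ₁
      obtain ⟨⟨x₂, hx₂, y₂, hy₂, hZ₂e⟩, -⟩ := (hmemR Z₂).mp hZ₂
      by_cases hxx : x₁ = x₂
      · have hyy : y₁ ≠ y₂ := by
          intro h; exact hne' (by rw [← hZ₁e, ← hZ₂e, hxx, h])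
        have := hQ.2 y₁ hy₁ y₂ hy₂ hyy
        exact Finset.disjoint_left.mpr fun {a} ha₁ ha₂ => by
          rw [← hZ₁e] at ha₁; rw [← hZ₂e] at ha₂
          exact Finset.disjoint_left.mp this (Finset.mem_inter.mp ha₁).2
            (Finset.mem_inter.mp ha₂).2
      · have := hP.2 x₁ hx₁ x₂ hx₂ hxx
        exact Finset.disjoint_left.mpr fun {a} ha₁ ha₂ => by
          rw [← hZ₁e] at ha₁; rw [← hZ₂e] at ha₂
          exact Finset.disjoint_left.mp this (Finset.mem_inter.mp ha₁).1
            (Finset.mem_inter.mp ha₂).1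
  have hRt : ∀ Z ∈ R, inDeg tail head A' Z + rcnt rt Z = k := by
    intro Z hZ
    obtain ⟨⟨x, hx, y, hy, hZe⟩, hne'⟩ := (hmemR Z).mp hZ
    rw [← hZe] at hne' ⊢
    exact tight_uncross tail head A' rt hlb (hPt x hx) (hQt y hy) hne'
  have hRcov : ∀ i : Fin k, ∃ Z ∈ R, rt i ∈ Z := by
    intro i
    obtain ⟨x, hx, hrx⟩ := hPcov i
    obtain ⟨y, hy, hry⟩ := hQcov i
    have hm : rt i ∈ x ∩ y := Finset.mem_inter.mpr ⟨hrx, hry⟩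
    exact ⟨x ∩ y, (hmemR _).mpr ⟨⟨x, hx, y, hy, rfl⟩, ⟨rt i, hm⟩⟩, hm⟩
  exact ⟨R, hRsub, subpart_backward tail head A' rt R hRsub hRt hRcov,
    (hmemR _).mpr ⟨⟨X, hXP, Y, hYQ, rfl⟩, hne⟩⟩

/-- **Claim (locating `X₀`).**  With `A' := A \ (A(T^1) ∪ … ∪ A(T^{c-1}))` and
`U := V(T^1) ∪ … ∪ V(T^{c-1})`, call a subpartition `P` tight if
`∑_{X∈P} d_{A'}^-(X) = k(|P|-1)`.  Assume every arc of `A` with tail in `U` and head in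
`V(T^c)` enters a member of some tight subpartition.  If `X₀` is inclusion-minimal among
the sets belonging to some tight subpartition and entered by some arc with tail in `U` and
head in `V(T^c)`, then `X₀ ⊆ V(T^c)`. -/
theorem minimal_tight_set_in_last_component {V α : Type} [Fintype V] [Nonempty V]
    [Fintype α] (tail head : α → V) (hloopless : ∀ a : α, tail a ≠ head a)
    (k c : ℕ) (hc : 1 ≤ c)
    (T : Fin k → Finset α) (rt : Fin k → V)
    (hT : ∀ i, IsArborescence tail head Finset.univ (T i) (rt i))
    (hTdisj : ∀ i j, i ≠ j → Disjoint (T i) (T j))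
    (B : Finset α) (ρ : Fin c → V) (hρ : Function.Injective ρ)
    (hF : IsBranching tail head Finset.univ B (Finset.image ρ Finset.univ))
    (hFdisj : ∀ i, Disjoint (T i) B)
    (A' : Finset α)
    (hA' : A' = Finset.univ \
      ((Finset.univ.filter fun i : Fin c => (i : ℕ) < c - 1).biUnion
        fun i => compArcs tail head B (ρ i)))
    (U : Finset V)
    (hU : U = (Finset.univ.filter fun i : Fin c => (i : ℕ) < c - 1).biUnion
      fun i => compVerts tail head B (ρ i))
    -- every arc with tail in `U` and head in `V(T^c)` enters a member of a tight subpartition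
    (hall : ∀ a : α, tail a ∈ U →
      head a ∈ compVerts tail head B (ρ ⟨c - 1, by omega⟩) →
      ∃ P : Finset (Finset V), IsSubpartition P ∧
        (∑ X ∈ P, (inDeg tail head A' X : ℤ) = (k : ℤ) * ((P.card : ℤ) - 1)) ∧
        ∃ X ∈ P, tail a ∉ X ∧ head a ∈ X)
    (X₀ : Finset V)
    (hX₀ : (∃ P : Finset (Finset V), IsSubpartition P ∧
        (∑ X ∈ P, (inDeg tail head A' X : ℤ) = (k : ℤ) * ((P.card : ℤ) - 1)) ∧ X₀ ∈ P) ∧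
      ∃ a : α, tail a ∈ U ∧ head a ∈ compVerts tail head B (ρ ⟨c - 1, by omega⟩) ∧
        tail a ∉ X₀ ∧ head a ∈ X₀)
    (hmin : ∀ X : Finset V, X ⊆ X₀ →
      ((∃ P : Finset (Finset V), IsSubpartition P ∧
          (∑ Y ∈ P, (inDeg tail head A' Y : ℤ) = (k : ℤ) * ((P.card : ℤ) - 1)) ∧ X ∈ P) ∧
        ∃ a : α, tail a ∈ U ∧ head a ∈ compVerts tail head B (ρ ⟨c - 1, by omega⟩) ∧
          tail a ∉ X ∧ head a ∈ X) → X = X₀) :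
    X₀ ⊆ compVerts tail head B (ρ ⟨c - 1, by omega⟩) := by

  obtain ⟨⟨P, hPsub, hPsum, hX₀P⟩, a, haU, haW, haT, haH⟩ := hX₀
  set W : Finset V := compVerts tail head B (ρ ⟨c - 1, by omega⟩) with hWdef
  -- every arborescence lies in A'
  have hTA' : ∀ i, T i ⊆ A' := by
    intro i e he
    rw [hA']
    refine Finset.mem_sdiff.mpr ⟨Finset.mem_univ _, ?_⟩
    intro hmem
    obtain ⟨j, -, hj⟩ := Finset.mem_biUnion.mp hmem
    have heB : e ∈ B := (Finset.mem_filter.mp hj).1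
    exact Finset.disjoint_left.mp (hFdisj i) he heB
  -- the lower bound  k ≤ d(X) + r(X)  for nonempty X
  have hlb : ∀ X : Finset V, X.Nonempty → k ≤ inDeg tail head A' X + rcnt rt X := by
    intro X hXne
    obtain ⟨v, hv⟩ := hXne
    have hsplit : (Finset.univ.filter fun i : Fin k => rt i ∈ X).card +
        (Finset.univ.filter fun i : Fin k => ¬ rt i ∈ X).card = k := by
      rw [Finset.card_filter_add_card_filter_not]
      simp
    have hkey : (Finset.univ.filter fun i : Fin k => ¬ rt i ∈ X).card ≤
        inDeg tail head A' X := by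
      rcases isEmpty_or_nonempty α with hα | hα
      · have hemp : (Finset.univ.filter fun i : Fin k => ¬ rt i ∈ X) = ∅ := by
          refine Finset.eq_empty_of_forall_notMem fun i hi => ?_
          simp only [Finset.mem_filter, Finset.mem_univ, true_and] at hi
          have hreach := (hT i).2.2.2.2 v (Finset.mem_univ v)
          obtain ⟨e, -, -⟩ := diReach_cross tail head (T i) X hreach hi hv
          exact hα.false e
        simp [hemp]
      · obtain ⟨e₀⟩ := hα
        have hexx : ∀ i : Fin k, rt i ∉ X → ∃ e, e ∈ T i ∧ tail e ∉ X ∧ head e ∈ X := by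
          intro i hi
          have hreach := (hT i).2.2.2.2 v (Finset.mem_univ v)
          obtain ⟨e, he, h1, h2⟩ := diReach_cross tail head (T i) X hreach hi hv
          exact ⟨e, he, h1, h2⟩
        unfold inDeg
        apply Finset.card_le_card_of_injOn
          (fun i => if h : rt i ∉ X then (hexx i h).choose else e₀)
        · intro i hi
          simp only [Finset.mem_coe, Finset.mem_filter, Finset.mem_univ, true_and] at hi
          obtain ⟨h1, h2, h3⟩ := (hexx i hi).choose_spec
          simp only [dif_pos hi]
          exact Finset.mem_filter.mpr ⟨hTA' i h1, h2, h3⟩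
        · intro i hi j hj hij
          simp only [Finset.mem_coe, Finset.mem_filter, Finset.mem_univ, true_and] at hi hj
          simp only [dif_pos hi, dif_pos hj] at hij
          by_contra hne
          have h1 := ((hexx i hi).choose_spec).1
          have h2 := ((hexx j hj).choose_spec).1
          rw [hij] at h1
          exact Finset.disjoint_left.mp (hTdisj i j hne) h1 h2
    have hrc : rcnt rt X = (Finset.univ.filter fun i : Fin k => rt i ∈ X).card := rfl
    omega
  have hPforward := subpart_forward tail head A' rt hlb P hPsub hPsum
  have hXt := hPforward.1 X₀ hX₀P
  -- every vertex not in the last component lies in U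
  have hcover : ∀ v : V, v ∉ W → v ∈ U := by
    intro v hv
    obtain ⟨rr, hrr, hreach⟩ := hF.2.2.2.2 v (Finset.mem_univ v)
    obtain ⟨i, -, rfl⟩ := Finset.mem_image.mp hrr
    rw [hU]
    apply Finset.mem_biUnion.mpr
    refine ⟨i, Finset.mem_filter.mpr ⟨Finset.mem_univ _, ?_⟩, ?_⟩
    · by_contra hge
      have hiv : (i : ℕ) = c - 1 := by have := i.isLt; omega
      have hieq : i = (⟨c - 1, by omega⟩ : Fin c) := Fin.ext hiv
      apply hv
      rw [hWdef, ← hieq]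
      exact Finset.mem_filter.mpr ⟨Finset.mem_univ _, hreach⟩
    · exact Finset.mem_filter.mpr ⟨Finset.mem_univ _, hreach⟩
  -- no arc inside X₀ from outside W into W
  have hstep2 : ∀ b : α, head b ∈ X₀ → head b ∈ W → tail b ∈ X₀ → tail b ∉ W → False := by
    intro b hb1 hb2 hb3 hb4
    have hbU : tail b ∈ U := hcover _ hb4
    obtain ⟨Q, hQsub, hQsum, Y, hYQ, hbY1, hbY2⟩ := hall b hbU hb2
    have hneXY : (X₀ ∩ Y).Nonempty := ⟨head b, Finset.mem_inter.mpr ⟨hb1, hbY2⟩⟩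
    obtain ⟨R, hRsub, hRsum, hZR⟩ :=
      refine_subpart tail head A' rt hlb P Q hPsub hQsub hPsum hQsum hX₀P hYQ hneXY
    have heq := hmin (X₀ ∩ Y) Finset.inter_subset_left
      ⟨⟨R, hRsub, hRsum, hZR⟩, b, hbU, hb2,
        fun hmem => hbY1 (Finset.mem_inter.mp hmem).2, Finset.mem_inter.mpr ⟨hb1, hbY2⟩⟩
    have hbt : tail b ∈ X₀ ∩ Y := by rw [heq]; exact hb3
    exact hbY1 (Finset.mem_inter.mp hbt).2
  -- Z := X₀ ∩ W is a tight set
  have hZne : (X₀ ∩ W).Nonempty := ⟨head a, Finset.mem_inter.mpr ⟨haH, haW⟩⟩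
  have hdZ : inDeg tail head A' (X₀ ∩ W) ≤ inDeg tail head A' X₀ := by
    unfold inDeg
    apply Finset.card_le_card
    intro b hb
    obtain ⟨hbA, hbt, hbh⟩ := Finset.mem_filter.mp hb
    refine Finset.mem_filter.mpr ⟨hbA, ?_, (Finset.mem_inter.mp hbh).1⟩
    intro hbtX₀
    have hbtW : tail b ∉ W := fun hw => hbt (Finset.mem_inter.mpr ⟨hbtX₀, hw⟩)
    exact hstep2 b (Finset.mem_inter.mp hbh).1 (Finset.mem_inter.mp hbh).2 hbtX₀ hbtW
  have hrZle : rcnt rt (X₀ ∩ W) ≤ rcnt rt X₀ := rcnt_mono rt Finset.inter_subset_left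
  have hlbZ := hlb _ hZne
  have hZt : inDeg tail head A' (X₀ ∩ W) + rcnt rt (X₀ ∩ W) = k := by omega
  have hrZeq : rcnt rt (X₀ ∩ W) = rcnt rt X₀ := by omega
  -- all roots of X₀ lie in Z
  have hroot : ∀ i : Fin k, rt i ∈ X₀ → rt i ∈ X₀ ∩ W := by
    intro i hi
    have hsub : (Finset.univ.filter fun j : Fin k => rt j ∈ X₀ ∩ W) ⊆
        (Finset.univ.filter fun j : Fin k => rt j ∈ X₀) := by
      intro j hj
      simp only [Finset.mem_filter, Finset.mem_univ, true_and] at hj ⊢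
      exact Finset.inter_subset_left hj
    have heqs := Finset.eq_of_subset_of_card_le hsub (le_of_eq hrZeq.symm)
    have hmem : i ∈ Finset.univ.filter fun j : Fin k => rt j ∈ X₀ :=
      Finset.mem_filter.mpr ⟨Finset.mem_univ _, hi⟩
    rw [← heqs] at hmem
    exact (Finset.mem_filter.mp hmem).2
  -- build the tight subpartition P'' containing Z
  have hZX₀ : X₀ ∩ W ⊆ X₀ := Finset.inter_subset_left
  have hP''sub : IsSubpartition (insert (X₀ ∩ W) (P.erase X₀)) := by
    constructor
    · intro X hX
      rcases Finset.mem_insert.mp hX with h | h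
      · exact h ▸ hZne
      · exact hPsub.1 X (Finset.mem_of_mem_erase h)
    · intro X hX Y hY hneXY
      rcases Finset.mem_insert.mp hX with h1 | h1 <;> rcases Finset.mem_insert.mp hY with h2 | h2
      · exact absurd (h1.trans h2.symm) hneXY
      · subst h1
        have hd := hPsub.2 X₀ hX₀P Y (Finset.mem_of_mem_erase h2)
          (Finset.ne_of_mem_erase h2).symm
        exact Finset.disjoint_of_subset_left hZX₀ hd
      · subst h2
        have hd := hPsub.2 X (Finset.mem_of_mem_erase h1) X₀ hX₀P (Finset.ne_of_mem_erase h1)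
        exact Finset.disjoint_of_subset_right hZX₀ hd
      · exact hPsub.2 X (Finset.mem_of_mem_erase h1) Y (Finset.mem_of_mem_erase h2) hneXY
  have hP''t : ∀ X ∈ insert (X₀ ∩ W) (P.erase X₀),
      inDeg tail head A' X + rcnt rt X = k := by
    intro X hX
    rcases Finset.mem_insert.mp hX with h | h
    · exact h ▸ hZt
    · exact hPforward.1 X (Finset.mem_of_mem_erase h)
  have hP''cov : ∀ i : Fin k, ∃ X ∈ insert (X₀ ∩ W) (P.erase X₀), rt i ∈ X := by
    intro i
    obtain ⟨X, hX, hrX⟩ := hPforward.2 i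
    by_cases hXX : X = X₀
    · exact ⟨X₀ ∩ W, Finset.mem_insert_self _ _, hroot i (hXX ▸ hrX)⟩
    · exact ⟨X, Finset.mem_insert_of_mem (Finset.mem_erase.mpr ⟨hXX, hX⟩), hrX⟩
  have hP''sum := subpart_backward tail head A' rt _ hP''sub hP''t hP''cov
  have hfin := hmin (X₀ ∩ W) hZX₀
    ⟨⟨insert (X₀ ∩ W) (P.erase X₀), hP''sub, hP''sum, Finset.mem_insert_self _ _⟩,
      a, haU, haW, fun h => haT (hZX₀ h), Finset.mem_inter.mpr ⟨haH, haW⟩⟩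
  exact Finset.inter_eq_left.mp hfin
end

section
/- Let D = (V, A) be a digraph and k ≥ 0, d ≥ 1 integers with ν_f(D) > k + (d−1)/d, and set c := ⌈(|V| − 1)/d⌉. Let r_0 ∈ V and S ⊆ V with r_0 ∈ S, and suppose that d_A^-(X) ≥ k + 1 for every nonempty X ⊆ S \ {r_0}. Set U := V \ S. Let P_0 be a subpartition of V satisfying Σ_{X∈P_0} d_A^-(X) = k(|P_0| − 1) + |P_0| − c, and suppose |P_0| is minimum among all subpartitions satisfying this equality. Then every X ∈ P_0 with r_0 ∉ X satisfies X ∩ U ≠ ∅. -/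
/-!
Digraphs may have parallel arcs but no loops.  We model a digraph `D = (V, A)` by a finite
vertex type `V`, a finite arc type `α` and maps `tail head : α → V` with `tail a ≠ head a`.
Subdigraphs are given by their arc sets (`Finset α`) together with vertex sets (`Finset V`).
-/

attribute [local instance] Classical.propDecidable

/-- **Claim.**  Suppose `ν_f(D) > k + (d-1)/d`, `c := ⌈(|V|-1)/d⌉`, `r₀ ∈ S ⊆ V`,
`d_A^-(X) ≥ k+1` for every nonempty `X ⊆ S \ {r₀}`, and `U := V \ S`.  If `P₀` is a
subpartition with `∑_{X∈P₀} d_A^-(X) = k(|P₀|-1) + |P₀| - c` of minimum cardinality among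
all subpartitions satisfying this equality, then every `X ∈ P₀` with `r₀ ∉ X` meets `U`. -/
theorem minimal_equality_subpartition_meets_U {V α : Type} [Fintype V] [Nonempty V]
    [Fintype α] (tail head : α → V) (hloopless : ∀ a : α, tail a ≠ head a)
    (k d : ℕ) (hd : 1 ≤ d)
    (hν : ∀ P : Finset (Finset V), IsSubpartition P → 1 < P.card →
      (k : ℚ) + ((d : ℚ) - 1) / (d : ℚ) <
        (∑ X ∈ P, (inDeg tail head (Finset.univ : Finset α) X : ℚ)) / ((P.card : ℚ) - 1))
    (c : ℤ) (hc : c = ⌈(((Fintype.card V : ℚ) - 1) / (d : ℚ))⌉)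
    (r₀ : V) (S : Finset V) (hr₀ : r₀ ∈ S)
    (hdeg : ∀ X : Finset V, X ⊆ S.erase r₀ → X.Nonempty →
      (k : ℤ) + 1 ≤ (inDeg tail head (Finset.univ : Finset α) X : ℤ))
    (U : Finset V) (hUdef : U = Sᶜ)
    (P₀ : Finset (Finset V)) (hP₀ : IsSubpartition P₀)
    (heq : ∑ X ∈ P₀, (inDeg tail head (Finset.univ : Finset α) X : ℤ) =
      (k : ℤ) * ((P₀.card : ℤ) - 1) + (P₀.card : ℤ) - c)
    (hminimal : ∀ P : Finset (Finset V), IsSubpartition P →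
      (∑ X ∈ P, (inDeg tail head (Finset.univ : Finset α) X : ℤ) =
        (k : ℤ) * ((P.card : ℤ) - 1) + (P.card : ℤ) - c) →
      P₀.card ≤ P.card) :
    ∀ X ∈ P₀, r₀ ∉ X → (X ∩ U).Nonempty := by
  intro X hX hr₀X
  by_contra hempty
  rw [Finset.not_nonempty_iff_eq_empty] at hempty
  have hXsub : X ⊆ S.erase r₀ := by
    intro v hv
    have hvS : v ∈ S := by
      by_contra h
      have hvU : v ∈ U := by rw [hUdef]; simpa using h
      have : v ∈ X ∩ U := Finset.mem_inter.mpr ⟨hv, hvU⟩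
      simp [hempty] at this
    exact Finset.mem_erase.mpr ⟨fun h => hr₀X (h ▸ hv), hvS⟩
  have hXne : X.Nonempty := hP₀.1 X hX
  have hdX : (k : ℤ) + 1 ≤ (inDeg tail head (Finset.univ : Finset α) X : ℤ) :=
    hdeg X hXsub hXne
  -- |V| ≥ 2
  have hn2 : 2 ≤ Fintype.card V := by
    obtain ⟨v, hv⟩ := hXne
    have hvS := Finset.mem_erase.mp (hXsub hv)
    have : Nontrivial V := ⟨⟨v, r₀, hvS.1⟩⟩
    exact Fintype.one_lt_card
  have hd0 : (0 : ℚ) < (d : ℚ) := by exact_mod_cast hd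
  have hc1 : 1 ≤ c := by
    rw [hc]
    refine Int.ceil_pos.mpr ?_
    apply div_pos _ hd0
    have : (2 : ℚ) ≤ (Fintype.card V : ℚ) := by exact_mod_cast hn2
    linarith
  -- lower bound for subpartitions of size ≥ 2
  have hlb : ∀ P : Finset (Finset V), IsSubpartition P → 2 ≤ P.card →
      (k : ℤ) * ((P.card : ℤ) - 1) + (P.card : ℤ) - c ≤
        ∑ Y ∈ P, (inDeg tail head (Finset.univ : Finset α) Y : ℤ) := by
    intro P hP hP2
    have hcard : (P.card : ℤ) ≤ (Fintype.card V : ℤ) := by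
      have h1 : P.card ≤ ∑ Y ∈ P, Y.card := by
        calc P.card = ∑ _Y ∈ P, 1 := by simp
        _ ≤ ∑ Y ∈ P, Y.card :=
          Finset.sum_le_sum fun Y hY => Finset.card_pos.mpr (hP.1 Y hY)
      have h2 : ∑ Y ∈ P, Y.card = (P.biUnion id).card :=
        (Finset.card_biUnion fun Y hY Z hZ h => hP.2 Y hY Z hZ h).symm
      have h3 : (P.biUnion id).card ≤ Fintype.card V := Finset.card_le_univ _
      exact_mod_cast le_trans h1 (h2 ▸ h3)
    have hm1 : (0 : ℚ) < (P.card : ℚ) - 1 := by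
      have : (2 : ℚ) ≤ (P.card : ℚ) := by exact_mod_cast hP2
      linarith
    have hq := hν P hP (by omega)
    rw [lt_div_iff₀ hm1] at hq
    have hceil : ((Fintype.card V : ℚ) - 1) / (d : ℚ) ≤ (c : ℚ) := by
      rw [hc]; exact_mod_cast Int.le_ceil _
    have hmd : ((P.card : ℚ) - 1) / (d : ℚ) ≤ (c : ℚ) := by
      refine le_trans ?_ hceil
      apply div_le_div_of_nonneg_right ?_ hd0.le
      have : (P.card : ℚ) ≤ (Fintype.card V : ℚ) := by exact_mod_cast hcard
      linarith
    have hexp : ((k : ℚ) + ((d : ℚ) - 1) / (d : ℚ)) * ((P.card : ℚ) - 1) =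
        ((k : ℚ) + 1) * ((P.card : ℚ) - 1) - ((P.card : ℚ) - 1) / (d : ℚ) := by
      field_simp
      ring
    have hkey : ((k : ℤ) * ((P.card : ℤ) - 1) + (P.card : ℤ) - c - 1 : ℚ) <
        ((∑ Y ∈ P, (inDeg tail head (Finset.univ : Finset α) Y : ℤ) : ℤ) : ℚ) := by
      push_cast
      rw [hexp] at hq
      linarith
    have : (k : ℤ) * ((P.card : ℤ) - 1) + (P.card : ℤ) - c - 1 <
        ∑ Y ∈ P, (inDeg tail head (Finset.univ : Finset α) Y : ℤ) := by
      exact_mod_cast hkey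
    omega
  -- |P₀| ≥ 2
  have hm1 : 1 ≤ P₀.card := Finset.card_pos.mpr ⟨X, hX⟩
  have hm2 : 2 ≤ P₀.card := by
    by_contra h
    have hP1 : P₀.card = 1 := by omega
    have hPX : P₀ = {X} := Finset.eq_singleton_iff_unique_mem.mpr
      ⟨hX, fun Y hY => by
        rcases Finset.card_eq_one.mp hP1 with ⟨Z, hZ⟩
        rw [hZ] at hX hY
        simp at hX hY; rw [hX, hY]⟩
    rw [hPX] at heq
    simp [hP1, hPX] at heq
    -- heq : inDeg ... X = 1 - c  (after simp); derive contradiction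
    omega
  -- consider P' = P₀.erase X
  set P' := P₀.erase X with hP'def
  have hP'sub : IsSubpartition P' :=
    ⟨fun Y hY => hP₀.1 Y (Finset.mem_of_mem_erase hY),
     fun Y hY Z hZ h => hP₀.2 Y (Finset.mem_of_mem_erase hY) Z (Finset.mem_of_mem_erase hZ) h⟩
  have hcard' : P'.card = P₀.card - 1 := Finset.card_erase_of_mem hX
  have hcardZ : (P'.card : ℤ) = (P₀.card : ℤ) - 1 := by
    rw [hcard']; push_cast [hm1]; ring
  have hsum' : ∑ Y ∈ P', (inDeg tail head (Finset.univ : Finset α) Y : ℤ) =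
      (∑ Y ∈ P₀, (inDeg tail head (Finset.univ : Finset α) Y : ℤ)) -
        (inDeg tail head (Finset.univ : Finset α) X : ℤ) :=
    Finset.sum_erase_eq_sub hX
  have hub : ∑ Y ∈ P', (inDeg tail head (Finset.univ : Finset α) Y : ℤ) ≤
      (k : ℤ) * ((P'.card : ℤ) - 1) + (P'.card : ℤ) - c := by
    rw [hsum', heq, hcardZ]; linarith
  have heq' : ∑ Y ∈ P', (inDeg tail head (Finset.univ : Finset α) Y : ℤ) =
      (k : ℤ) * ((P'.card : ℤ) - 1) + (P'.card : ℤ) - c := by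
    rcases Nat.lt_or_ge P'.card 2 with h2 | h2
    · -- P'.card = 1 (since P₀.card ≥ 2)
      have hc1' : P'.card = 1 := by omega
      have hge : (0 : ℤ) ≤ ∑ Y ∈ P', (inDeg tail head (Finset.univ : Finset α) Y : ℤ) :=
        Finset.sum_nonneg fun Y _ => by positivity
      have : ((P'.card : ℤ)) = 1 := by exact_mod_cast hc1'
      rw [this] at hub ⊢
      omega
    · exact le_antisymm hub (hlb P' hP'sub h2)
  have := hminimal P' hP'sub heq'
  omega
end

section
/- Let D = (V, A) be a digraph, T_1, …, T_k pairwise arc-disjoint spanning arborescences of D with roots r_1, …, r_k, and T an arborescence in D, arc-disjoint from T_1, …, T_k, with root r and vertex set V(T) ⊆ V. Let P be a subpartition of V such that Σ_{X∈P} d_{A(T_1) ∪ … ∪ A(T_k) ∪ A(T)}^-(X) = k(|P| − 1). Then at most one member X of P satisfies X ∩ V(T) ≠ ∅. -/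
/-!
Digraphs may have parallel arcs but no loops.  We model a digraph `D = (V, A)` by a finite
vertex type `V`, a finite arc type `α` and maps `tail head : α → V` with `tail a ≠ head a`.
Subdigraphs are given by their arc sets (`Finset α`) together with vertex sets (`Finset V`).
-/

attribute [local instance] Classical.propDecidable

lemma cross_arc {V α : Type} (tail head : α → V) (B : Finset α) (u v : V) (X : Finset V)
    (h : DiReach tail head B u v) : u ∉ X → v ∈ X → ∃ a ∈ B, tail a ∉ X ∧ head a ∈ X := by
  induction h with
  | refl => intro hu hv; exact absurd hv hu
  | tail hreach step ih =>
    intro hu hv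
    rename_i b c
    by_cases hb : b ∈ X
    · exact ih hu hb
    · obtain ⟨a, haB, hta, hha⟩ := step
      exact ⟨a, haB, hta ▸ hb, hha ▸ hv⟩

lemma inDeg_pos_of_cross {V α : Type} (tail head : α → V) (B : Finset α) (u v : V)
    (X : Finset V) (h : DiReach tail head B u v) (hu : u ∉ X) (hv : v ∈ X) :
    1 ≤ inDeg tail head B X := by
  obtain ⟨a, haB, h1, h2⟩ := cross_arc tail head B u v X h hu hv
  have : a ∈ B.filter fun a => tail a ∉ X ∧ head a ∈ X := by
    simp [Finset.mem_filter, haB, h1, h2]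
  exact Finset.card_pos.mpr ⟨a, this⟩

lemma inDeg_union_disjoint {V α : Type} (tail head : α → V) (C B : Finset α)
    (h : Disjoint C B) (X : Finset V) :
    inDeg tail head (C ∪ B) X = inDeg tail head C X + inDeg tail head B X := by
  classical
  unfold inDeg
  rw [Finset.filter_union, Finset.card_union_of_disjoint
    (h.mono (Finset.filter_subset _ _) (Finset.filter_subset _ _))]

lemma inDeg_biUnion {V α ι : Type} [DecidableEq α] (tail head : α → V) (T : ι → Finset α)
    (s : Finset ι) (h : ∀ i ∈ s, ∀ j ∈ s, i ≠ j → Disjoint (T i) (T j)) (X : Finset V) :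
    inDeg tail head (s.biUnion T) X = ∑ i ∈ s, inDeg tail head (T i) X := by
  classical
  unfold inDeg
  rw [Finset.filter_biUnion, Finset.card_biUnion]
  intro i hi j hj hij
  exact (h i hi j hj hij).mono (Finset.filter_subset _ _) (Finset.filter_subset _ _)

lemma sum_inDeg_spanning_ge {V α : Type} [Fintype V] (tail head : α → V) (B : Finset α)
    (r0 : V) (hArb : IsArborescence tail head Finset.univ B r0)
    (P : Finset (Finset V)) (hP : IsSubpartition P) :
    (P.card : ℤ) - 1 ≤ ∑ X ∈ P, (inDeg tail head B X : ℤ) := by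
  classical
  set Q := P.filter (fun X => r0 ∉ X) with hQ
  have h1 : ∀ X ∈ Q, (1 : ℤ) ≤ (inDeg tail head B X : ℤ) := by
    intro X hX
    rw [hQ, Finset.mem_filter] at hX
    obtain ⟨v, hv⟩ := hP.1 X hX.1
    have hreach := hArb.2.2.2.2 v (Finset.mem_univ v)
    exact_mod_cast inDeg_pos_of_cross tail head B r0 v X hreach hX.2 hv
  have h2 : (Q.card : ℤ) ≤ ∑ X ∈ P, (inDeg tail head B X : ℤ) := by
    calc (Q.card : ℤ) = ∑ X ∈ Q, (1 : ℤ) := by simp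
    _ ≤ ∑ X ∈ Q, (inDeg tail head B X : ℤ) := Finset.sum_le_sum h1
    _ ≤ ∑ X ∈ P, (inDeg tail head B X : ℤ) :=
        Finset.sum_le_sum_of_subset_of_nonneg (Finset.filter_subset _ _)
          (fun X _ _ => by positivity)
  have h3 : P.card ≤ Q.card + 1 := by
    have hcompl : (P.filter (fun X => r0 ∈ X)).card ≤ 1 := by
      rw [Finset.card_le_one]
      intro X hX Y hY
      rw [Finset.mem_filter] at hX hY
      by_contra hne
      exact Finset.disjoint_left.mp (hP.2 X hX.1 Y hY.1 hne) hX.2 hY.2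
    have hsplit := Finset.card_filter_add_card_filter_not (s := P)
      (p := fun X => r0 ∈ X)
    have hQc : (P.filter (fun a => ¬ r0 ∈ a)).card = Q.card := rfl
    omega
  have : (P.card : ℤ) ≤ (Q.card : ℤ) + 1 := by exact_mod_cast h3
  linarith

/-- Let `T_1, …, T_k` be pairwise arc-disjoint spanning arborescences of `D` with roots
`r_1, …, r_k`, and `T` an arborescence in `D` arc-disjoint from them, with root `r` and
vertex set `V(T) ⊆ V`.  If a subpartition `P` satisfies
`∑_{X∈P} d_{A(T_1)∪…∪A(T_k)∪A(T)}^-(X) = k(|P|-1)`, then at most one member of `P` meets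
`V(T)`. -/
theorem tight_subpartition_meets_arborescence {V α : Type} [Fintype V] [Nonempty V]
    [Fintype α] (tail head : α → V) (hloopless : ∀ a : α, tail a ≠ head a)
    (k : ℕ) (T : Fin k → Finset α) (rt : Fin k → V)
    (hT : ∀ i, IsArborescence tail head Finset.univ (T i) (rt i))
    (hTdisj : ∀ i j, i ≠ j → Disjoint (T i) (T j))
    (S : Finset V) (B : Finset α) (r : V)
    (hB : IsArborescence tail head S B r)
    (hBdisj : ∀ i, Disjoint (T i) B)
    (P : Finset (Finset V)) (hP : IsSubpartition P)
    (heq : ∑ X ∈ P, (inDeg tail head ((Finset.univ.biUnion T) ∪ B) X : ℤ) =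
      (k : ℤ) * ((P.card : ℤ) - 1)) :
    (P.filter fun X => (X ∩ S).Nonempty).card ≤ 1 := by
  classical
  have hUB : Disjoint (Finset.univ.biUnion T) B :=
    Finset.disjoint_biUnion_left _ _ _ |>.mpr fun i _ => hBdisj i
  have hsplit : ∀ X : Finset V,
      (inDeg tail head ((Finset.univ.biUnion T) ∪ B) X : ℤ) =
        (∑ i : Fin k, (inDeg tail head (T i) X : ℤ)) + (inDeg tail head B X : ℤ) := by
    intro X
    rw [inDeg_union_disjoint tail head _ B hUB X,
      inDeg_biUnion tail head T Finset.univ (fun i _ j _ hij => hTdisj i j hij) X]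
    push_cast
    ring
  have hBzero : ∀ X ∈ P, inDeg tail head B X = 0 := by
    have hsum : (∑ X ∈ P, (∑ i : Fin k, (inDeg tail head (T i) X : ℤ)))
        + ∑ X ∈ P, (inDeg tail head B X : ℤ) = (k : ℤ) * ((P.card : ℤ) - 1) := by
      rw [← Finset.sum_add_distrib, ← heq]
      exact Finset.sum_congr rfl fun X _ => (hsplit X).symm
    have hswap : (∑ X ∈ P, (∑ i : Fin k, (inDeg tail head (T i) X : ℤ)))
        = ∑ i : Fin k, ∑ X ∈ P, (inDeg tail head (T i) X : ℤ) := Finset.sum_comm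
    have hge : (k : ℤ) * ((P.card : ℤ) - 1)
        ≤ ∑ i : Fin k, ∑ X ∈ P, (inDeg tail head (T i) X : ℤ) := by
      calc (k : ℤ) * ((P.card : ℤ) - 1) = ∑ _i : Fin k, ((P.card : ℤ) - 1) := by
            simp [mul_comm]
            ring
      _ ≤ _ := Finset.sum_le_sum fun i _ =>
            sum_inDeg_spanning_ge tail head (T i) (rt i) (hT i) P hP
    have hle : ∑ X ∈ P, (inDeg tail head B X : ℤ) ≤ 0 := by
      rw [hswap] at hsum; linarith
    have hzero : ∑ X ∈ P, (inDeg tail head B X : ℤ) = 0 :=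
      le_antisymm hle (Finset.sum_nonneg fun X _ => by positivity)
    intro X hX
    have := (Finset.sum_eq_zero_iff_of_nonneg
      (fun X _ => by positivity : ∀ X ∈ P, (0:ℤ) ≤ (inDeg tail head B X : ℤ))).mp
      hzero X hX
    exact_mod_cast this
  have hroot : ∀ X ∈ P, (X ∩ S).Nonempty → r ∈ X := by
    intro X hX ⟨v, hv⟩
    rw [Finset.mem_inter] at hv
    by_contra hr
    have hreach := hB.2.2.2.2 v hv.2
    have h1 := inDeg_pos_of_cross tail head B r v X hreach hr hv.1
    have h0 := hBzero X hX
    omega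
  rw [Finset.card_le_one]
  intro X hX Y hY
  rw [Finset.mem_filter] at hX hY
  by_contra hne
  have hrX := hroot X hX.1 hX.2
  have hrY := hroot Y hY.1 hY.2
  exact Finset.disjoint_left.mp (hP.2 X hX.1 Y hY.1 hne) hrX hrY
end

section
/- Let k and d be integers with k ≥ d + 1 ≥ 2 and let G = (V, E) be a graph with |V| = d + 1, |E| = kd + d − 1, and γ_f(G) < k + 1. Then there exists an orientation D of G such that ν_f(D) = k + (d−1)/d, and D does not contain k pairwise arc-disjoint spanning arborescences together with a further arc-disjoint branching F satisfying both |A(F)| > ((d−1)/d)·(|V| − 1) and the property that F is a spanning arborescence or F has a component with at least d arcs. -/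
/-!
Graphs may have parallel edges but no loops.  We model a graph `G = (V, E)` by a finite
vertex type `V`, a finite edge type `β` and a map `ends : β → Sym2 V` giving the pair of
endpoints of each edge, with `¬(ends e).IsDiag` (no loops).  Subgraphs spanning `V` are
given by their edge sets (`Finset β`).
-/

attribute [local instance] Classical.propDecidable

/-- `u` and `w` are joined by an edge of the edge set `F`. -/
def GStep {V β : Type} (ends : β → Sym2 V) (F : Finset β) (u w : V) : Prop :=
  ∃ e ∈ F, ends e = s(u, w)

/-- `u` and `w` are joined by a walk using edges of `F`. -/
def GReach {V β : Type} (ends : β → Sym2 V) (F : Finset β) (u w : V) : Prop :=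
  Relation.ReflTransGen (GStep ends F) u w

/-- `E(X)` relative to the edge set `F`: edges of `F` with both endpoints in `X`. -/
noncomputable def edgesIn {V β : Type} (ends : β → Sym2 V) (F : Finset β) (X : Finset V) :
    Finset β :=
  F.filter fun e => ∀ v ∈ ends e, v ∈ X

/-- An edge set `F` is a (spanning) forest iff it is acyclic, equivalently iff every
nonempty vertex set `X` spans at most `|X| - 1` edges of `F`. -/
def IsForest {V β : Type} (ends : β → Sym2 V) (F : Finset β) : Prop :=
  ∀ X : Finset V, X.Nonempty → (edgesIn ends F X).card ≤ X.card - 1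

/-- An edge set `F` is a spanning tree iff it is a connected spanning forest. -/
def IsSpanningTree {V β : Type} (ends : β → Sym2 V) (F : Finset β) : Prop :=
  IsForest ends F ∧ ∀ u w : V, GReach ends F u w
section AuxSharpness
set_option linter.unusedSectionVars false

open Finset

lemma two_le_card_of_edge {V β : Type} (ends : β → Sym2 V)
    (hloopless : ∀ e : β, ¬(ends e).IsDiag)
    (X : Finset V) (e : β) (h : ∀ v ∈ ends e, v ∈ X) : 2 ≤ X.card := by
  have ha : (Quot.out (ends e)).1 ∈ ends e := Sym2.out_fst_mem _
  have hbmem : Sym2.Mem.other ha ∈ ends e := Sym2.other_mem ha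
  have hne : Sym2.Mem.other ha ≠ (Quot.out (ends e)).1 := Sym2.other_ne (hloopless e) ha
  have hsub : ({Sym2.Mem.other ha, (Quot.out (ends e)).1} : Finset V) ⊆ X := by
    intro v hv
    rcases Finset.mem_insert.1 hv with rfl | hv
    · exact h _ hbmem
    · rw [Finset.mem_singleton.1 hv]; exact h _ ha
  calc 2 = ({Sym2.Mem.other ha, (Quot.out (ends e)).1} : Finset V).card :=
        (Finset.card_pair hne).symm
    _ ≤ X.card := Finset.card_le_card hsub

lemma edgesIn_eq_empty {V β : Type} [Fintype V] [Fintype β] (ends : β → Sym2 V)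
    (hloopless : ∀ e : β, ¬(ends e).IsDiag) (X : Finset V) (hX : X.card ≤ 1) :
    edgesIn ends Finset.univ X = ∅ := by
  rw [Finset.eq_empty_iff_forall_notMem]
  intro e he
  simp only [edgesIn, Finset.mem_filter] at he
  have := two_le_card_of_edge ends hloopless X e he.2
  omega

lemma exists_orientation {V β : Type} [Fintype V] [Fintype β]
    (ends : β → Sym2 V) (hloopless : ∀ e : β, ¬(ends e).IsDiag) (m : V → ℕ)
    (hm : ∀ X : Finset V, 2 ≤ X.card →
      (edgesIn ends Finset.univ X).card ≤ ∑ v ∈ X, m v)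
    (hsum : ∑ v, m v = Fintype.card β) :
    ∃ dtail dhead : β → V, (∀ e, ends e = s(dtail e, dhead e)) ∧
      ∀ v, (Finset.univ.filter fun e => dhead e = v).card = m v := by
  classical
  set slots : V → Finset (V × ℕ) := fun v => (Finset.range (m v)).image (fun i => (v, i))
    with hslots
  have hslotcard : ∀ v, (slots v).card = m v := by
    intro v
    rw [hslots]
    rw [Finset.card_image_of_injective _ (fun a b h => by injection h)]
    exact Finset.card_range _
  have hslotmem : ∀ v p, p ∈ slots v → p.1 = v := by
    intro v p hp
    simp only [hslots, Finset.mem_image] at hp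
    obtain ⟨i, _, rfl⟩ := hp; rfl
  have hslotdisj : ∀ (X : Finset V), ∀ x ∈ X, ∀ y ∈ X, x ≠ y →
      Disjoint (slots x) (slots y) := by
    intro X x _ y _ hxy
    refine Finset.disjoint_left.2 fun p hx hy => hxy ?_
    rw [← hslotmem x p hx, hslotmem y p hy]
  have hXcard : ∀ X : Finset V, (X.biUnion slots).card = ∑ v ∈ X, m v := by
    intro X
    rw [Finset.card_biUnion (hslotdisj X)]
    exact Finset.sum_congr rfl fun v _ => hslotcard v
  set t : β → Finset (V × ℕ) := fun e =>
    (Finset.univ.filter (· ∈ ends e)).biUnion slots with ht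
  have hall : ∀ s : Finset β, s.card ≤ (s.biUnion t).card := by
    intro s
    set X : Finset V := s.biUnion (fun e => Finset.univ.filter (· ∈ ends e)) with hX
    have h1 : s.biUnion t = X.biUnion slots := by
      ext p
      simp only [ht, hX, Finset.mem_biUnion, Finset.mem_filter, Finset.mem_univ, true_and]
      constructor
      · rintro ⟨e, he, v, hv, hp⟩; exact ⟨v, ⟨e, he, hv⟩, hp⟩
      · rintro ⟨v, ⟨e, he, hv⟩, hp⟩; exact ⟨e, he, v, hv, hp⟩
    rcases s.eq_empty_or_nonempty with rfl | ⟨e0, he0⟩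
    · simp
    · have hXsub : ∀ v ∈ ends e0, v ∈ X := by
        intro v hv
        simp only [hX, Finset.mem_biUnion, Finset.mem_filter, Finset.mem_univ, true_and]
        exact ⟨e0, he0, hv⟩
      have h2X : 2 ≤ X.card := two_le_card_of_edge ends hloopless X e0 hXsub
      have h2 : s ⊆ edgesIn ends Finset.univ X := by
        intro e he
        simp only [edgesIn, Finset.mem_filter, Finset.mem_univ, true_and]
        intro v hv
        simp only [hX, Finset.mem_biUnion, Finset.mem_filter, Finset.mem_univ, true_and]
        exact ⟨e, he, hv⟩
      calc s.card ≤ (edgesIn ends Finset.univ X).card := Finset.card_le_card h2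
        _ ≤ ∑ v ∈ X, m v := hm X h2X
        _ = (s.biUnion t).card := by rw [h1, hXcard]
  obtain ⟨f, hfinj, hft⟩ := (Finset.all_card_le_biUnion_card_iff_exists_injective t).1 hall
  have hhead : ∀ e, (f e).1 ∈ ends e ∧ (f e).2 < m (f e).1 := by
    intro e
    have := hft e
    simp only [ht, Finset.mem_biUnion, Finset.mem_filter, Finset.mem_univ, true_and] at this
    obtain ⟨v, hv, hp⟩ := this
    have h1 := hslotmem v _ hp
    simp only [hslots, Finset.mem_image, Finset.mem_range] at hp
    obtain ⟨i, hi, hpi⟩ := hp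
    constructor
    · rw [h1]; exact hv
    · rw [← hpi]; exact hi
  set dhead : β → V := fun e => (f e).1 with hdh
  set dtail : β → V := fun e => Sym2.Mem.other (hhead e).1 with hdt
  refine ⟨dtail, dhead, fun e => ?_, ?_⟩
  · rw [hdt, hdh]
    have := Sym2.other_spec (hhead e).1
    rw [← this, Sym2.eq_swap]
  · have hle : ∀ v, (Finset.univ.filter fun e => dhead e = v).card ≤ m v := by
      intro v
      have : (Finset.univ.filter fun e => dhead e = v).card ≤ (slots v).card := by
        apply Finset.card_le_card_of_injOn f
        · intro e he
          simp only [Finset.mem_coe, Finset.mem_filter] at he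
          simp only [Finset.mem_coe, hslots, Finset.mem_image, Finset.mem_range]
          have hv' : (f e).1 = v := he.2
          refine ⟨(f e).2, hv' ▸ (hhead e).2, by rw [← hv']⟩
        · exact fun a _ b _ h => hfinj h
      rwa [hslotcard v] at this
    have htot : ∑ v, (Finset.univ.filter fun e => dhead e = v).card = Fintype.card β := by
      rw [← Finset.card_univ]
      exact (Finset.card_eq_sum_card_fiberwise (fun e _ => Finset.mem_univ (dhead e))).symm
    intro v
    have := (Finset.sum_eq_sum_iff_of_le (fun v _ => hle v)).1 (by rw [htot, hsum])
    exact this v (Finset.mem_univ v)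

lemma edgesIn_eq_filter {V β : Type} [Fintype V] [Fintype β] (ends : β → Sym2 V)
    (dtail dhead : β → V)
    (hor : ∀ e, ends e = s(dtail e, dhead e)) (X : Finset V) :
    edgesIn ends Finset.univ X
      = Finset.univ.filter (fun e => dtail e ∈ X ∧ dhead e ∈ X) := by
  ext e
  simp only [edgesIn, Finset.mem_filter, Finset.mem_univ, true_and]
  constructor
  · intro h
    exact ⟨h _ (by rw [hor e]; exact Sym2.mem_mk_left _ _),
      h _ (by rw [hor e]; exact Sym2.mem_mk_right _ _)⟩
  · rintro ⟨h1, h2⟩ v hv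
    rw [hor e, Sym2.mem_iff] at hv
    rcases hv with rfl | rfl <;> assumption

lemma inDeg_add_edgesIn {V β : Type} [Fintype V] [Fintype β] (ends : β → Sym2 V)
    (dtail dhead : β → V)
    (hor : ∀ e, ends e = s(dtail e, dhead e)) (X : Finset V) :
    inDeg dtail dhead Finset.univ X + (edgesIn ends Finset.univ X).card
      = ∑ v ∈ X, (Finset.univ.filter fun e => dhead e = v).card := by
  have h1 : Finset.univ.filter (fun e : β => dhead e ∈ X)
      = X.biUnion fun v => Finset.univ.filter fun e => dhead e = v := by
    ext e
    simp only [Finset.mem_filter, Finset.mem_univ, true_and, Finset.mem_biUnion]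
    constructor
    · intro h; exact ⟨dhead e, h, rfl⟩
    · rintro ⟨v, hv, rfl⟩; exact hv
  have h2 : (Finset.univ.filter (fun e : β => dhead e ∈ X)).card
      = ∑ v ∈ X, (Finset.univ.filter fun e => dhead e = v).card := by
    rw [h1]
    apply Finset.card_biUnion
    intro x _ y _ hxy
    refine Finset.disjoint_left.2 fun e he1 he2 => hxy ?_
    simp only [Finset.mem_filter] at he1 he2
    rw [← he1.2, he2.2]
  rw [← h2, edgesIn_eq_filter ends dtail dhead hor]
  rw [inDeg]
  have h3 : (Finset.univ.filter fun e : β => dtail e ∉ X ∧ dhead e ∈ X)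
      = (Finset.univ.filter (fun e : β => dhead e ∈ X)).filter fun e => dtail e ∉ X := by
    ext e; simp only [Finset.mem_filter, Finset.mem_univ, true_and]; tauto
  have h4 : (Finset.univ.filter fun e : β => dtail e ∈ X ∧ dhead e ∈ X)
      = (Finset.univ.filter (fun e : β => dhead e ∈ X)).filter fun e => ¬(dtail e ∉ X) := by
    ext e; simp only [Finset.mem_filter, Finset.mem_univ, true_and]; tauto
  rw [h3, h4]
  exact Finset.card_filter_add_card_filter_not _

lemma sum_m_int {V : Type} [Fintype V] (k d : ℕ) (hd : 1 ≤ d) (r : V) (S : Finset V) :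
    (∑ v ∈ S, ((if v = r then d - 1 else k : ℕ) : ℤ))
      = k * S.card - (k - d + 1) * (if r ∈ S then 1 else 0) := by
  by_cases hr : r ∈ S
  · rw [← Finset.sum_erase_add _ _ hr]
    have h1 : ∀ v ∈ S.erase r, ((if v = r then d - 1 else k : ℕ) : ℤ) = k := by
      intro v hv
      rw [if_neg (Finset.ne_of_mem_erase hv)]
    rw [Finset.sum_congr rfl h1, Finset.sum_const, Finset.card_erase_of_mem hr, if_pos hr,
      if_pos rfl]
    have h2 : ((d - 1 : ℕ) : ℤ) = (d : ℤ) - 1 := by omega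
    have h3 : 1 ≤ S.card := Finset.card_pos.2 ⟨r, hr⟩
    have h4 : ((S.card - 1 : ℕ) : ℤ) = (S.card : ℤ) - 1 := by omega
    simp only [nsmul_eq_mul, h2, h4]
    ring
  · have h1 : ∀ v ∈ S, ((if v = r then d - 1 else k : ℕ) : ℤ) = k := by
      intro v hv
      rw [if_neg (fun h => hr (by rw [← h]; exact hv))]
    rw [Finset.sum_congr rfl h1, Finset.sum_const, if_neg hr]
    simp [mul_comm]

lemma key_bound {V β : Type} [Fintype V] [Fintype β]
    (ends : β → Sym2 V) (dtail dhead : β → V)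
    (hor : ∀ e, ends e = s(dtail e, dhead e)) (hloopless : ∀ e : β, ¬(ends e).IsDiag)
    (k d : ℕ) (r : V) (hd : 1 ≤ d) (hk : d + 1 ≤ k) (hV : Fintype.card V = d + 1)
    (hdeg : ∀ v, ((Finset.univ.filter fun e => dhead e = v).card : ℕ)
      = (if v = r then d - 1 else k))
    (hEX : ∀ X : Finset V, 2 ≤ X.card →
      (edgesIn ends Finset.univ X).card + 1 ≤ (k + 1) * (X.card - 1))
    (P : Finset (Finset V)) (hPne : ∀ X ∈ P, X.Nonempty)
    (hPd : ∀ X ∈ P, ∀ Y ∈ P, X ≠ Y → Disjoint X Y) (hP2 : 2 ≤ P.card) :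
    ((k : ℤ) * d + d - 1) * (P.card - 1)
      ≤ d * ∑ X ∈ P, (inDeg dtail dhead Finset.univ X : ℤ) := by
  classical
  set S : Finset V := P.biUnion id with hS
  have hsum_card : ∑ X ∈ P, X.card = S.card := (Finset.card_biUnion hPd).symm
  have hps : P.card ≤ S.card := by
    rw [← hsum_card]
    calc P.card = ∑ _X ∈ P, 1 := by simp
      _ ≤ ∑ X ∈ P, X.card := Finset.sum_le_sum fun X hX => Finset.card_pos.2 (hPne X hX)
  have hsd : S.card ≤ d + 1 := by
    have := Finset.card_le_univ S
    omega
  have hid : ∀ X ∈ P, (inDeg dtail dhead Finset.univ X : ℤ)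
      = (∑ v ∈ X, ((if v = r then d - 1 else k : ℕ) : ℤ))
        - ((edgesIn ends Finset.univ X).card : ℤ) := by
    intro X _
    have h := inDeg_add_edgesIn ends dtail dhead hor X
    have h2 : ∑ v ∈ X, ((Finset.univ.filter fun e => dhead e = v).card : ℤ)
        = ∑ v ∈ X, ((if v = r then d - 1 else k : ℕ) : ℤ) := by
      exact Finset.sum_congr rfl fun v _ => by rw [hdeg v]
    have h3 : (inDeg dtail dhead Finset.univ X : ℤ) + ((edgesIn ends Finset.univ X).card : ℤ)
        = ∑ v ∈ X, ((Finset.univ.filter fun e => dhead e = v).card : ℤ) := by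
      exact_mod_cast congrArg (Nat.cast : ℕ → ℤ) h
    linarith [h3, h2]
  have hpd' : (↑P : Set (Finset V)).PairwiseDisjoint (id : Finset V → Finset V) := by
    intro x hx y hy hxy
    exact hPd x hx y hy hxy
  have hN : ∑ X ∈ P, (inDeg dtail dhead Finset.univ X : ℤ)
      = (∑ v ∈ S, ((if v = r then d - 1 else k : ℕ) : ℤ))
        - ∑ X ∈ P, ((edgesIn ends Finset.univ X).card : ℤ) := by
    rw [Finset.sum_congr rfl hid, Finset.sum_sub_distrib, hS, Finset.sum_biUnion hpd']
    simp only [id_eq]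
  set T : ℕ := (P.filter fun X => 2 ≤ X.card).card with hT
  have hEE : ∑ X ∈ P, ((edgesIn ends Finset.univ X).card : ℤ)
      ≤ (k + 1) * ((S.card : ℤ) - P.card) - T := by
    have hper : ∀ X ∈ P, ((edgesIn ends Finset.univ X).card : ℤ)
        ≤ (k + 1) * ((X.card : ℤ) - 1) - (if 2 ≤ X.card then 1 else 0) := by
      intro X hX
      by_cases h2 : 2 ≤ X.card
      · have := hEX X h2
        have hc : ((X.card - 1 : ℕ) : ℤ) = (X.card : ℤ) - 1 := by omega
        rw [if_pos h2]
        have := (Nat.cast_le (α := ℤ)).2 this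
        push_cast at this
        rw [hc] at this
        linarith
      · have hc1 : X.card = 1 := by
          have := Finset.card_pos.2 (hPne X hX); omega
        rw [edgesIn_eq_empty ends hloopless X (by omega), if_neg h2]
        simp [hc1]
    calc ∑ X ∈ P, ((edgesIn ends Finset.univ X).card : ℤ)
        ≤ ∑ X ∈ P, ((k + 1) * ((X.card : ℤ) - 1) - (if 2 ≤ X.card then 1 else 0)) :=
          Finset.sum_le_sum hper
      _ = (k + 1) * ((S.card : ℤ) - P.card) - T := by
          rw [Finset.sum_sub_distrib, ← Finset.mul_sum, Finset.sum_sub_distrib,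
            Finset.sum_boole]
          have : ∑ X ∈ P, ((X.card : ℤ)) = (S.card : ℤ) := by
            rw [← hsum_card]; push_cast; ring
          simp only [Finset.sum_const, nsmul_eq_mul, mul_one, this, hT]
  set R : ℤ := (if r ∈ S then 1 else 0) with hR
  have hMS := sum_m_int k d hd r S
  rcases Nat.lt_or_ge P.card (d + 1) with hpcase | hpcase
  · have hDelta : (S.card : ℤ) + ((k : ℤ) - d + 1) * R ≤ (T : ℤ) + k + 1 := by
      by_cases hr : r ∈ S
      · rw [hR, if_pos hr]
        have : S.card ≤ d + T := by
          rcases Nat.lt_or_ge S.card (d + 1) with h | h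
          · omega
          · have hs1 : S.card = d + 1 := by omega
            have hT1 : 1 ≤ T := by
              by_contra hT0
              have hT0' : T = 0 := by omega
              have hall : ∀ X ∈ P, X.card = 1 := by
                intro X hX
                have h1 : 1 ≤ X.card := Finset.card_pos.2 (hPne X hX)
                by_contra hne
                have h2 : 2 ≤ X.card := by omega
                have hXf : X ∈ P.filter fun X => 2 ≤ X.card := Finset.mem_filter.2 ⟨hX, h2⟩
                have := Finset.card_pos.2 ⟨X, hXf⟩
                omega
              have : ∑ X ∈ P, X.card = P.card := by
                rw [Finset.sum_congr rfl hall]; simp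
              omega
            omega
        push_cast
        have hk' : (d : ℤ) + 1 ≤ k := by exact_mod_cast hk
        have : (S.card : ℤ) ≤ (d : ℤ) + T := by exact_mod_cast this
        linarith
      · rw [hR, if_neg hr]
        have hk' : (d : ℤ) + 1 ≤ k := by exact_mod_cast hk
        have : (S.card : ℤ) ≤ (d : ℤ) + 1 := by exact_mod_cast hsd
        have hT0 : (0 : ℤ) ≤ T := by exact_mod_cast Nat.zero_le T
        linarith
    have hNlb : ((k : ℤ) + 1) * ((P.card : ℤ) - 1)
        ≤ ∑ X ∈ P, (inDeg dtail dhead Finset.univ X : ℤ) := by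
      rw [hN, hMS, ← hR]
      linarith [hEE, hDelta]
    have hp2 : (2 : ℤ) ≤ (P.card : ℤ) := by exact_mod_cast hP2
    have hd' : (1 : ℤ) ≤ (d : ℤ) := by exact_mod_cast hd
    have h1 : (d : ℤ) * (((k : ℤ) + 1) * ((P.card : ℤ) - 1))
        ≤ (d : ℤ) * ∑ X ∈ P, (inDeg dtail dhead Finset.univ X : ℤ) :=
      mul_le_mul_of_nonneg_left hNlb (by positivity)
    nlinarith [h1, hp2, hd']
  · have hpd1 : P.card = d + 1 := by omega
    have hs1 : S.card = d + 1 := by omega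
    have hall : ∀ X ∈ P, X.card = 1 := by
      intro X hX
      by_contra hne
      have h1 : 1 ≤ X.card := Finset.card_pos.2 (hPne X hX)
      have h2 : 2 ≤ X.card := by omega
      have hsplit : ∑ Y ∈ P.erase X, Y.card + X.card = ∑ Y ∈ P, Y.card :=
        Finset.sum_erase_add _ _ hX
      have h3 : ∑ Y ∈ P.erase X, 1 ≤ ∑ Y ∈ P.erase X, Y.card :=
        Finset.sum_le_sum fun Y hY =>
          Finset.card_pos.2 (hPne Y (Finset.mem_of_mem_erase hY))
      rw [Finset.sum_const, smul_eq_mul, mul_one] at h3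
      have h4 := Finset.card_erase_of_mem hX
      omega
    have hE0 : ∀ X ∈ P, ((edgesIn ends Finset.univ X).card : ℤ) = 0 := by
      intro X hX
      rw [edgesIn_eq_empty ends hloopless X (by rw [hall X hX])]
      simp
    have hSuniv : S = Finset.univ := by
      apply Finset.eq_univ_of_card
      rw [hs1, hV]
    have hrS : r ∈ S := hSuniv ▸ Finset.mem_univ r
    have hNval : ∑ X ∈ P, (inDeg dtail dhead Finset.univ X : ℤ)
        = (k : ℤ) * d + d - 1 := by
      rw [hN, Finset.sum_congr rfl hE0, Finset.sum_const, hMS, if_pos hrS, hs1]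
      push_cast
      ring
    rw [hNval, hpd1]
    push_cast
    ring_nf
    exact le_refl _

end AuxSharpness

/-- **Sharpness construction.**  Let `k ≥ d + 1 ≥ 2` and let `G` be a graph with
`|V| = d + 1`, `|E| = kd + d - 1` and `γ_f(G) < k + 1`.  Then there is an orientation `D`
of `G` (maps `dtail dhead : β → V` with `ends e = s(dtail e, dhead e)`) with
`ν_f(D) = k + (d-1)/d` such that `D` contains no `k` pairwise arc-disjoint spanning
arborescences together with a further arc-disjoint branching `F` satisfying both
`|A(F)| > ((d-1)/d)(|V|-1)` and (`F` is a spanning arborescence or `F` has a component with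
at least `d` arcs). -/
theorem sharpness_orientation {V β : Type} [Fintype V] [Nonempty V] [Fintype β]
    (ends : β → Sym2 V) (hloopless : ∀ e : β, ¬(ends e).IsDiag)
    (k d : ℕ) (hd : 2 ≤ d + 1) (hk : d + 1 ≤ k)
    (hV : Fintype.card V = d + 1) (hE : Fintype.card β = k * d + d - 1)
    (hγ : ∀ X : Finset V, 1 < X.card →
      ((edgesIn ends (Finset.univ : Finset β) X).card : ℚ) / ((X.card : ℚ) - 1) <
        (k : ℚ) + 1) :
    ∃ dtail dhead : β → V,
      (∀ e : β, ends e = s(dtail e, dhead e)) ∧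
      (∀ P : Finset (Finset V), IsSubpartition P → 1 < P.card →
        (k : ℚ) + ((d : ℚ) - 1) / (d : ℚ) ≤
          (∑ X ∈ P, (inDeg dtail dhead (Finset.univ : Finset β) X : ℚ)) /
            ((P.card : ℚ) - 1)) ∧
      (∃ P : Finset (Finset V), IsSubpartition P ∧ 1 < P.card ∧
        (∑ X ∈ P, (inDeg dtail dhead (Finset.univ : Finset β) X : ℚ)) /
            ((P.card : ℚ) - 1) = (k : ℚ) + ((d : ℚ) - 1) / (d : ℚ)) ∧
      ¬ (∃ (T : Fin k → Finset β) (rt : Fin k → V) (S R : Finset V) (B : Finset β),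
          (∀ i, IsArborescence dtail dhead Finset.univ (T i) (rt i)) ∧
          (∀ i j, i ≠ j → Disjoint (T i) (T j)) ∧
          (∀ i, Disjoint (T i) B) ∧
          IsBranching dtail dhead S B R ∧
          ((d : ℚ) - 1) / (d : ℚ) * ((Fintype.card V : ℚ) - 1) < (B.card : ℚ) ∧
          ((∃ r : V, IsArborescence dtail dhead Finset.univ B r) ∨
            ∃ r ∈ R, d ≤ (compArcs dtail dhead B r).card)) := by
    classical
  have hd1 : 1 ≤ d := by omega
  set r : V := Classical.arbitrary V with hrdef
  set m : V → ℕ := fun v => if v = r then d - 1 else k with hm_def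
  -- the integer edge bound from `hγ`
  have hEX : ∀ X : Finset V, 2 ≤ X.card →
      (edgesIn ends Finset.univ X).card + 1 ≤ (k + 1) * (X.card - 1) := by
    intro X hX
    have h := hγ X (by omega)
    have hc : (0 : ℚ) < (X.card : ℚ) - 1 := by
      have : (2 : ℚ) ≤ (X.card : ℚ) := by exact_mod_cast hX
      linarith
    rw [div_lt_iff₀ hc] at h
    have h2 : ((edgesIn ends Finset.univ X).card : ℚ)
        < (((k + 1) * (X.card - 1) : ℕ) : ℚ) := by
      rw [Nat.cast_mul, Nat.cast_sub (by omega : 1 ≤ X.card)]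
      push_cast
      linarith
    have := (Nat.cast_lt (α := ℚ)).1 h2
    omega
  have hcardle : ∀ X : Finset V, X.card ≤ d + 1 := by
    intro X
    have := Finset.card_le_univ X
    omega
  -- Hall condition
  have hm : ∀ X : Finset V, 2 ≤ X.card →
      (edgesIn ends Finset.univ X).card ≤ ∑ v ∈ X, m v := by
    intro X h2
    have hE1 := hEX X h2
    have hMS := sum_m_int k d hd1 r X
    have hZ : ((edgesIn ends Finset.univ X).card : ℤ) ≤ ∑ v ∈ X, ((m v : ℕ) : ℤ) := by
      rw [hm_def]
      rw [hMS]
      have hE1' : ((edgesIn ends Finset.univ X).card : ℤ) + 1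
          ≤ ((k : ℤ) + 1) * ((X.card : ℤ) - 1) := by
        have := (Nat.cast_le (α := ℤ)).2 hE1
        have hc : ((X.card - 1 : ℕ) : ℤ) = (X.card : ℤ) - 1 := by omega
        push_cast at this
        rw [hc] at this
        linarith
      have hk' : (d : ℤ) + 1 ≤ (k : ℤ) := by exact_mod_cast hk
      have hd' : (1 : ℤ) ≤ (d : ℤ) := by exact_mod_cast hd1
      have hcX : (X.card : ℤ) ≤ (d : ℤ) + 1 := by exact_mod_cast hcardle X
      by_cases hr : r ∈ X
      · rw [if_pos hr]; linarith
      · rw [if_neg hr]; linarith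
    exact_mod_cast hZ
  -- total degree
  have h1kd : 1 ≤ k * d + d := le_trans hd1 (Nat.le_add_left d (k * d))
  have hsumm : ∑ v, m v = Fintype.card β := by
    have h1 : (∑ v, ((m v : ℕ) : ℤ)) = (k : ℤ) * (d + 1) - ((k : ℤ) - d + 1) := by
      rw [hm_def]
      rw [sum_m_int k d hd1 r Finset.univ, if_pos (Finset.mem_univ r), Finset.card_univ, hV]
      push_cast
      ring
    have h5 : ((∑ v, m v : ℕ) : ℤ) = ∑ v, ((m v : ℕ) : ℤ) := by push_cast; rfl
    have h3 : ((Fintype.card β : ℕ) : ℤ) = (k : ℤ) * d + d - 1 := by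
      rw [hE, Nat.cast_sub h1kd]
      push_cast
      ring
    exact Nat.cast_inj (R := ℤ) |>.1 (by rw [h5, h1, h3]; ring)
  obtain ⟨dtail, dhead, hor, hdeg⟩ := exists_orientation ends hloopless m hm hsumm
  have hdeg' : ∀ v, ((Finset.univ.filter fun e => dhead e = v).card : ℕ)
      = (if v = r then d - 1 else k) := by
    intro v; rw [hdeg v, hm_def]
  have hd0 : (0 : ℚ) < (d : ℚ) := by exact_mod_cast hd1
  refine ⟨dtail, dhead, hor, ?_, ?_, ?_⟩
  · -- lower bound for every subpartition
    intro P hPsub hP1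
    obtain ⟨hPne, hPd⟩ := hPsub
    have key := key_bound ends dtail dhead hor hloopless k d r hd1 hk hV hdeg' hEX P
      hPne hPd (by omega)
    have keyQ : ((k : ℚ) * d + d - 1) * ((P.card : ℚ) - 1)
        ≤ (d : ℚ) * ∑ X ∈ P, (inDeg dtail dhead Finset.univ X : ℚ) := by
      exact_mod_cast key
    have hp1 : (1 : ℚ) < (P.card : ℚ) := by exact_mod_cast hP1
    rw [le_div_iff₀ (by linarith)]
    have hsplit : (k : ℚ) + ((d : ℚ) - 1) / d = ((k : ℚ) * d + d - 1) / d := by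
      field_simp
      ring
    rw [hsplit, div_mul_eq_mul_div, div_le_iff₀ hd0]
    linarith [keyQ]
  · -- the tight subpartition: all singletons
    refine ⟨Finset.univ.image (fun v => ({v} : Finset V)), ⟨?_, ?_⟩, ?_, ?_⟩
    · intro X hX
      obtain ⟨v, _, rfl⟩ := Finset.mem_image.1 hX
      exact ⟨v, Finset.mem_singleton_self v⟩
    · intro X hX Y hY hXY
      obtain ⟨a, _, rfl⟩ := Finset.mem_image.1 hX
      obtain ⟨b, _, rfl⟩ := Finset.mem_image.1 hY
      exact Finset.disjoint_singleton.2 (fun h => hXY (by rw [h]))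
    · rw [Finset.card_image_of_injective _ Finset.singleton_injective,
        Finset.card_univ, hV]
      omega
    · have hcardP : (Finset.univ.image (fun v => ({v} : Finset V))).card = d + 1 := by
        rw [Finset.card_image_of_injective _ Finset.singleton_injective,
          Finset.card_univ, hV]
      have hsing : ∀ v : V, inDeg dtail dhead Finset.univ ({v} : Finset V) = m v := by
        intro v
        have h := inDeg_add_edgesIn ends dtail dhead hor ({v} : Finset V)
        rw [edgesIn_eq_empty ends hloopless _ (by simp), Finset.card_empty,
          Finset.sum_singleton, hdeg v] at h
        omega
      have hsum2 : ∑ X ∈ Finset.univ.image (fun v => ({v} : Finset V)),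
          (inDeg dtail dhead Finset.univ X : ℚ) = ((k * d + d - 1 : ℕ) : ℚ) := by
        rw [Finset.sum_image (fun a _ b _ h => Finset.singleton_injective h)]
        rw [Finset.sum_congr rfl (fun v _ => by rw [hsing v])]
        rw [← Nat.cast_sum, hsumm, hE]
      rw [hsum2, hcardP]
      rw [Nat.cast_sub h1kd]
      push_cast
      rw [div_eq_iff (by linarith : ((d : ℚ) + 1) - 1 ≠ 0)]
      field_simp
      ring
  · -- no packing
    rintro ⟨T, rt, S, R, B, hT, hTdisj, hTB, _hBbr, hBcard, -⟩
    have hTcard : ∀ i, (T i).card = d := by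
      intro i
      obtain ⟨hrmem, hends, hroot, hindeg, hreach⟩ := hT i
      have h1 : (T i).card
          = ∑ v ∈ Finset.univ, ((T i).filter fun a => dhead a = v).card :=
        Finset.card_eq_sum_card_fiberwise (fun a _ => Finset.mem_univ _)
      rw [← Finset.sum_erase_add _ _ (Finset.mem_univ (rt i))] at h1
      have hroot0 : ((T i).filter fun a => dhead a = rt i) = ∅ := by
        rw [Finset.eq_empty_iff_forall_notMem]
        intro a ha
        obtain ⟨ha1, ha2⟩ := Finset.mem_filter.1 ha
        exact hroot a ha1 ha2
      have hone : ∀ v ∈ Finset.univ.erase (rt i),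
          ((T i).filter fun a => dhead a = v).card = 1 :=
        fun v hv => hindeg v (Finset.mem_univ v) (Finset.ne_of_mem_erase hv)
      rw [Finset.sum_congr rfl hone, Finset.sum_const, hroot0, Finset.card_empty,
        Finset.card_erase_of_mem (Finset.mem_univ _), Finset.card_univ, hV] at h1
      simpa using h1
    have hBd : d ≤ B.card := by
      have hV1 : ((Fintype.card V : ℚ)) - 1 = (d : ℚ) := by rw [hV]; push_cast; ring
      rw [hV1] at hBcard
      have hmul : ((d : ℚ) - 1) / d * d = (d : ℚ) - 1 := by field_simp
      rw [hmul] at hBcard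
      have : (d : ℚ) < (B.card : ℚ) + 1 := by linarith
      have hlt : d < B.card + 1 := by exact_mod_cast this
      omega
    have hUcard : ((Finset.univ : Finset (Fin k)).biUnion T).card = k * d := by
      rw [Finset.card_biUnion (fun i _ j _ hij => hTdisj i j hij)]
      rw [Finset.sum_congr rfl (fun i _ => hTcard i), Finset.sum_const,
        Finset.card_univ, Fintype.card_fin, smul_eq_mul]
    have hdisjBU : Disjoint B ((Finset.univ : Finset (Fin k)).biUnion T) :=
      Finset.disjoint_biUnion_right _ _ _ |>.2 (fun i _ => (hTB i).symm)
    have hcardBU : B.card + ((Finset.univ : Finset (Fin k)).biUnion T).card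
        ≤ Fintype.card β := by
      rw [← Finset.card_union_of_disjoint hdisjBU]
      exact Finset.card_le_univ _
    rw [hUcard, hE] at hcardBU
    have h2 : d + k * d ≤ B.card + k * d := by omega
    have hlt2 : k * d + d - 1 < d + k * d :=
      lt_of_lt_of_le (Nat.sub_lt (lt_of_lt_of_le Nat.one_pos h1kd) Nat.one_pos)
        (le_of_eq (Nat.add_comm _ _))
    exact lt_irrefl _ (lt_of_le_of_lt (le_trans h2 hcardBU) hlt2)
end

section
/- Let k and d be integers with k ≥ d + 1 ≥ 2 and let G = (V, E) be a graph with |V| = d + 1, |E| = kd + d − 1, and γ_f(G) < k + 1. Then G decomposes into k + 1 pairwise edge-disjoint spanning forests of which exactly k are spanning trees and exactly one has exactly two connected components. -/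
/-!
Graphs may have parallel edges but no loops.  We model a graph `G = (V, E)` by a finite
vertex type `V`, a finite edge type `β` and a map `ends : β → Sym2 V` giving the pair of
endpoints of each edge, with `¬(ends e).IsDiag` (no loops).  Subgraphs spanning `V` are
given by their edge sets (`Finset β`).
-/

attribute [local instance] Classical.propDecidable

/-- The edge set `F` has exactly two connected components (as a spanning subgraph on `V`):
there are two mutually unreachable vertices such that every vertex reaches one of them. -/
def HasExactlyTwoComponents {V β : Type} (ends : β → Sym2 V) (F : Finset β) : Prop :=
  ∃ u w : V, ¬ GReach ends F u w ∧ ∀ v : V, GReach ends F v u ∨ GReach ends F v w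

namespace NW

variable {V β : Type} {ends : β → Sym2 V}

lemma gstep_symm {F : Finset β} {u w : V} (h : GStep ends F u w) : GStep ends F w u := by
  obtain ⟨e, he, hh⟩ := h; exact ⟨e, he, by rw [hh, Sym2.eq_swap]⟩

lemma greach_refl {F : Finset β} (u : V) : GReach ends F u u := Relation.ReflTransGen.refl

lemma greach_symm {F : Finset β} {u w : V} (h : GReach ends F u w) : GReach ends F w u := by
  induction h with
  | refl => exact greach_refl u
  | tail _ hstep ih => exact (Relation.ReflTransGen.single (gstep_symm hstep)).trans ih

lemma greach_trans {F : Finset β} {u v w : V} (h : GReach ends F u v) (h' : GReach ends F v w) :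
    GReach ends F u w := Relation.ReflTransGen.trans h h'

lemma greach_mono {F T : Finset β} (hFT : F ⊆ T) {u w : V} (h : GReach ends F u w) :
    GReach ends T u w := by
  refine Relation.ReflTransGen.mono (r := GStep ends F) ?_ u w h
  rintro a b ⟨e, he, hh⟩; exact ⟨e, hFT he, hh⟩

lemma greach_step {F : Finset β} {e : β} {u w : V} (he : e ∈ F) (hh : ends e = s(u, w)) :
    GReach ends F u w := Relation.ReflTransGen.single ⟨e, he, hh⟩

lemma mem_edgesIn {F : Finset β} {X : Finset V} {e : β} :
    e ∈ edgesIn ends F X ↔ e ∈ F ∧ ∀ v ∈ ends e, v ∈ X := Finset.mem_filter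

lemma edgesIn_subset (F : Finset β) (X : Finset V) : edgesIn ends F X ⊆ F :=
  Finset.filter_subset _ _

lemma edgesIn_mono {F T : Finset β} (h : F ⊆ T) (X : Finset V) :
    edgesIn ends F X ⊆ edgesIn ends T X := by
  intro e he; rw [mem_edgesIn] at *; exact ⟨h he.1, he.2⟩

/-- A vertex set `X` is closed for edge set `F`. -/
def Closed (ends : β → Sym2 V) (F : Finset β) (X : Finset V) : Prop :=
  ∀ e ∈ F, ∀ x ∈ ends e, x ∈ X → ∀ y ∈ ends e, y ∈ X

lemma greach_closed {F : Finset β} {X : Finset V} (hX : Closed ends F X) {u w : V}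
    (hu : u ∈ X) (h : GReach ends F u w) :
    w ∈ X ∧ GReach ends (edgesIn ends F X) u w := by
  induction h with
  | refl => exact ⟨hu, greach_refl u⟩
  | @tail b c hub hstep ih =>
    obtain ⟨e, he, hh⟩ := hstep
    have hb : b ∈ ends e := by rw [hh]; exact Sym2.mem_mk_left _ _
    have hc : c ∈ ends e := by rw [hh]; exact Sym2.mem_mk_right _ _
    have hcX : c ∈ X := hX e he b hb ih.1 c hc
    have heIn : e ∈ edgesIn ends F X := mem_edgesIn.2 ⟨he, fun v hv => hX e he b hb ih.1 v hv⟩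
    exact ⟨hcX, Relation.ReflTransGen.tail ih.2 ⟨e, heIn, hh⟩⟩

lemma greach_insert {F : Finset β} {g : β} {x y a b : V} (hg : ends g = s(x, y))
    (h : GReach ends (insert g F) a b) :
    GReach ends F a b ∨ (GReach ends F a x ∧ GReach ends F y b) ∨
      (GReach ends F a y ∧ GReach ends F x b) := by
  induction h with
  | refl => exact Or.inl (greach_refl a)
  | @tail c d hac hstep ih =>
    obtain ⟨e, he, hh⟩ := hstep
    rcases Finset.mem_insert.1 he with rfl | heF
    · -- e = g : s(x,y) = s(c,d)
      have : (c = x ∧ d = y) ∨ (c = y ∧ d = x) := by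
        rw [hg] at hh; exact Sym2.eq_iff.1 hh.symm
      rcases ih with ih | ⟨h1, h2⟩ | ⟨h1, h2⟩
      · rcases this with ⟨rfl, rfl⟩ | ⟨rfl, rfl⟩
        · exact Or.inr (Or.inl ⟨ih, greach_refl _⟩)
        · exact Or.inr (Or.inr ⟨ih, greach_refl _⟩)
      · rcases this with ⟨rfl, rfl⟩ | ⟨rfl, rfl⟩
        · exact Or.inr (Or.inl ⟨h1, greach_refl _⟩)
        · exact Or.inl h1
      · rcases this with ⟨rfl, rfl⟩ | ⟨rfl, rfl⟩
        · exact Or.inl h1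
        · exact Or.inr (Or.inr ⟨h1, greach_refl _⟩)
    · -- e ∈ F
      have hcd : GReach ends F c d := greach_step heF hh
      rcases ih with ih | ⟨h1, h2⟩ | ⟨h1, h2⟩
      · exact Or.inl (greach_trans ih hcd)
      · exact Or.inr (Or.inl ⟨h1, greach_trans h2 hcd⟩)
      · exact Or.inr (Or.inr ⟨h1, greach_trans h2 hcd⟩)

lemma greach_erase_insert {F : Finset β} {g : β} (hgF : g ∈ F) {x y a b : V}
    (hg : ends g = s(x, y)) (h : GReach ends F a b) :
    GReach ends (F.erase g) a b ∨
      (GReach ends (F.erase g) a x ∧ GReach ends (F.erase g) y b) ∨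
      (GReach ends (F.erase g) a y ∧ GReach ends (F.erase g) x b) := by
  have : F = insert g (F.erase g) := (Finset.insert_erase hgF).symm
  rw [this] at h
  exact greach_insert hg h

end NW

namespace NW

variable {V β : Type} {ends : β → Sym2 V}

lemma greach_of_mem {F : Finset β} {e : β} (he : e ∈ F) {x y : V} (hx : x ∈ ends e)
    (hy : y ∈ ends e) : GReach ends F x y := by
  obtain ⟨⟨p, q⟩, hpq⟩ := (ends e).exists_rep
  rw [← hpq] at hx hy
  rcases Sym2.mem_iff.1 hx with rfl | rfl <;> rcases Sym2.mem_iff.1 hy with rfl | rfl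
  · exact greach_refl _
  · exact greach_step he hpq.symm
  · exact greach_symm (greach_step he hpq.symm)
  · exact greach_refl _

lemma card_conn_le (T : Finset β) (X : Finset V)
    (hin : ∀ e ∈ T, ∀ v ∈ ends e, v ∈ X)
    (hconn : ∀ a ∈ X, ∀ b ∈ X, GReach ends T a b) :
    X.card - 1 ≤ T.card := by
  induction T using Finset.strongInduction generalizing X with
  | _ T IH =>
  by_cases hX2 : X.card ≤ 1
  · omega
  push_neg at hX2
  obtain ⟨a, ha, b, hb, hab⟩ := Finset.one_lt_card.1 hX2
  obtain ⟨e, heT⟩ : ∃ e, e ∈ T := by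
    rcases (Relation.ReflTransGen.cases_head (hconn a ha b hb)) with heq | ⟨c, ⟨e, he, _⟩, _⟩
    · exact absurd heq hab
    · exact ⟨e, he⟩
  have hTe : T.erase e ⊂ T := Finset.erase_ssubset heT
  by_cases hall : ∀ p ∈ X, ∀ q ∈ X, GReach ends (T.erase e) p q
  · have h1 := IH (T.erase e) hTe X
      (fun e' he' => hin e' (Finset.mem_of_mem_erase he')) hall
    have h2 := Finset.card_erase_of_mem heT
    have h3 : 1 ≤ T.card := Finset.card_pos.2 ⟨e, heT⟩
    omega
  push_neg at hall
  obtain ⟨a', ha', b', hb'⟩ := hall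
  obtain ⟨hb'X, hnab⟩ := hb'
  set A := X.filter (fun z => GReach ends (T.erase e) a' z) with hAdef
  have hmemA : ∀ z, z ∈ A ↔ z ∈ X ∧ GReach ends (T.erase e) a' z := by
    intro z; simp [hAdef]
  have haA : a' ∈ A := (hmemA a').2 ⟨ha', greach_refl _⟩
  have hb'B : b' ∈ X \ A := Finset.mem_sdiff.2 ⟨hb'X, fun h => hnab ((hmemA b').1 h).2⟩
  -- A is closed under T.erase e
  have hclA : Closed ends (T.erase e) A := by
    intro e' he' x' hx' hx'A y' hy'
    have hy'X : y' ∈ X := hin e' (Finset.mem_of_mem_erase he') y' hy'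
    exact (hmemA y').2 ⟨hy'X, greach_trans ((hmemA x').1 hx'A).2 (greach_of_mem he' hx' hy')⟩
  obtain ⟨⟨x, y⟩, hxyrep⟩ := (ends e).exists_rep
  have hxy : ends e = s(x, y) := hxyrep.symm
  have hxX : x ∈ X := hin e heT x (by rw [hxy]; exact Sym2.mem_mk_left _ _)
  have hyX : y ∈ X := hin e heT y (by rw [hxy]; exact Sym2.mem_mk_right _ _)
  -- if both endpoints of e are on the same side of A, contradiction
  have hsame : ∀ hsides : (x ∈ A ↔ y ∈ A), False := by
    intro hsides
    have hclTA : Closed ends T A := by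
      intro e' he' x' hx' hx'A y' hy'
      by_cases he'e : e' = e
      · subst he'e
        rw [hxy] at hx' hy'
        rcases Sym2.mem_iff.1 hx' with rfl | rfl <;> rcases Sym2.mem_iff.1 hy' with rfl | rfl
        · exact hx'A
        · exact hsides.1 hx'A
        · exact hsides.2 hx'A
        · exact hx'A
      · exact hclA e' (Finset.mem_erase.2 ⟨he'e, he'⟩) x' hx' hx'A y' hy'
    exact (Finset.mem_sdiff.1 hb'B).2
      (greach_closed hclTA haA (hconn a' ha' b' hb'X)).1
  -- key argument for the mixed case
  have key : ∀ x y : V, ends e = s(x, y) → x ∈ A → y ∈ X \ A → X.card - 1 ≤ T.card := by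
    intro x y hxy hxA hyB
    -- X \ A is connected within T.erase e
    have hBconn : ∀ p ∈ X \ A, ∀ q ∈ X \ A, GReach ends (T.erase e) p q := by
      intro p hp q hq
      have hpX := (Finset.mem_sdiff.1 hp).1
      have hqX := (Finset.mem_sdiff.1 hq).1
      rcases greach_erase_insert heT hxy (hconn p hpX q hqX) with h | ⟨h1, h2⟩ | ⟨h1, h2⟩
      · exact h
      · exact absurd ((hmemA p).2 ⟨hpX, greach_trans ((hmemA x).1 hxA).2 (greach_symm h1)⟩)
          (Finset.mem_sdiff.1 hp).2
      · exact absurd ((hmemA q).2 ⟨hqX, greach_trans ((hmemA x).1 hxA).2 h2⟩)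
          (Finset.mem_sdiff.1 hq).2
    -- connectivity inside the two pieces, with edges inside
    set T1 := edgesIn ends (T.erase e) A with hT1
    set T2 := edgesIn ends (T.erase e) (X \ A) with hT2
    have hclB : Closed ends (T.erase e) (X \ A) := by
      intro e' he' x' hx' hx'B y' hy'
      have hy'X : y' ∈ X := hin e' (Finset.mem_of_mem_erase he') y' hy'
      refine Finset.mem_sdiff.2 ⟨hy'X, fun hy'A => ?_⟩
      exact (Finset.mem_sdiff.1 hx'B).2 ((hmemA x').2
        ⟨(Finset.mem_sdiff.1 hx'B).1,
          greach_trans ((hmemA y').1 hy'A).2 (greach_of_mem he' hy' hx')⟩)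
    have hin1 : ∀ e' ∈ T1, ∀ v ∈ ends e', v ∈ A := fun e' he' => (mem_edgesIn.1 he').2
    have hin2 : ∀ e' ∈ T2, ∀ v ∈ ends e', v ∈ X \ A := fun e' he' => (mem_edgesIn.1 he').2
    have hconn1 : ∀ p ∈ A, ∀ q ∈ A, GReach ends T1 p q := by
      intro p hp q hq
      have hpq : GReach ends (T.erase e) p q :=
        greach_trans (greach_symm ((hmemA p).1 hp).2) ((hmemA q).1 hq).2
      exact (greach_closed hclA hp hpq).2
    have hconn2 : ∀ p ∈ X \ A, ∀ q ∈ X \ A, GReach ends T2 p q := by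
      intro p hp q hq
      exact (greach_closed hclB hp (hBconn p hp q hq)).2
    have hs1 : T1 ⊂ T := lt_of_le_of_lt (Finset.filter_subset _ _) hTe
    have hs2 : T2 ⊂ T := lt_of_le_of_lt (Finset.filter_subset _ _) hTe
    have hIH1 := IH T1 hs1 A hin1 hconn1
    have hIH2 := IH T2 hs2 (X \ A) hin2 hconn2
    -- T1 and T2 are disjoint subsets of T.erase e
    have hdisj : Disjoint T1 T2 := by
      rw [Finset.disjoint_left]
      intro e' he1 he2
      obtain ⟨⟨p, q⟩, hpq⟩ := (ends e').exists_rep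
      have hpA : p ∈ A := hin1 e' he1 p (by rw [← hpq]; exact Sym2.mem_mk_left _ _)
      have hpB : p ∈ X \ A := hin2 e' he2 p (by rw [← hpq]; exact Sym2.mem_mk_left _ _)
      exact (Finset.mem_sdiff.1 hpB).2 hpA
    have hunion : T1 ∪ T2 ⊆ T.erase e :=
      Finset.union_subset (Finset.filter_subset _ _) (Finset.filter_subset _ _)
    have hcard : T1.card + T2.card ≤ (T.erase e).card := by
      rw [← Finset.card_union_of_disjoint hdisj]
      exact Finset.card_le_card hunion
    have hce : (T.erase e).card = T.card - 1 := Finset.card_erase_of_mem heT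
    have hA1 : 1 ≤ A.card := Finset.card_pos.2 ⟨a', haA⟩
    have hB1 : 1 ≤ (X \ A).card := Finset.card_pos.2 ⟨b', hb'B⟩
    have hsplit : (X \ A).card + A.card = X.card :=
      Finset.card_sdiff_add_card_eq_card (Finset.filter_subset _ _)
    have hT1 : 1 ≤ T.card := Finset.card_pos.2 ⟨e, heT⟩
    omega
  -- case analysis on the position of x, y
  by_cases hxA : x ∈ A
  · by_cases hyA : y ∈ A
    · exact absurd (Iff.intro (fun _ => hyA) (fun _ => hxA)) (fun h => hsame h)
    · exact key x y hxy hxA (Finset.mem_sdiff.2 ⟨hyX, hyA⟩)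
  · by_cases hyA : y ∈ A
    · exact key y x (by rw [hxy, Sym2.eq_swap]) hyA (Finset.mem_sdiff.2 ⟨hxX, hxA⟩)
    · exact absurd (Iff.intro (fun h => absurd h hxA) (fun h => absurd h hyA))
        (fun h => hsame h)

end NW

namespace NW

variable {V β : Type} {ends : β → Sym2 V}

lemma forest_subset {T F : Finset β} (hT : IsForest ends T) (hFT : F ⊆ T) :
    IsForest ends F := fun X hX =>
  le_trans (Finset.card_le_card (edgesIn_mono hFT X)) (hT X hX)

lemma edgesIn_card_of_disconn {F : Finset β} (hF : IsForest ends F) {X : Finset V} {x y : V}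
    (hx : x ∈ X) (hy : y ∈ X) (hnr : ¬GReach ends F x y) :
    (edgesIn ends F X).card ≤ X.card - 2 := by
  set A := X.filter (fun z => GReach ends F x z) with hAdef
  have hmemA : ∀ z, z ∈ A ↔ z ∈ X ∧ GReach ends F x z := by intro z; simp [hAdef]
  have hxA : x ∈ A := (hmemA x).2 ⟨hx, greach_refl _⟩
  have hyB : y ∈ X \ A := Finset.mem_sdiff.2 ⟨hy, fun h => hnr ((hmemA y).1 h).2⟩
  have hsub : edgesIn ends F X ⊆ edgesIn ends F A ∪ edgesIn ends F (X \ A) := by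
    intro e he
    obtain ⟨heF, hev⟩ := mem_edgesIn.1 he
    obtain ⟨⟨p, q⟩, hpq⟩ := (ends e).exists_rep
    have hpe : p ∈ ends e := by rw [← hpq]; exact Sym2.mem_mk_left _ _
    by_cases hpA : p ∈ A
    · refine Finset.mem_union_left _ (mem_edgesIn.2 ⟨heF, fun v hv => ?_⟩)
      exact (hmemA v).2 ⟨hev v hv, greach_trans ((hmemA p).1 hpA).2 (greach_of_mem heF hpe hv)⟩
    · refine Finset.mem_union_right _ (mem_edgesIn.2 ⟨heF, fun v hv => ?_⟩)
      refine Finset.mem_sdiff.2 ⟨hev v hv, fun hvA => hpA ?_⟩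
      exact (hmemA p).2 ⟨hev p hpe, greach_trans ((hmemA v).1 hvA).2 (greach_of_mem heF hv hpe)⟩
  have hdisj : Disjoint (edgesIn ends F A) (edgesIn ends F (X \ A)) := by
    rw [Finset.disjoint_left]
    intro e he1 he2
    obtain ⟨⟨p, q⟩, hpq⟩ := (ends e).exists_rep
    have hpe : p ∈ ends e := by rw [← hpq]; exact Sym2.mem_mk_left _ _
    exact (Finset.mem_sdiff.1 ((mem_edgesIn.1 he2).2 p hpe)).2 ((mem_edgesIn.1 he1).2 p hpe)
  have h1 := hF A ⟨x, hxA⟩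
  have h2 := hF (X \ A) ⟨y, hyB⟩
  have hcard : (edgesIn ends F X).card ≤ (edgesIn ends F A).card + (edgesIn ends F (X \ A)).card := by
    rw [← Finset.card_union_of_disjoint hdisj]
    exact Finset.card_le_card hsub
  have hA1 : 1 ≤ A.card := Finset.card_pos.2 ⟨x, hxA⟩
  have hB1 : 1 ≤ (X \ A).card := Finset.card_pos.2 ⟨y, hyB⟩
  have hsplit : (X \ A).card + A.card = X.card :=
    Finset.card_sdiff_add_card_eq_card (Finset.filter_subset _ _)
  omega

lemma forest_insert {F : Finset β} (hF : IsForest ends F) {f : β} {x y : V}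
    (hxy : ends f = s(x, y)) (hnr : ¬GReach ends F x y) : IsForest ends (insert f F) := by
  intro X hX
  have hxney : x ≠ y := by rintro rfl; exact hnr (greach_refl _)
  by_cases hmem : x ∈ X ∧ y ∈ X
  · have hsub : edgesIn ends (insert f F) X ⊆ insert f (edgesIn ends F X) := by
      intro e he
      obtain ⟨heF, hev⟩ := mem_edgesIn.1 he
      rcases Finset.mem_insert.1 heF with rfl | heF
      · exact Finset.mem_insert_self _ _
      · exact Finset.mem_insert_of_mem (mem_edgesIn.2 ⟨heF, hev⟩)
    have h1 : (edgesIn ends (insert f F) X).card ≤ (edgesIn ends F X).card + 1 :=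
      le_trans (Finset.card_le_card hsub) (Finset.card_insert_le _ _)
    have h2 := edgesIn_card_of_disconn hF hmem.1 hmem.2 hnr
    have h3 : 2 ≤ X.card := Finset.one_lt_card.2 ⟨x, hmem.1, y, hmem.2, hxney⟩
    omega
  · have heq : edgesIn ends (insert f F) X ⊆ edgesIn ends F X := by
      intro e he
      obtain ⟨heF, hev⟩ := mem_edgesIn.1 he
      rcases Finset.mem_insert.1 heF with rfl | heF
      · exact absurd ⟨hev x (by rw [hxy]; exact Sym2.mem_mk_left _ _),
          hev y (by rw [hxy]; exact Sym2.mem_mk_right _ _)⟩ hmem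
      · exact mem_edgesIn.2 ⟨heF, hev⟩
    exact le_trans (Finset.card_le_card heq) (hF X hX)

variable [Fintype V]

lemma forest_bridge {F : Finset β} (hF : IsForest ends F) {g : β} (hg : g ∈ F) {x y : V}
    (hxy : ends g = s(x, y)) : ¬GReach ends (F.erase g) x y := by
  intro h
  set X := Finset.univ.filter (fun z => GReach ends F x z) with hXdef
  have hmemX : ∀ z, z ∈ X ↔ GReach ends F x z := by intro z; simp [hXdef]
  have hxX : x ∈ X := (hmemX x).2 (greach_refl _)
  have hyX : y ∈ X := (hmemX y).2 (greach_step hg hxy)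
  have hclX : Closed ends (F.erase g) X := by
    intro e' he' x' hx' hx'X y' hy'
    exact (hmemX y').2 (greach_trans ((hmemX x').1 hx'X)
      (greach_of_mem (Finset.mem_of_mem_erase he') hx' hy'))
  have hconn : ∀ a ∈ X, ∀ b ∈ X, GReach ends (F.erase g) a b := by
    intro a haX b hbX
    have hFab : GReach ends F a b :=
      greach_trans (greach_symm ((hmemX a).1 haX)) ((hmemX b).1 hbX)
    rcases greach_erase_insert hg hxy hFab with h' | ⟨h1, h2⟩ | ⟨h1, h2⟩
    · exact h'
    · exact greach_trans h1 (greach_trans h h2)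
    · exact greach_trans h1 (greach_trans (greach_symm h) h2)
  set T' := edgesIn ends (F.erase g) X with hT'def
  have hconn' : ∀ a ∈ X, ∀ b ∈ X, GReach ends T' a b := by
    intro a haX b hbX
    exact (greach_closed hclX haX (hconn a haX b hbX)).2
  have hin' : ∀ e' ∈ T', ∀ v ∈ ends e', v ∈ X := fun e' he' => (mem_edgesIn.1 he').2
  have hcle := card_conn_le T' X hin' hconn'
  have hgX : g ∈ edgesIn ends F X := by
    refine mem_edgesIn.2 ⟨hg, fun v hv => ?_⟩
    rw [hxy] at hv
    rcases Sym2.mem_iff.1 hv with rfl | rfl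
    · exact hxX
    · exact hyX
  have hsub : insert g T' ⊆ edgesIn ends F X :=
    Finset.insert_subset hgX (edgesIn_mono (Finset.erase_subset _ _) X)
  have hgT' : g ∉ T' := fun h' => Finset.notMem_erase g F (edgesIn_subset _ _ h')
  have hcard : T'.card + 1 ≤ (edgesIn ends F X).card := by
    rw [← Finset.card_insert_of_notMem hgT']
    exact Finset.card_le_card hsub
  have hbound := hF X ⟨x, hxX⟩
  have hX1 : 1 ≤ X.card := Finset.card_pos.2 ⟨x, hxX⟩
  omega

lemma forest_crit {F : Finset β} (hF : IsForest ends F) {u v : V} (hr : GReach ends F u v) :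
    GReach ends (F.filter fun g => ¬GReach ends (F.erase g) u v) u v := by
  induction F using Finset.strongInduction with
  | _ F IH =>
  by_cases hall : ∀ g ∈ F, ¬GReach ends (F.erase g) u v
  · rwa [Finset.filter_true_of_mem hall]
  push_neg at hall
  obtain ⟨g, hgF, hgnc⟩ := hall
  have hFg : IsForest ends (F.erase g) := forest_subset hF (Finset.erase_subset _ _)
  have hstep := IH (F.erase g) (Finset.erase_ssubset hgF) hFg hgnc
  refine greach_mono ?_ hstep
  intro h hh
  obtain ⟨hhFg, hhcrit⟩ := Finset.mem_filter.1 hh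
  have hhF : h ∈ F := Finset.mem_of_mem_erase hhFg
  have hhg : h ≠ g := Finset.ne_of_mem_erase hhFg
  refine Finset.mem_filter.2 ⟨hhF, fun hreach => ?_⟩
  -- h is critical in F.erase g but not in F : derive a contradiction
  obtain ⟨⟨xg, yg⟩, hgrep⟩ := (ends g).exists_rep
  have hgends : ends g = s(xg, yg) := hgrep.symm
  obtain ⟨⟨xh, yh⟩, hhrep⟩ := (ends h).exists_rep
  have hhends : ends h = s(xh, yh) := hhrep.symm
  set T0 := (F.erase g).erase h with hT0def
  have hT0alt : (F.erase h).erase g = T0 := by rw [hT0def, Finset.erase_right_comm]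
  have hnT0 : ¬GReach ends T0 u v := hhcrit
  have hgFh : g ∈ F.erase h := Finset.mem_erase.2 ⟨fun hgh => hhg hgh.symm, hgF⟩
  have hbridgeh : ¬GReach ends (F.erase h) xh yh := forest_bridge hF hhF hhends
  have hT0subFh : T0 ⊆ F.erase h := by rw [← hT0alt]; exact Finset.erase_subset _ _
  -- h-side decomposition
  have hhcases : (GReach ends T0 u xh ∧ GReach ends T0 yh v) ∨
      (GReach ends T0 u yh ∧ GReach ends T0 xh v) := by
    rcases greach_erase_insert hhFg hhends hgnc with h' | h' | h'
    · exact absurd h' hnT0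
    · exact Or.inl h'
    · exact Or.inr h'
  have build : ∀ pg qg : V, ends g = s(pg, qg) → GReach ends T0 u pg →
      GReach ends T0 qg v → False := by
    intro pg qg hpq h1 h2
    have hgstep : GReach ends (F.erase h) pg qg := greach_step hgFh hpq
    rcases hhcases with ⟨ha, hb⟩ | ⟨ha, hb⟩
    · -- u ~ xh, yh ~ v
      exact hbridgeh (greach_trans (greach_mono hT0subFh (greach_trans (greach_symm ha) h1))
        (greach_trans hgstep (greach_mono hT0subFh (greach_trans h2 (greach_symm hb)))))
    · -- u ~ yh, xh ~ v
      exact hbridgeh (greach_symm (greach_trans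
        (greach_mono hT0subFh (greach_trans (greach_symm ha) h1))
        (greach_trans hgstep (greach_mono hT0subFh (greach_trans h2 (greach_symm hb))))))
  rcases greach_erase_insert hgFh hgends hreach with h' | ⟨h1, h2⟩ | ⟨h1, h2⟩
  · -- GReach ends ((F.erase h).erase g) u v
    rw [hT0alt] at h'
    exact hnT0 h'
  · rw [hT0alt] at h1 h2
    exact build xg yg hgends h1 h2
  · rw [hT0alt] at h1 h2
    exact build yg xg (by rw [hgends, Sym2.eq_swap]) h1 h2

end NW

namespace NW

variable {V β : Type} {ends : β → Sym2 V} [Fintype V]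

noncomputable def compOf (ends : β → Sym2 V) (S : Finset β) (v : V) : Finset V :=
  Finset.univ.filter (fun w => GReach ends S v w)

noncomputable def comps (ends : β → Sym2 V) [Fintype V] (S : Finset β) : Finset (Finset V) :=
  Finset.univ.image (compOf ends S)

lemma mem_compOf {S : Finset β} {v w : V} : w ∈ compOf ends S v ↔ GReach ends S v w := by
  simp [compOf]

lemma self_mem_compOf {S : Finset β} (v : V) : v ∈ compOf ends S v :=
  mem_compOf.2 (greach_refl _)

lemma compOf_eq_of_reach {S : Finset β} {v w : V} (h : GReach ends S v w) :
    compOf ends S v = compOf ends S w := by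
  ext z
  simp only [mem_compOf]
  exact ⟨fun h' => greach_trans (greach_symm h) h', fun h' => greach_trans h h'⟩

lemma compOf_mem_comps (S : Finset β) (v : V) : compOf ends S v ∈ comps ends S :=
  Finset.mem_image.2 ⟨v, Finset.mem_univ v, rfl⟩

lemma comps_nonempty {S : Finset β} {X : Finset V} (hX : X ∈ comps ends S) : X.Nonempty := by
  obtain ⟨v, _, rfl⟩ := Finset.mem_image.1 hX
  exact ⟨v, self_mem_compOf v⟩

lemma comps_disjoint {S : Finset β} {X Y : Finset V} (hX : X ∈ comps ends S)
    (hY : Y ∈ comps ends S) (hne : X ≠ Y) : Disjoint X Y := by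
  obtain ⟨v, _, rfl⟩ := Finset.mem_image.1 hX
  obtain ⟨w, _, rfl⟩ := Finset.mem_image.1 hY
  rw [Finset.disjoint_left]
  intro z hzv hzw
  exact hne (by rw [compOf_eq_of_reach (mem_compOf.1 hzv),
    compOf_eq_of_reach (mem_compOf.1 hzw)])

lemma comps_closed {S : Finset β} {X : Finset V} (hX : X ∈ comps ends S) :
    Closed ends S X := by
  obtain ⟨v, _, rfl⟩ := Finset.mem_image.1 hX
  intro e he x hx hxX y hy
  exact mem_compOf.2 (greach_trans (mem_compOf.1 hxX) (greach_of_mem he hx hy))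

lemma biUnion_comps (S : Finset β) : (comps ends S).biUnion (fun X => X) = Finset.univ := by
  apply Finset.eq_univ_of_forall
  intro v
  exact Finset.mem_biUnion.2 ⟨compOf ends S v, compOf_mem_comps S v, self_mem_compOf v⟩

lemma sum_card_comps (S : Finset β) :
    ∑ X ∈ comps ends S, X.card = Fintype.card V := by
  rw [← Finset.card_biUnion (fun X hX Y hY hne => comps_disjoint hX hY hne),
    biUnion_comps, Finset.card_univ]

lemma sum_card_comps_sub (S : Finset β) :
    ∑ X ∈ comps ends S, (X.card - 1) = Fintype.card V - (comps ends S).card := by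
  have h : ∑ X ∈ comps ends S, X.card
      = ∑ X ∈ comps ends S, ((X.card - 1) + 1) := by
    apply Finset.sum_congr rfl
    intro X hX
    have := Finset.card_pos.2 (comps_nonempty hX)
    omega
  rw [Finset.sum_add_distrib, Finset.sum_const, smul_eq_mul, mul_one] at h
  have h2 := sum_card_comps (ends := ends) S
  omega

lemma edgesIn_comps_disjoint {S : Finset β} (T : Finset β) {X Y : Finset V}
    (hX : X ∈ comps ends S) (hY : Y ∈ comps ends S) (hne : X ≠ Y) :
    Disjoint (edgesIn ends T X) (edgesIn ends T Y) := by
  rw [Finset.disjoint_left]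
  intro e he1 he2
  obtain ⟨⟨p, q⟩, hpq⟩ := (ends e).exists_rep
  have hpe : p ∈ ends e := by rw [← hpq]; exact Sym2.mem_mk_left _ _
  exact Finset.disjoint_left.1 (comps_disjoint hX hY hne)
    ((mem_edgesIn.1 he1).2 p hpe) ((mem_edgesIn.1 he2).2 p hpe)

lemma sum_edgesIn_le (S T : Finset β) :
    ∑ X ∈ comps ends S, (edgesIn ends T X).card ≤ T.card := by
  rw [← Finset.card_biUnion (fun X hX Y hY hne => edgesIn_comps_disjoint T hX hY hne)]
  apply Finset.card_le_card
  intro e he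
  obtain ⟨X, _, heX⟩ := Finset.mem_biUnion.1 he
  exact edgesIn_subset _ _ heX

lemma sum_edgesIn_eq {S T : Finset β} (hTS : T ⊆ S) :
    ∑ X ∈ comps ends S, (edgesIn ends T X).card = T.card := by
  rw [← Finset.card_biUnion (fun X hX Y hY hne => edgesIn_comps_disjoint T hX hY hne)]
  congr 1
  apply Finset.Subset.antisymm
  · intro e he
    obtain ⟨X, _, heX⟩ := Finset.mem_biUnion.1 he
    exact edgesIn_subset _ _ heX
  · intro e he
    obtain ⟨⟨p, q⟩, hpq⟩ := (ends e).exists_rep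
    have hpe : p ∈ ends e := by rw [← hpq]; exact Sym2.mem_mk_left _ _
    refine Finset.mem_biUnion.2 ⟨compOf ends S p, compOf_mem_comps S p,
      mem_edgesIn.2 ⟨he, fun v hv => ?_⟩⟩
    exact mem_compOf.2 (greach_of_mem (hTS he) hpe hv)

lemma forest_card_le {F : Finset β} (hF : IsForest ends F) :
    F.card ≤ Fintype.card V - (comps ends F).card := by
  rw [← sum_edgesIn_eq (ends := ends) (Finset.Subset.refl F), ← sum_card_comps_sub (ends := ends) F]
  exact Finset.sum_le_sum (fun X hX => hF X (comps_nonempty hX))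

lemma conn_card_ge {F : Finset β} (hconn : ∀ u w : V, GReach ends F u w) :
    Fintype.card V - 1 ≤ F.card := by
  have := card_conn_le F Finset.univ (fun e _ v _ => Finset.mem_univ v)
    (fun a _ b _ => hconn a b)
  rwa [Finset.card_univ] at this

lemma comps_two {F : Finset β} {u w : V} (hnr : ¬GReach ends F u w) :
    2 ≤ (comps ends F).card := by
  apply Finset.one_lt_card.2
  refine ⟨compOf ends F u, compOf_mem_comps F u, compOf ends F w, compOf_mem_comps F w, ?_⟩
  intro h
  exact hnr (mem_compOf.1 (h ▸ self_mem_compOf w))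

lemma comps_three {F : Finset β} {u w v : V} (huw : ¬GReach ends F u w)
    (hvu : ¬GReach ends F v u) (hvw : ¬GReach ends F v w) :
    3 ≤ (comps ends F).card := by
  have hsub : {compOf ends F u, compOf ends F w, compOf ends F v} ⊆ comps ends F := by
    intro X hX
    simp only [Finset.mem_insert, Finset.mem_singleton] at hX
    rcases hX with rfl | rfl | rfl <;> exact compOf_mem_comps _ _
  have hcard : ({compOf ends F u, compOf ends F w, compOf ends F v} : Finset (Finset V)).card = 3 := by
    rw [Finset.card_insert_of_notMem, Finset.card_insert_of_notMem, Finset.card_singleton]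
    · simp only [Finset.mem_singleton]
      intro h
      exact hvw (greach_symm (mem_compOf.1 (h ▸ self_mem_compOf v)))
    · simp only [Finset.mem_insert, Finset.mem_singleton]
      rintro (h | h)
      · exact huw (mem_compOf.1 (h ▸ self_mem_compOf w))
      · exact hvu (greach_symm (mem_compOf.1 (h ▸ self_mem_compOf v)))
  calc 3 = ({compOf ends F u, compOf ends F w, compOf ends F v} : Finset (Finset V)).card := hcard.symm
    _ ≤ (comps ends F).card := Finset.card_le_card hsub

end NW

namespace NW

variable {V β : Type}

/-- The color classes of a coloring `c`, within the edge set `D`. -/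
noncomputable def part {a : ℕ} (D : Finset β) (c : β → Fin a) (i : Fin a) : Finset β :=
  D.filter (fun f => c f = i)

lemma mem_part {a : ℕ} {D : Finset β} {c : β → Fin a} {i : Fin a} {f : β} :
    f ∈ part D c i ↔ f ∈ D ∧ c f = i := Finset.mem_filter

lemma part_subset {a : ℕ} (D : Finset β) (c : β → Fin a) (i : Fin a) : part D c i ⊆ D :=
  Finset.filter_subset _ _

lemma part_update_eq {a : ℕ} {D : Finset β} {c : β → Fin a} {f : β} (hf : f ∈ D) (m : Fin a) :
    part D (Function.update c f m) m = insert f (part D c m) := by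
  ext g
  simp only [mem_part, Finset.mem_insert]
  by_cases hg : g = f
  · subst hg; simp [Function.update_self, hf]
  · simp [Function.update_of_ne hg, hg, mem_part]

lemma part_update_ne {a : ℕ} {D : Finset β} {c : β → Fin a} {f : β} {m i : Fin a}
    (him : i ≠ m) : part D (Function.update c f m) i = (part D c i).erase f := by
  ext g
  simp only [mem_part, Finset.mem_erase]
  by_cases hg : g = f
  · subst hg
    simp only [Function.update_self]
    constructor
    · rintro ⟨-, h⟩; exact absurd h.symm him
    · rintro ⟨h, -⟩; exact absurd rfl h
  · simp only [Function.update_of_ne hg, hg]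
    tauto

variable {ends : β → Sym2 V} {a : ℕ}

/-- All color classes are forests. -/
def ValidC (ends : β → Sym2 V) {a : ℕ} (D : Finset β) (c : β → Fin a) : Prop :=
  ∀ i, IsForest ends (part D c i)

def Addable (ends : β → Sym2 V) (p q : β → V) {a : ℕ} (D : Finset β) (c : β → Fin a)
    (f : β) : Prop :=
  ∃ j, ¬GReach ends (part D c j) (p f) (q f)

def Arc (ends : β → Sym2 V) (p q : β → V) {a : ℕ} (D : Finset β) (c : β → Fin a)
    (f g : β) : Prop :=
  ∃ j, g ∈ part D c j ∧ GReach ends (part D c j) (p f) (q f) ∧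
    ¬GReach ends ((part D c j).erase g) (p f) (q f)

def ReachN (ends : β → Sym2 V) (p q : β → V) {a : ℕ} (D : Finset β) (e : β) (c : β → Fin a) :
    ℕ → β → Prop
  | 0, f => f = e
  | n + 1, f => ReachN ends p q D e c n f ∨
      ∃ g, ReachN ends p q D e c n g ∧ Arc ends p q D c g f

lemma reachN_zero {p q : β → V} {D : Finset β} {e : β} {c : β → Fin a} {f : β} :
    ReachN ends p q D e c 0 f ↔ f = e := Iff.rfl

lemma reachN_succ {p q : β → V} {D : Finset β} {e : β} {c : β → Fin a} {n : ℕ} {f : β} :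
    ReachN ends p q D e c (n + 1) f ↔ ReachN ends p q D e c n f ∨
      ∃ g, ReachN ends p q D e c n g ∧ Arc ends p q D c g f := Iff.rfl

variable [Fintype V]

lemma aug (p q : β → V) (hpq : ∀ f, ends f = s(p f, q f)) (D : Finset β) (e : β) :
    ∀ n : ℕ, ∀ c : β → Fin a, ValidC ends D c →
      (∃ f, ReachN ends p q D e c n f ∧ Addable ends p q D c f) →
      ∃ c' : β → Fin a, ValidC ends D c' ∧
        ∃ j, ¬GReach ends (part D c' j) (p e) (q e) := by
  intro n
  induction n using Nat.strong_induction_on with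
  | _ n IH =>
  intro c hval hex
  obtain ⟨f, hre, hadd⟩ := hex
  match n with
  | 0 =>
    obtain rfl := reachN_zero.1 hre
    obtain ⟨j, hj⟩ := hadd
    exact ⟨c, hval, j, hj⟩
  | Nat.succ n' =>
    rcases reachN_succ.1 hre with hre' | ⟨g, hg, harc⟩
    · exact IH n' (Nat.lt_succ_self n') c hval ⟨f, hre', hadd⟩
    by_cases hex2 : ∃ n₂, n₂ ≤ n' ∧ ∃ f₂, ReachN ends p q D e c n₂ f₂ ∧ Addable ends p q D c f₂
    · obtain ⟨n₂, hn₂, hf₂⟩ := hex2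
      exact IH n₂ (Nat.lt_succ_of_le hn₂) c hval hf₂
    push_neg at hex2
    have hno : ∀ n₂, n₂ ≤ n' → ∀ f₂, ReachN ends p q D e c n₂ f₂ →
        ¬Addable ends p q D c f₂ := fun n₂ h f₂ hr => hex2 n₂ h f₂ hr
    obtain ⟨j, hfj, hgcon, hgcrit⟩ := harc
    obtain ⟨m, hm⟩ := hadd
    have hfD : f ∈ D := (mem_part.1 hfj).1
    have hcfj : c f = j := (mem_part.1 hfj).2
    have hjm : j ≠ m := by
      rintro rfl
      exact hm (greach_step hfj (hpq f))
    set c' := Function.update c f m with hc'def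
    have hpm : part D c' m = insert f (part D c m) := part_update_eq hfD m
    have hpne : ∀ i, i ≠ m → part D c' i = (part D c i).erase f :=
      fun i hi => part_update_ne hi
    have hfnotm : f ∉ part D c m := fun h => hjm (hcfj.symm.trans (mem_part.1 h).2)
    have hval' : ValidC ends D c' := by
      intro i
      by_cases him : i = m
      · subst him
        rw [hpm]
        exact forest_insert (hval i) (hpq f) hm
      · rw [hpne i him]
        exact forest_subset (hval i) (Finset.erase_subset _ _)
    -- chains of length ≤ n' are preserved
    have hpres : ∀ s, s ≤ n' → ∀ x, ReachN ends p q D e c s x → ReachN ends p q D e c' s x := by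
      intro s
      induction s with
      | zero => exact fun _ x hx => hx
      | succ s ihs =>
        intro hs x hx
        rcases reachN_succ.1 hx with hx' | ⟨g', hg', harc'⟩
        · exact reachN_succ.2 (Or.inl (ihs (le_of_lt hs) x hx'))
        refine reachN_succ.2 (Or.inr ⟨g', ihs (le_of_lt hs) g' hg', ?_⟩)
        obtain ⟨j₁, hxj₁, hcon₁, hcrit₁⟩ := harc'
        have hxf : x ≠ f := by
          rintro rfl
          exact hno (s+1) hs x (reachN_succ.2 (Or.inr ⟨g', hg', j₁, hxj₁, hcon₁, hcrit₁⟩)) ⟨m, hm⟩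
        by_cases hj₁m : j₁ = m
        · subst hj₁m
          refine ⟨j₁, ?_, ?_, ?_⟩
          · rw [hpm]; exact Finset.mem_insert_of_mem hxj₁
          · rw [hpm]; exact greach_mono (Finset.subset_insert _ _) hcon₁
          · rw [hpm]
            intro hbad
            rw [Finset.erase_insert_of_ne (Ne.symm hxf)] at hbad
            rcases greach_insert (hpq f) hbad with h' | ⟨h1, h2⟩ | ⟨h1, h2⟩
            · exact hcrit₁ h'
            · refine hm (greach_trans (greach_symm (greach_mono (Finset.erase_subset _ _) h1))
                (greach_trans hcon₁ (greach_mono (Finset.erase_subset _ _) (greach_symm h2))))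
            · refine hm (greach_trans (greach_mono (Finset.erase_subset _ _) h2)
                (greach_trans (greach_symm hcon₁) (greach_mono (Finset.erase_subset _ _) h1)))
        · by_cases hj₁j : j₁ = j
          · subst hj₁j
            have hconer : GReach ends ((part D c j₁).erase f) (p g') (q g') := by
              by_contra hcon'
              exact hno (s+1) hs f (reachN_succ.2 (Or.inr ⟨g', hg', j₁, hfj, hcon₁, hcon'⟩))
                ⟨m, hm⟩
            refine ⟨j₁, ?_, ?_, ?_⟩
            · rw [hpne j₁ hjm]
              exact Finset.mem_erase.2 ⟨hxf, hxj₁⟩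
            · rw [hpne j₁ hjm]
              exact hconer
            · rw [hpne j₁ hjm]
              intro hbad
              exact hcrit₁ (greach_mono (Finset.erase_subset_erase _ (Finset.erase_subset _ _)) hbad)
          · have hsame : part D c' j₁ = part D c j₁ := by
              rw [hpne j₁ hj₁m]
              apply Finset.erase_eq_of_notMem
              intro h
              exact hj₁j ((mem_part.1 h).2.symm.trans hcfj)
            exact ⟨j₁, by rw [hsame]; exact hxj₁, by rw [hsame]; exact hcon₁,
              by rw [hsame]; exact hcrit₁⟩
    have hgre' : ReachN ends p q D e c' n' g := hpres n' (le_refl n') g hg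
    have hgadd' : Addable ends p q D c' g := by
      refine ⟨j, ?_⟩
      rw [hpne j hjm]
      exact hgcrit
    exact IH n' (Nat.lt_succ_self n') c' hval' ⟨g, hgre', hgadd'⟩

end NW

namespace NW

variable {V β : Type} {ends : β → Sym2 V} {a : ℕ} [Fintype V]

set_option linter.unusedSectionVars false

lemma closed_mono {S T : Finset β} {X : Finset V} (hTS : T ⊆ S) (h : Closed ends S X) :
    Closed ends T X := fun e he => h e (hTS he)

theorem nw_exists (p q : β → V) (hpq : ∀ f, ends f = s(p f, q f))
    (hne : ∀ f, p f ≠ q f) (ha : 0 < a) (E : Finset β)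
    (hsp : ∀ X : Finset V, 2 ≤ X.card → (edgesIn ends E X).card ≤ a * (X.card - 1)) :
    ∀ E' : Finset β, E' ⊆ E → ∃ c : β → Fin a, ValidC ends E' c := by
  intro E'
  induction E' using Finset.strongInduction with
  | _ E' IHE =>
  intro hE'E
  rcases Finset.eq_empty_or_nonempty E' with rfl | ⟨e, heE'⟩
  · refine ⟨fun _ => ⟨0, ha⟩, fun i X hX => ?_⟩
    have h1 : part (∅ : Finset β) (fun _ => (⟨0, ha⟩ : Fin a)) i = ∅ :=
      Finset.subset_empty.1 (part_subset _ _ _)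
    rw [h1]
    have h2 : edgesIn ends (∅ : Finset β) X = ∅ :=
      Finset.subset_empty.1 (edgesIn_subset _ _)
    rw [h2]
    simp
  set D := E'.erase e with hDdef
  have hDss : D ⊂ E' := Finset.erase_ssubset heE'
  obtain ⟨c, hval⟩ := IHE D hDss (le_trans (Finset.erase_subset _ _) hE'E)
  by_cases hex : ∃ n f, ReachN ends p q D e c n f ∧ Addable ends p q D c f
  · obtain ⟨n, f, hre, hadd⟩ := hex
    obtain ⟨c₂, hval₂, j, hnot⟩ := aug p q hpq D e n c hval ⟨f, hre, hadd⟩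
    refine ⟨Function.update c₂ e j, fun i => ?_⟩
    have hpart : ∀ i : Fin a, part E' (Function.update c₂ e j) i =
        if i = j then insert e (part D c₂ i) else part D c₂ i := by
      intro i
      ext g
      simp only [mem_part]
      by_cases hg : g = e
      · subst hg
        by_cases hij : i = j
        · simp [hij, Function.update_self, heE']
        · simp only [Function.update_self, if_neg hij]
          constructor
          · rintro ⟨-, h⟩; exact absurd h (fun hh => hij hh.symm)
          · intro h
            exact absurd (mem_part.1 h).1 (Finset.notMem_erase _ _)
      · have hgD : g ∈ E' ↔ g ∈ D := by
          simp [hDdef, Finset.mem_erase, hg]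
        by_cases hij : i = j
        · simp [hij, Function.update_of_ne hg, hg, hgD, Finset.mem_insert, mem_part]
        · simp [if_neg hij, Function.update_of_ne hg, hgD, mem_part]
    rw [hpart i]
    by_cases hij : i = j
    · rw [if_pos hij, hij]
      exact forest_insert (hval₂ j) (hpq e) hnot
    · rw [if_neg hij]
      exact hval₂ i
  · -- no augmenting chain : contradiction with sparsity
    exfalso
    push_neg at hex
    set S := E'.filter (fun f => ∃ n, ReachN ends p q D e c n f) with hSdef
    have hmemS : ∀ f, f ∈ S ↔ f ∈ E' ∧ ∃ n, ReachN ends p q D e c n f := by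
      intro f; simp [hSdef]
    have heS : e ∈ S := (hmemS e).2 ⟨heE', 0, rfl⟩
    have hSE' : S ⊆ E' := Finset.filter_subset _ _
    have hSclosed : ∀ f ∈ S, ∀ g, Arc ends p q D c f g → g ∈ S := by
      intro f hf g harc
      obtain ⟨-, n, hn⟩ := (hmemS f).1 hf
      obtain ⟨j, hgj, hb1, hb2⟩ := harc
      have harc : Arc ends p q D c f g := ⟨j, hgj, hb1, hb2⟩
      refine (hmemS g).2 ⟨le_trans (part_subset D c j) (Finset.erase_subset _ _) hgj,
        n + 1, reachN_succ.2 (Or.inr ⟨f, hn, harc⟩)⟩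
    have hblocked : ∀ f ∈ S, ∀ i, GReach ends (part D c i) (p f) (q f) := by
      intro f hf i
      obtain ⟨-, n, hn⟩ := (hmemS f).1 hf
      by_contra hcon
      exact hex n f hn ⟨i, hcon⟩
    have hclaim1 : ∀ f ∈ S, ∀ i, GReach ends (part D c i ∩ S) (p f) (q f) := by
      intro f hf i
      have hcrit := forest_crit (hval i) (hblocked f hf i)
      refine greach_mono ?_ hcrit
      intro g hg
      obtain ⟨hgp, hgc⟩ := Finset.mem_filter.1 hg
      exact Finset.mem_inter.2 ⟨hgp, hSclosed f hf g ⟨i, hgp, hblocked f hf i, hgc⟩⟩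
    have hclaim2 : ∀ (i : Fin a) (u w : V), GReach ends S u w →
        GReach ends (part D c i ∩ S) u w := by
      intro i u w h
      induction h with
      | refl => exact greach_refl _
      | @tail b d hub hstep ih =>
        obtain ⟨f, hfS, hf⟩ := hstep
        have hrf := hclaim1 f hfS i
        have : (b = p f ∧ d = q f) ∨ (b = q f ∧ d = p f) := by
          rw [hpq f] at hf; exact Sym2.eq_iff.1 hf.symm
        rcases this with ⟨rfl, rfl⟩ | ⟨rfl, rfl⟩
        · exact greach_trans ih hrf
        · exact greach_trans ih (greach_symm hrf)
    -- lower bound on each colour class within S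
    have hlow : ∀ i : Fin a, Fintype.card V - (comps ends S).card ≤ (part D c i ∩ S).card := by
      intro i
      rw [← sum_card_comps_sub (ends := ends) S]
      calc ∑ X ∈ comps ends S, (X.card - 1)
          ≤ ∑ X ∈ comps ends S, (edgesIn ends (part D c i ∩ S) X).card := by
            apply Finset.sum_le_sum
            intro X hX
            obtain ⟨v, -, rfl⟩ := Finset.mem_image.1 hX
            refine card_conn_le _ _ (fun e' he' => (mem_edgesIn.1 he').2) ?_
            intro x hx y hy
            have hxy : GReach ends S x y :=
              greach_trans (greach_symm (mem_compOf.1 hx)) (mem_compOf.1 hy)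
            have h2 := hclaim2 i x y hxy
            have hcl : Closed ends (part D c i ∩ S) (compOf ends S v) :=
              closed_mono (Finset.inter_subset_right) (comps_closed (compOf_mem_comps S v))
            exact (greach_closed hcl hx h2).2
        _ ≤ (part D c i ∩ S).card := sum_edgesIn_le S _
    -- the colour classes within S partition S.erase e
    have hSerase : S.erase e = Finset.univ.biUnion (fun i => part D c i ∩ S) := by
      ext f
      simp only [Finset.mem_erase, Finset.mem_biUnion, Finset.mem_univ, true_and,
        Finset.mem_inter]
      constructor
      · rintro ⟨hfe, hfS⟩
        have hfD : f ∈ D := Finset.mem_erase.2 ⟨hfe, hSE' hfS⟩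
        exact ⟨c f, mem_part.2 ⟨hfD, rfl⟩, hfS⟩
      · rintro ⟨i, hfp, hfS⟩
        exact ⟨Finset.ne_of_mem_erase (part_subset D c i hfp), hfS⟩
    have hdisjp : ∀ (x : Fin a), x ∈ Finset.univ → ∀ (y : Fin a), y ∈ Finset.univ → x ≠ y →
        Disjoint (part D c x ∩ S) (part D c y ∩ S) := by
      intro x _ y _ hxy
      rw [Finset.disjoint_left]
      intro f hf1 hf2
      exact hxy (((mem_part.1 (Finset.mem_inter.1 hf1).1).2).symm.trans
        (mem_part.1 (Finset.mem_inter.1 hf2).1).2)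
    have hcount1 : S.card - 1 = ∑ i : Fin a, (part D c i ∩ S).card := by
      rw [← Finset.card_erase_of_mem heS, hSerase, Finset.card_biUnion hdisjp]
    -- upper bound via sparsity
    have hupp : S.card ≤ a * (Fintype.card V - (comps ends S).card) := by
      rw [← sum_edgesIn_eq (ends := ends) (Finset.Subset.refl S),
        ← sum_card_comps_sub (ends := ends) S, Finset.mul_sum]
      apply Finset.sum_le_sum
      intro X hX
      by_cases hX2 : 2 ≤ X.card
      · exact le_trans (Finset.card_le_card (edgesIn_mono (le_trans hSE' hE'E) X))
          (hsp X hX2)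
      · have hX1 : X.card = 1 := by
          have := Finset.card_pos.2 (comps_nonempty hX)
          omega
        have : edgesIn ends S X = ∅ := by
          rw [Finset.eq_empty_iff_forall_notMem]
          intro f hf
          have hp : p f ∈ X := (mem_edgesIn.1 hf).2 (p f) (by rw [hpq f]; exact Sym2.mem_mk_left _ _)
          have hq : q f ∈ X := (mem_edgesIn.1 hf).2 (q f) (by rw [hpq f]; exact Sym2.mem_mk_right _ _)
          exact hne f (Finset.card_le_one.1 (le_of_eq hX1) _ hp _ hq)
        rw [this]
        simp
    -- combine
    have hlowsum : a * (Fintype.card V - (comps ends S).card) ≤ S.card - 1 := by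
      rw [hcount1]
      calc a * (Fintype.card V - (comps ends S).card)
          = ∑ _i : Fin a, (Fintype.card V - (comps ends S).card) := by
            rw [Finset.sum_const, Finset.card_univ, Fintype.card_fin, smul_eq_mul]
        _ ≤ ∑ i : Fin a, (part D c i ∩ S).card := Finset.sum_le_sum (fun i _ => hlow i)
    have hS1 : 1 ≤ S.card := Finset.card_pos.2 ⟨e, heS⟩
    omega

end NW

namespace NW
variable {V β : Type} {ends : β → Sym2 V} [Fintype V]

lemma comps_card_le (S : Finset β) : (comps ends S).card ≤ Fintype.card V := by
  rw [← sum_card_comps (ends := ends) S]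
  calc (comps ends S).card = ∑ _X ∈ comps ends S, 1 := by
        rw [Finset.sum_const, smul_eq_mul, mul_one]
    _ ≤ ∑ X ∈ comps ends S, X.card :=
        Finset.sum_le_sum (fun X hX => Finset.card_pos.2 (comps_nonempty hX))

lemma edgesIn_univ (T : Finset β) : edgesIn ends T Finset.univ = T := by
  apply Finset.Subset.antisymm (edgesIn_subset _ _)
  intro e he
  exact mem_edgesIn.2 ⟨he, fun v _ => Finset.mem_univ v⟩

end NW


/-- Let `k ≥ d + 1 ≥ 2` and let `G` be a graph with `|V| = d + 1`, `|E| = kd + d - 1` and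
`γ_f(G) < k + 1`.  Then `G` decomposes into `k + 1` pairwise edge-disjoint spanning forests
of which exactly `k` are spanning trees and exactly one has exactly two components. -/
theorem sharpness_decomposition {V β : Type} [Fintype V] [Nonempty V] [Fintype β]
    (ends : β → Sym2 V) (hloopless : ∀ e : β, ¬(ends e).IsDiag)
    (k d : ℕ) (hd : 2 ≤ d + 1) (hk : d + 1 ≤ k)
    (hV : Fintype.card V = d + 1) (hE : Fintype.card β = k * d + d - 1)
    (hγ : ∀ X : Finset V, 1 < X.card →
      ((edgesIn ends (Finset.univ : Finset β) X).card : ℚ) / ((X.card : ℚ) - 1) <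
        (k : ℚ) + 1) :
    ∃ F : Fin (k + 1) → Finset β,
      (∀ i j, i ≠ j → Disjoint (F i) (F j)) ∧
      (Finset.univ.biUnion F = (Finset.univ : Finset β)) ∧
      (∀ i, IsForest ends (F i)) ∧
      (Finset.univ.filter fun i => IsSpanningTree ends (F i)).card = k ∧
      (Finset.univ.filter fun i => HasExactlyTwoComponents ends (F i)).card = 1 := by
  classical
  have hd1 : 1 ≤ d := by omega
  -- choose endpoints for each edge
  have hex : ∀ f : β, ∃ x : V, ∃ y : V, ends f = s(x, y) := by
    intro f
    obtain ⟨⟨x, y⟩, h⟩ := (ends f).exists_rep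
    exact ⟨x, y, h.symm⟩
  choose p q hpq using hex
  have hne : ∀ f, p f ≠ q f := by
    intro f h
    exact hloopless f (by rw [hpq f, h]; exact Sym2.isDiag_iff_proj_eq.2 rfl)
  -- sparsity in ℕ form
  have hsp : ∀ X : Finset V, 2 ≤ X.card →
      (edgesIn ends (Finset.univ : Finset β) X).card ≤ (k + 1) * (X.card - 1) := by
    intro X hX2
    have h2q : (2 : ℚ) ≤ (X.card : ℚ) := by exact_mod_cast hX2
    have hlt := hγ X (by omega)
    rw [div_lt_iff₀ (by linarith)] at hlt
    have hcast : ((k : ℚ) + 1) * ((X.card : ℚ) - 1) = (((k + 1) * (X.card - 1) : ℕ) : ℚ) := by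
      push_cast [Nat.cast_sub (by omega : 1 ≤ X.card)]
      ring
    rw [hcast] at hlt
    exact le_of_lt (by exact_mod_cast hlt)
  obtain ⟨c, hval⟩ := NW.nw_exists p q hpq hne (a := k + 1) (Nat.succ_pos k)
    (Finset.univ : Finset β) hsp (Finset.univ : Finset β) (Finset.Subset.refl _)
  set F : Fin (k + 1) → Finset β := fun i => NW.part Finset.univ c i with hFdef
  have hforest : ∀ i, IsForest ends (F i) := hval
  have hdisj : ∀ i j, i ≠ j → Disjoint (F i) (F j) := by
    intro i j hij
    rw [Finset.disjoint_left]
    intro f hfi hfj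
    exact hij ((NW.mem_part.1 hfi).2.symm.trans (NW.mem_part.1 hfj).2)
  have hbiU : Finset.univ.biUnion F = (Finset.univ : Finset β) := by
    apply Finset.eq_univ_of_forall
    intro f
    exact Finset.mem_biUnion.2 ⟨c f, Finset.mem_univ _,
      NW.mem_part.2 ⟨Finset.mem_univ f, rfl⟩⟩
  -- cardinalities
  have hcard_le : ∀ i, (F i).card ≤ d := by
    intro i
    have := hforest i Finset.univ Finset.univ_nonempty
    rw [NW.edgesIn_univ, Finset.card_univ, hV] at this
    omega
  have hsumcard : ∑ i : Fin (k + 1), (F i).card = (k + 1) * d - 1 := by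
    have h1 : (Finset.univ.biUnion F).card = ∑ i : Fin (k + 1), (F i).card :=
      Finset.card_biUnion (fun i _ j _ hij => hdisj i j hij)
    rw [hbiU, Finset.card_univ, hE] at h1
    have : k * d + d - 1 = (k + 1) * d - 1 := by ring_nf
    omega
  -- find the defective index
  have hgsum : ∑ i : Fin (k + 1), (d - (F i).card) = 1 := by
    have h1 : ∑ i : Fin (k + 1), ((d - (F i).card) + (F i).card)
        = ∑ _i : Fin (k + 1), d := by
      apply Finset.sum_congr rfl
      intro i _
      have := hcard_le i
      omega
    rw [Finset.sum_add_distrib, Finset.sum_const, Finset.card_univ, Fintype.card_fin,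
      smul_eq_mul] at h1
    have hkd : 0 < (k + 1) * d := Nat.mul_pos (Nat.succ_pos k) hd1
    omega
  obtain ⟨i₀, -, hi₀ne⟩ := Finset.exists_ne_zero_of_sum_ne_zero
    (by rw [hgsum]; exact one_ne_zero :
      ∑ i : Fin (k + 1), (d - (F i).card) ≠ 0)
  have hgi₀ : d - (F i₀).card = 1 := by
    have hle : d - (F i₀).card ≤ 1 := by
      rw [← hgsum]
      exact Finset.single_le_sum (f := fun i => d - (F i).card) (fun i _ => Nat.zero_le _)
        (Finset.mem_univ i₀)
    omega
  have hi₀card : (F i₀).card = d - 1 := by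
    have := hcard_le i₀
    omega
  have hrest : ∀ j, j ≠ i₀ → (F j).card = d := by
    intro j hj
    have herase : ∑ i ∈ Finset.univ.erase i₀, (d - (F i).card) = 0 := by
      have h := Finset.add_sum_erase Finset.univ (fun i => d - (F i).card) (Finset.mem_univ i₀)
      omega
    have hj0 : d - (F j).card = 0 :=
      (Finset.sum_eq_zero_iff.1 herase) j (Finset.mem_erase.2 ⟨hj, Finset.mem_univ j⟩)
    have := hcard_le j
    omega
  -- the big classes are spanning trees
  have hconn : ∀ j, j ≠ i₀ → ∀ u w : V, GReach ends (F j) u w := by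
    intro j hj
    by_contra hcon
    push_neg at hcon
    obtain ⟨u, w, hnr⟩ := hcon
    have h2 := NW.comps_two hnr
    have h3 := NW.forest_card_le (hforest j)
    rw [hrest j hj, hV] at h3
    omega
  have hi₀nconn : ¬∀ u w : V, GReach ends (F i₀) u w := by
    intro hcon
    have := NW.conn_card_ge hcon
    rw [hi₀card, hV] at this
    omega
  have htwo : HasExactlyTwoComponents ends (F i₀) := by
    push_neg at hi₀nconn
    obtain ⟨u, w, hnr⟩ := hi₀nconn
    refine ⟨u, w, hnr, fun v => ?_⟩
    by_contra hcon
    push_neg at hcon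
    obtain ⟨hvu, hvw⟩ := hcon
    have h3 := NW.comps_three hnr hvu hvw
    have h4 := NW.forest_card_le (hforest i₀)
    have h5 := NW.comps_card_le (ends := ends) (F i₀)
    rw [hi₀card, hV] at h4
    rw [hV] at h5
    omega
  -- characterisations
  have htreeiff : ∀ i, IsSpanningTree ends (F i) ↔ i ≠ i₀ := by
    intro i
    constructor
    · rintro ⟨-, hc⟩ rfl
      exact hi₀nconn hc
    · intro hi
      exact ⟨hforest i, hconn i hi⟩
  have htwoiff : ∀ i, HasExactlyTwoComponents ends (F i) ↔ i = i₀ := by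
    intro i
    constructor
    · rintro ⟨u, w, hnr, -⟩
      by_contra hi
      exact hnr (hconn i hi u w)
    · rintro rfl
      exact htwo
  refine ⟨F, hdisj, hbiU, hforest, ?_, ?_⟩
  · have : (Finset.univ.filter fun i => IsSpanningTree ends (F i))
        = Finset.univ.erase i₀ := by
      ext i
      simp only [Finset.mem_filter, Finset.mem_univ, true_and, Finset.mem_erase, and_true]
      exact htreeiff i
    rw [this, Finset.card_erase_of_mem (Finset.mem_univ i₀), Finset.card_univ,
      Fintype.card_fin]
    omega
  · have : (Finset.univ.filter fun i => HasExactlyTwoComponents ends (F i))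
        = {i₀} := by
      ext i
      simp only [Finset.mem_filter, Finset.mem_univ, true_and, Finset.mem_singleton]
      exact htwoiff i
    rw [this, Finset.card_singleton]
end

section
/- A graph G can be decomposed into k edge-disjoint forests if and only if γ_f(G) ≤ k. -/
/-!
Graphs may have parallel edges but no loops.  We model a graph `G = (V, E)` by a finite
vertex type `V`, a finite edge type `β` and a map `ends : β → Sym2 V` giving the pair of
endpoints of each edge, with `¬(ends e).IsDiag` (no loops).  Subgraphs spanning `V` are
given by their edge sets (`Finset β`).
-/

attribute [local instance] Classical.propDecidable

section NWaux
variable {V β : Type} {ends : β → Sym2 V}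

lemma sym2_exists (z : Sym2 V) : ∃ a b, z = s(a, b) :=
  Sym2.ind (fun a b => ⟨a, b, rfl⟩) z

lemma gstep_symm {F : Finset β} {u w : V} (h : GStep ends F u w) : GStep ends F w u := by
  obtain ⟨e, he, h2⟩ := h
  exact ⟨e, he, by rw [h2, Sym2.eq_swap]⟩

lemma greach_refl {F : Finset β} {u : V} : GReach ends F u u := Relation.ReflTransGen.refl

lemma greach_symm {F : Finset β} {u w : V} (h : GReach ends F u w) : GReach ends F w u :=
  @Std.Symm.symm _ _ (@Relation.ReflTransGen.stdSymm _ _ ⟨fun _ _ => gstep_symm⟩) _ _ h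

lemma greach_trans {F : Finset β} {u v w : V} (h : GReach ends F u v)
    (h' : GReach ends F v w) : GReach ends F u w := Relation.ReflTransGen.trans h h'

lemma greach_single {F : Finset β} {e : β} {u w : V} (he : e ∈ F) (h : ends e = s(u, w)) :
    GReach ends F u w := Relation.ReflTransGen.single ⟨e, he, h⟩

lemma greach_mono {F F' : Finset β} (hFF : F ⊆ F') {u w : V} (h : GReach ends F u w) :
    GReach ends F' u w := by
  refine Relation.ReflTransGen.mono ?_ _ _ h
  rintro x y ⟨e, he, h2⟩
  exact ⟨e, hFF he, h2⟩

lemma greach_eq_of_empty {u w : V} (h : GReach ends (∅ : Finset β) u w) : u = w := by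
  induction h with
  | refl => rfl
  | tail _ h2 _ => obtain ⟨e, he, _⟩ := h2; exact absurd he (Finset.notMem_empty e)

lemma edgesIn_subset {F : Finset β} {X : Finset V} : edgesIn ends F X ⊆ F :=
  Finset.filter_subset _ _

lemma mem_edgesIn {F : Finset β} {X : Finset V} {e : β} :
    e ∈ edgesIn ends F X ↔ e ∈ F ∧ ∀ v ∈ ends e, v ∈ X := Finset.mem_filter

lemma edgesIn_mono_left {F G : Finset β} {X : Finset V} (h : F ⊆ G) :
    edgesIn ends F X ⊆ edgesIn ends G X := by
  intro e he
  rw [mem_edgesIn] at *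
  exact ⟨h he.1, he.2⟩

lemma edgesIn_mono_right {F : Finset β} {X Y : Finset V} (h : X ⊆ Y) :
    edgesIn ends F X ⊆ edgesIn ends F Y := by
  intro e he
  rw [mem_edgesIn] at *
  exact ⟨he.1, fun v hv => h (he.2 v hv)⟩

lemma greach_edgesIn_idem {A : Finset β} {X : Finset V}
    (hA : ∀ e ∈ A, ∀ v ∈ ends e, v ∈ X) : edgesIn ends A X = A := by
  apply Finset.filter_true_of_mem hA

/-- rerouting: replace uses of edge `g` by a detour from `a` to `b`. -/
lemma greach_reroute {S T : Finset β} {g : β} {a b u w : V} (hg : ends g = s(a, b))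
    (hsub : S.erase g ⊆ T) (hab : GReach ends T a b) (h : GReach ends S u w) :
    GReach ends T u w := by
  induction h with
  | refl => exact greach_refl
  | tail _ h2 ih =>
    refine greach_trans ih ?_
    obtain ⟨e, heS, he⟩ := h2
    by_cases heg : e = g
    · subst heg
      rw [hg] at he
      rcases Sym2.eq_iff.mp he with ⟨rfl, rfl⟩ | ⟨rfl, rfl⟩
      · exact hab
      · exact greach_symm hab
    · exact greach_single (hsub (Finset.mem_erase.mpr ⟨heg, heS⟩)) he

/-- decomposition of a walk at an edge `g`. -/
lemma greach_erase_decomp {S : Finset β} {g : β} {a b u w : V} (hg : ends g = s(a, b))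
    (h : GReach ends S u w) :
    GReach ends (S.erase g) u w ∨
    (GReach ends (S.erase g) u a ∧ GReach ends (S.erase g) b w) ∨
    (GReach ends (S.erase g) u b ∧ GReach ends (S.erase g) a w) := by
  induction h with
  | refl => exact Or.inl greach_refl
  | tail _ h2 ih =>
    obtain ⟨e, heS, he⟩ := h2
    by_cases heg : e = g
    · subst heg
      rw [hg] at he
      rcases Sym2.eq_iff.mp he with ⟨rfl, rfl⟩ | ⟨rfl, rfl⟩
      · -- step from a to b
        rcases ih with h1 | ⟨h1, _⟩ | ⟨h1, _⟩
        · exact Or.inr (Or.inl ⟨h1, greach_refl⟩)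
        · exact Or.inr (Or.inl ⟨h1, greach_refl⟩)
        · exact Or.inl h1
      · -- step from b to a
        rcases ih with h1 | ⟨h1, _⟩ | ⟨h1, _⟩
        · exact Or.inr (Or.inr ⟨h1, greach_refl⟩)
        · exact Or.inl h1
        · exact Or.inr (Or.inr ⟨h1, greach_refl⟩)
    · have hstep : GStep ends (S.erase g) _ _ := ⟨e, Finset.mem_erase.mpr ⟨heg, heS⟩, he⟩
      rcases ih with h1 | ⟨h1, h2'⟩ | ⟨h1, h2'⟩
      · exact Or.inl (h1.tail hstep)
      · exact Or.inr (Or.inl ⟨h1, h2'.tail hstep⟩)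
      · exact Or.inr (Or.inr ⟨h1, h2'.tail hstep⟩)

/-- walks from a point of a closed set stay inside and use inside edges. -/
lemma greach_closed {S : Finset β} {X : Finset V} {u w : V}
    (hc : ∀ e ∈ S, ∀ x y, ends e = s(x, y) → x ∈ X → y ∈ X) (hu : u ∈ X)
    (h : GReach ends S u w) : w ∈ X ∧ GReach ends (edgesIn ends S X) u w := by
  induction h with
  | refl => exact ⟨hu, greach_refl⟩
  | tail _ h2 ih =>
    obtain ⟨e, heS, he⟩ := h2
    rename_i x y _
    have hyX : y ∈ X := hc e heS x y he ih.1
    have heX : e ∈ edgesIn ends S X := by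
      rw [mem_edgesIn]
      refine ⟨heS, fun v hv => ?_⟩
      rw [he, Sym2.mem_iff] at hv
      rcases hv with rfl | rfl
      · exact ih.1
      · exact hyX
    exact ⟨hyX, ih.2.tail ⟨e, heX, he⟩⟩

end NWaux


section NWaux2
variable {V β : Type} {ends : β → Sym2 V}

/-- a connected set `X` needs at least `|X| - 1` edges. -/
lemma con_card :
    ∀ (n : ℕ) (A : Finset β) (X : Finset V), A.card ≤ n →
      (∀ e ∈ A, ∀ v ∈ ends e, v ∈ X) → X.Nonempty →
      (∀ u ∈ X, ∀ w ∈ X, GReach ends A u w) → X.card ≤ A.card + 1 := by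
  intro n
  induction n with
  | zero =>
    intro A X hcard hin hne hcon
    have hA : A = ∅ := Finset.card_eq_zero.mp (Nat.le_zero.mp hcard)
    subst hA
    obtain ⟨u, hu⟩ := hne
    have : X ⊆ {u} := fun w hw => Finset.mem_singleton.mpr
      (greach_eq_of_empty (hcon w hw u hu))
    simpa using Finset.card_le_card this
  | succ n ih =>
    intro A X hcard hin hne hcon
    by_cases hA : A = ∅
    · subst hA
      obtain ⟨u, hu⟩ := hne
      have : X ⊆ {u} := fun w hw => Finset.mem_singleton.mpr
        (greach_eq_of_empty (hcon w hw u hu))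
      have := Finset.card_le_card this
      simp only [Finset.card_singleton] at this
      omega
    · obtain ⟨e, heA⟩ := Finset.nonempty_iff_ne_empty.mpr hA
      obtain ⟨p, q, hpq⟩ := sym2_exists (ends e)
      have hpX : p ∈ X := hin e heA p (by rw [hpq]; exact Sym2.mem_mk_left p q)
      have hqX : q ∈ X := hin e heA q (by rw [hpq]; exact Sym2.mem_mk_right p q)
      set A' := A.erase e with hA'
      have hA'sub : A' ⊆ A := Finset.erase_subset _ _
      have hA'card : A'.card = A.card - 1 := Finset.card_erase_of_mem heA
      have hAcard_pos : 1 ≤ A.card := Finset.card_pos.mpr ⟨e, heA⟩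
      have hin' : ∀ e' ∈ A', ∀ v ∈ ends e', v ∈ X := fun e' he' => hin e' (hA'sub he')
      by_cases hreach : GReach ends A' p q
      · -- reroute all walks to avoid e
        have hcon' : ∀ u ∈ X, ∀ w ∈ X, GReach ends A' u w := by
          intro u hu w hw
          refine greach_reroute hpq ?_ hreach (hcon u hu w hw)
          rw [hA']
        have := ih A' X (by omega) hin' hne hcon'
        omega
      · -- split into two components
        set Xp := X.filter (fun w => GReach ends A' p w) with hXp
        set Xq := X.filter (fun w => GReach ends A' q w) with hXq
        have hXpX : Xp ⊆ X := Finset.filter_subset _ _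
        have hXqX : Xq ⊆ X := Finset.filter_subset _ _
        have hpXp : p ∈ Xp := Finset.mem_filter.mpr ⟨hpX, greach_refl⟩
        have hqXq : q ∈ Xq := Finset.mem_filter.mpr ⟨hqX, greach_refl⟩
        have hdisj : Disjoint Xp Xq := by
          rw [Finset.disjoint_left]
          intro w hw hw'
          exact hreach (greach_trans (Finset.mem_filter.mp hw).2
            (greach_symm (Finset.mem_filter.mp hw').2))
        have hcover : X = Xp ∪ Xq := by
          apply Finset.Subset.antisymm
          · intro w hw
            have := hcon p hpX w hw
            rcases greach_erase_decomp hpq this with h1 | ⟨h1, h2⟩ | ⟨h1, h2⟩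
            · exact Finset.mem_union_left _ (Finset.mem_filter.mpr ⟨hw, h1⟩)
            · exact Finset.mem_union_right _ (Finset.mem_filter.mpr ⟨hw, h2⟩)
            · exact absurd h1 hreach
          · exact Finset.union_subset hXpX hXqX
        -- closure of Xp, Xq under A' steps
        have hclp : ∀ e' ∈ A', ∀ x y, ends e' = s(x, y) → x ∈ Xp → y ∈ Xp := by
          intro e' he' x y hxy hx
          have hyX : y ∈ X := hin' e' he' y (by rw [hxy]; exact Sym2.mem_mk_right x y)
          exact Finset.mem_filter.mpr ⟨hyX,
            greach_trans (Finset.mem_filter.mp hx).2 (greach_single he' hxy)⟩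
        have hclq : ∀ e' ∈ A', ∀ x y, ends e' = s(x, y) → x ∈ Xq → y ∈ Xq := by
          intro e' he' x y hxy hx
          have hyX : y ∈ X := hin' e' he' y (by rw [hxy]; exact Sym2.mem_mk_right x y)
          exact Finset.mem_filter.mpr ⟨hyX,
            greach_trans (Finset.mem_filter.mp hx).2 (greach_single he' hxy)⟩
        set Ap := edgesIn ends A' Xp with hAp
        set Aq := edgesIn ends A' Xq with hAq
        have hA'split : A' ⊆ Ap ∪ Aq := by
          intro e' he'
          obtain ⟨x, y, hxy⟩ := sym2_exists (ends e')
          have hxX : x ∈ X := hin' e' he' x (by rw [hxy]; exact Sym2.mem_mk_left x y)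
          have hends : ∀ v ∈ ends e', v = x ∨ v = y := by
            intro v hv; rw [hxy, Sym2.mem_iff] at hv; exact hv
          rcases Finset.mem_union.mp (hcover ▸ hxX) with hx | hx
          · have hy : y ∈ Xp := hclp e' he' x y hxy hx
            refine Finset.mem_union_left _ (mem_edgesIn.mpr ⟨he', fun v hv => ?_⟩)
            rcases hends v hv with rfl | rfl
            · exact hx
            · exact hy
          · have hy : y ∈ Xq := hclq e' he' x y hxy hx
            refine Finset.mem_union_right _ (mem_edgesIn.mpr ⟨he', fun v hv => ?_⟩)
            rcases hends v hv with rfl | rfl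
            · exact hx
            · exact hy
        have hApAqdisj : Disjoint Ap Aq := by
          rw [Finset.disjoint_left]
          intro e' hep heq
          obtain ⟨x, y, hxy⟩ := sym2_exists (ends e')
          have hx1 : x ∈ Xp := (mem_edgesIn.mp hep).2 x (by rw [hxy]; exact Sym2.mem_mk_left x y)
          have hx2 : x ∈ Xq := (mem_edgesIn.mp heq).2 x (by rw [hxy]; exact Sym2.mem_mk_left x y)
          exact Finset.disjoint_left.mp hdisj hx1 hx2
        -- connectivity of Xp via Ap
        have hconp : ∀ u ∈ Xp, ∀ w ∈ Xp, GReach ends Ap u w := by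
          intro u hu w hw
          have h1 : GReach ends A' u w := greach_trans
            (greach_symm (Finset.mem_filter.mp hu).2) (Finset.mem_filter.mp hw).2
          exact (greach_closed hclp hu h1).2
        have hconq : ∀ u ∈ Xq, ∀ w ∈ Xq, GReach ends Aq u w := by
          intro u hu w hw
          have h1 : GReach ends A' u w := greach_trans
            (greach_symm (Finset.mem_filter.mp hu).2) (Finset.mem_filter.mp hw).2
          exact (greach_closed hclq hu h1).2
        have hinp : ∀ e' ∈ Ap, ∀ v ∈ ends e', v ∈ Xp := fun e' he' => (mem_edgesIn.mp he').2
        have hinq : ∀ e' ∈ Aq, ∀ v ∈ ends e', v ∈ Xq := fun e' he' => (mem_edgesIn.mp he').2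
        have hApsub : Ap ⊆ A' := edgesIn_subset
        have hAqsub : Aq ⊆ A' := edgesIn_subset
        have h1 := ih Ap Xp (by have := Finset.card_le_card hApsub; omega) hinp ⟨p, hpXp⟩ hconp
        have h2 := ih Aq Xq (by have := Finset.card_le_card hAqsub; omega) hinq ⟨q, hqXq⟩ hconq
        have hcardX : X.card = Xp.card + Xq.card := by
          rw [hcover, Finset.card_union_of_disjoint hdisj]
        have hcardA' : Ap.card + Aq.card ≤ A'.card := by
          rw [← Finset.card_union_of_disjoint hApAqdisj]
          exact Finset.card_le_card (Finset.union_subset hApsub hAqsub)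
        omega

end NWaux2

section NWaux3
variable {V β : Type} {ends : β → Sym2 V}

/-- if `a, b ∈ X` are not connected inside `X` by `F`, then `F` spans few edges in `X`. -/
lemma card_edgesIn_le_of_not_reach {F : Finset β} {X : Finset V} {a b : V}
    (hF : IsForest ends F) (ha : a ∈ X) (hb : b ∈ X)
    (hnr : ¬ GReach ends (edgesIn ends F X) a b) :
    (edgesIn ends F X).card + 2 ≤ X.card := by
  set A := edgesIn ends F X with hA
  set Xa := X.filter (fun w => GReach ends A a w) with hXa
  have hXaX : Xa ⊆ X := Finset.filter_subset _ _
  have haXa : a ∈ Xa := Finset.mem_filter.mpr ⟨ha, greach_refl⟩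
  have hbXa : b ∈ X \ Xa := Finset.mem_sdiff.mpr ⟨hb, fun hbb =>
    hnr (Finset.mem_filter.mp hbb).2⟩
  have hAin : ∀ e ∈ A, ∀ v ∈ ends e, v ∈ X := fun e he => (mem_edgesIn.mp he).2
  have hcl : ∀ e ∈ A, ∀ x y, ends e = s(x, y) → x ∈ Xa → y ∈ Xa := by
    intro e he x y hxy hx
    have hyX : y ∈ X := hAin e he y (by rw [hxy]; exact Sym2.mem_mk_right x y)
    exact Finset.mem_filter.mpr ⟨hyX,
      greach_trans (Finset.mem_filter.mp hx).2 (greach_single he hxy)⟩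
  have hsplit : A ⊆ edgesIn ends F Xa ∪ edgesIn ends F (X \ Xa) := by
    intro e he
    obtain ⟨x, y, hxy⟩ := sym2_exists (ends e)
    have hxX : x ∈ X := hAin e he x (by rw [hxy]; exact Sym2.mem_mk_left x y)
    have hyX : y ∈ X := hAin e he y (by rw [hxy]; exact Sym2.mem_mk_right x y)
    have heF : e ∈ F := edgesIn_subset (hA ▸ he)
    have hends : ∀ v ∈ ends e, v = x ∨ v = y := by
      intro v hv; rw [hxy, Sym2.mem_iff] at hv; exact hv
    by_cases hx : x ∈ Xa
    · have hy : y ∈ Xa := hcl e he x y hxy hx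
      refine Finset.mem_union_left _ (mem_edgesIn.mpr ⟨heF, fun v hv => ?_⟩)
      rcases hends v hv with rfl | rfl
      · exact hx
      · exact hy
    · have hy : y ∉ Xa := by
        intro hy
        exact hx (hcl e he y x (by rw [hxy, Sym2.eq_swap]) hy)
      refine Finset.mem_union_right _ (mem_edgesIn.mpr ⟨heF, fun v hv => ?_⟩)
      rcases hends v hv with rfl | rfl
      · exact Finset.mem_sdiff.mpr ⟨hxX, hx⟩
      · exact Finset.mem_sdiff.mpr ⟨hyX, hy⟩
  have hdisj : Disjoint (edgesIn ends F Xa) (edgesIn ends F (X \ Xa)) := by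
    rw [Finset.disjoint_left]
    intro e h1 h2
    obtain ⟨x, y, hxy⟩ := sym2_exists (ends e)
    have hx1 : x ∈ Xa := (mem_edgesIn.mp h1).2 x (by rw [hxy]; exact Sym2.mem_mk_left x y)
    have hx2 : x ∈ X \ Xa := (mem_edgesIn.mp h2).2 x (by rw [hxy]; exact Sym2.mem_mk_left x y)
    exact (Finset.mem_sdiff.mp hx2).2 hx1
  have hb1 := hF Xa ⟨a, haXa⟩
  have hb2 := hF (X \ Xa) ⟨b, hbXa⟩
  have hcard : A.card ≤ (edgesIn ends F Xa).card + (edgesIn ends F (X \ Xa)).card := by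
    rw [← Finset.card_union_of_disjoint hdisj]
    exact Finset.card_le_card hsplit
  have h1 : 1 ≤ Xa.card := Finset.card_pos.mpr ⟨a, haXa⟩
  have h2 : 1 ≤ (X \ Xa).card := Finset.card_pos.mpr ⟨b, hbXa⟩
  have h3 : (X \ Xa).card = X.card - Xa.card := Finset.card_sdiff_of_subset hXaX
  have h4 : Xa.card ≤ X.card := Finset.card_le_card hXaX
  omega

/-- adding an edge between different components preserves forests. -/
lemma isForest_insert {F : Finset β} {e : β} {a b : V} (hF : IsForest ends F)
    (he : ends e = s(a, b)) (hnab : ¬ GReach ends F a b) : IsForest ends (insert e F) := by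
  intro X hX
  by_cases hin : ∀ v ∈ ends e, v ∈ X
  · have ha : a ∈ X := hin a (by rw [he]; exact Sym2.mem_mk_left a b)
    have hb : b ∈ X := hin b (by rw [he]; exact Sym2.mem_mk_right a b)
    have hnr : ¬ GReach ends (edgesIn ends F X) a b := fun h =>
      hnab (greach_mono edgesIn_subset h)
    have hkey := card_edgesIn_le_of_not_reach hF ha hb hnr
    have hsub : edgesIn ends (insert e F) X ⊆ insert e (edgesIn ends F X) := by
      intro f hf
      rcases Finset.mem_insert.mp (mem_edgesIn.mp hf).1 with rfl | hfF
      · exact Finset.mem_insert_self _ _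
      · exact Finset.mem_insert_of_mem (mem_edgesIn.mpr ⟨hfF, (mem_edgesIn.mp hf).2⟩)
    have := Finset.card_le_card hsub
    have hci := Finset.card_insert_le e (edgesIn ends F X)
    omega
  · have heq : edgesIn ends (insert e F) X = edgesIn ends F X := by
      ext f
      simp only [mem_edgesIn, Finset.mem_insert]
      constructor
      · rintro ⟨rfl | hfF, h2⟩
        · exact absurd h2 hin
        · exact ⟨hfF, h2⟩
      · rintro ⟨hfF, h2⟩
        exact ⟨Or.inr hfF, h2⟩
    rw [heq]
    exact hF X hX

/-- in a forest, no edge is on a cycle: removing it disconnects its endpoints. -/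
lemma forest_no_cycle [Fintype V] {F : Finset β} {e : β} {a b : V} (hF : IsForest ends F)
    (heF : e ∈ F) (he : ends e = s(a, b)) : ¬ GReach ends (F.erase e) a b := by
  intro hreach
  set C := (Finset.univ.filter (fun w => GReach ends (F.erase e) a w) : Finset V) with hC
  classical
  have haC : a ∈ C := Finset.mem_filter.mpr ⟨Finset.mem_univ _, greach_refl⟩
  have hbC : b ∈ C := Finset.mem_filter.mpr ⟨Finset.mem_univ _, hreach⟩
  have hcl : ∀ f ∈ F.erase e, ∀ x y, ends f = s(x, y) → x ∈ C → y ∈ C := by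
    intro f hf x y hxy hx
    exact Finset.mem_filter.mpr ⟨Finset.mem_univ _,
      greach_trans (Finset.mem_filter.mp hx).2 (greach_single hf hxy)⟩
  set A := edgesIn ends (F.erase e) C with hA
  have hcon : ∀ u ∈ C, ∀ w ∈ C, GReach ends A u w := by
    intro u hu w hw
    have h1 : GReach ends (F.erase e) u w := greach_trans
      (greach_symm (Finset.mem_filter.mp hu).2) (Finset.mem_filter.mp hw).2
    exact (greach_closed hcl hu h1).2
  have hAin : ∀ f ∈ A, ∀ v ∈ ends f, v ∈ C := fun f hf => (mem_edgesIn.mp hf).2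
  have hbound := con_card A.card A C le_rfl hAin ⟨a, haC⟩ hcon
  have heC : e ∈ edgesIn ends F C := by
    refine mem_edgesIn.mpr ⟨heF, fun v hv => ?_⟩
    rw [he, Sym2.mem_iff] at hv
    rcases hv with rfl | rfl
    · exact haC
    · exact hbC
  have hins : insert e A ⊆ edgesIn ends F C := by
    intro f hf
    rcases Finset.mem_insert.mp hf with rfl | hfA
    · exact heC
    · exact edgesIn_mono_left (Finset.erase_subset _ _) (hA ▸ hfA)
  have heA : e ∉ A := fun h => (Finset.mem_erase.mp (edgesIn_subset (hA ▸ h))).1 rfl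
  have hcard : A.card + 1 ≤ (edgesIn ends F C).card := by
    rw [← Finset.card_insert_of_notMem heA]
    exact Finset.card_le_card hins
  have hforest := hF C ⟨a, haC⟩
  have hCpos : 1 ≤ C.card := Finset.card_pos.mpr ⟨a, haC⟩
  omega

/-- in a forest, connected vertices are connected through `(u,v)`-bridges. -/
lemma exists_bridge_subset [Fintype V] {F : Finset β} {u v : V} (hF : IsForest ends F)
    (h : GReach ends F u v) :
    ∃ F₀ ⊆ F, GReach ends F₀ u v ∧ ∀ g ∈ F₀, ¬ GReach ends (F.erase g) u v := by
  classical
  set s := F.powerset.filter (fun S => GReach ends S u v) with hs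
  have hsne : s.Nonempty := ⟨F, Finset.mem_filter.mpr ⟨Finset.mem_powerset_self F, h⟩⟩
  obtain ⟨F₀, hF₀s, hmin⟩ := Finset.exists_min_image s Finset.card hsne
  have hF₀F : F₀ ⊆ F := Finset.mem_powerset.mp (Finset.mem_filter.mp hF₀s).1
  have hF₀r : GReach ends F₀ u v := (Finset.mem_filter.mp hF₀s).2
  refine ⟨F₀, hF₀F, hF₀r, fun g hg hcon => ?_⟩
  obtain ⟨a, b, hab⟩ := sym2_exists (ends g)
  -- minimality: g is a bridge within F₀
  have hbr : ¬ GReach ends (F₀.erase g) u v := by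
    intro hr
    have hmem : F₀.erase g ∈ s := Finset.mem_filter.mpr
      ⟨Finset.mem_powerset.mpr ((Finset.erase_subset _ _).trans hF₀F), hr⟩
    have := hmin _ hmem
    have := Finset.card_erase_of_mem hg
    have : 1 ≤ F₀.card := Finset.card_pos.mpr ⟨g, hg⟩
    omega
  rcases greach_erase_decomp hab hF₀r with h1 | ⟨h1, h2⟩ | ⟨h1, h2⟩
  · exact hbr h1
  · -- u ~ a, b ~ v in F₀.erase g ⊆ F.erase g
    have hsub : F₀.erase g ⊆ F.erase g := by
      intro x hx
      exact Finset.mem_erase.mpr ⟨(Finset.mem_erase.mp hx).1, hF₀F (Finset.mem_erase.mp hx).2⟩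
    have hab' : GReach ends (F.erase g) a b :=
      greach_trans (greach_symm (greach_mono hsub h1))
        (greach_trans hcon (greach_symm (greach_mono hsub h2)))
    exact forest_no_cycle hF (hF₀F hg) hab hab'
  · have hsub : F₀.erase g ⊆ F.erase g := by
      intro x hx
      exact Finset.mem_erase.mpr ⟨(Finset.mem_erase.mp hx).1, hF₀F (Finset.mem_erase.mp hx).2⟩
    have hba' : GReach ends (F.erase g) b a :=
      greach_trans (greach_symm (greach_mono hsub h1))
        (greach_trans hcon (greach_symm (greach_mono hsub h2)))
    exact forest_no_cycle hF (hF₀F hg) hab (greach_symm hba')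
  -- done

end NWaux3

section NWmain
variable {V β : Type}

lemma isForest_subset {ends : β → Sym2 V} {F G : Finset β} (hF : IsForest ends F)
    (hGF : G ⊆ F) : IsForest ends G := fun X hX =>
  le_trans (Finset.card_le_card (edgesIn_mono_left hGF)) (hF X hX)


lemma sum_card_update {k : ℕ} (Ft : Fin k → Finset β) (i : Fin k) (C : Finset β) :
    (∑ j, (Function.update Ft i C j).card) = C.card + ∑ j ∈ Finset.univ \ {i}, (Ft j).card := by
  classical
  have hpt : ∀ j, (Function.update Ft i C j).card =
      Function.update (fun j => (Ft j).card) i C.card j := by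
    intro j
    by_cases h : j = i
    · subst h; simp
    · rw [Function.update_of_ne h, Function.update_of_ne h]
  rw [Finset.sum_congr rfl (fun j _ => hpt j)]
  exact Finset.sum_update_of_mem (Finset.mem_univ i) _ _

/-- states of the exchange process: a tuple of forests together with the current
unused edge; transitions swap the unused edge into a forest, expelling a bridge. -/
inductive Reach (ends : β → Sym2 V) {k : ℕ} (F0 : Fin k → Finset β) (e0 : β) :
    (Fin k → Finset β) → β → Prop
  | base : Reach ends F0 e0 F0 e0
  | step {Ft : Fin k → Finset β} {f : β} (i : Fin k) (g : β) (a b : V)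
      (hR : Reach ends F0 e0 Ft f) (hg : g ∈ Ft i) (hf : ends f = s(a, b))
      (hbr : ¬ GReach ends ((Ft i).erase g) a b) :
      Reach ends F0 e0 (Function.update Ft i (insert f ((Ft i).erase g))) g

variable [Fintype V] [Fintype β] {ends : β → Sym2 V} {k : ℕ} {F0 : Fin k → Finset β} {e0 : β}

/-- the set of edges which are unused in some reachable state. -/
noncomputable def RSet (ends : β → Sym2 V) (F0 : Fin k → Finset β) (e0 : β) : Finset β :=
  Finset.univ.filter (fun y => ∃ Ft, Reach ends F0 e0 Ft y)

lemma mem_RSet {y : β} : y ∈ RSet ends F0 e0 ↔ ∃ Ft, Reach ends F0 e0 Ft y := by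
  unfold RSet
  simp

lemma reach_inv (hFor : ∀ i, IsForest ends (F0 i))
    (hdis : ∀ i j, i ≠ j → Disjoint (F0 i) (F0 j)) (he0 : ∀ i, e0 ∉ F0 i)
    {Ft : Fin k → Finset β} {f : β} (hR : Reach ends F0 e0 Ft f) :
    (∀ i, IsForest ends (Ft i)) ∧ (∀ i j, i ≠ j → Disjoint (Ft i) (Ft j)) ∧
      (∀ i, f ∉ Ft i) ∧ (∑ i, (Ft i).card) = ∑ i, (F0 i).card := by
  induction hR with
  | base => exact ⟨hFor, hdis, he0, rfl⟩
  | step i g a b hR hg hf hbr ih =>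
    rename_i Ft f
    obtain ⟨ihFor, ihdis, ihf, ihsum⟩ := ih
    refine ⟨?_, ?_, ?_, ?_⟩
    · intro j
      by_cases hji : j = i
      · subst hji
        rw [Function.update_self]
        exact isForest_insert (isForest_subset (ihFor j) (Finset.erase_subset _ _)) hf hbr
      · rw [Function.update_of_ne hji]
        exact ihFor j
    · intro j l hjl
      by_cases hji : j = i <;> by_cases hli : l = i
      · exact absurd (hji.trans hli.symm) hjl
      · subst hji
        rw [Function.update_self, Function.update_of_ne hli]
        refine Finset.disjoint_left.mpr ?_
        intro x hx hxl
        rcases Finset.mem_insert.mp hx with rfl | hx'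
        · exact ihf l hxl
        · exact Finset.disjoint_left.mp (ihdis j l hjl)
            (Finset.erase_subset _ _ hx') hxl
      · subst hli
        rw [Function.update_self, Function.update_of_ne hji]
        refine Finset.disjoint_left.mpr ?_
        intro x hx hxl
        rcases Finset.mem_insert.mp hxl with heq | hx'
        · exact ihf j (heq ▸ hx)
        · exact Finset.disjoint_left.mp (ihdis j l hjl) hx (Finset.erase_subset _ _ hx')
      · rw [Function.update_of_ne hji, Function.update_of_ne hli]
        exact ihdis j l hjl
    · intro j
      by_cases hji : j = i
      · subst hji
        rw [Function.update_self]
        intro hgmem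
        rcases Finset.mem_insert.mp hgmem with rfl | hx'
        · exact ihf j hg
        · exact (Finset.mem_erase.mp hx').1 rfl
      · rw [Function.update_of_ne hji]
        intro hgmem
        exact Finset.disjoint_left.mp (ihdis i j (fun h => hji h.symm)) hg hgmem
    · rw [sum_card_update]
      have hfni : f ∉ (Ft i).erase g := fun h => ihf i (Finset.erase_subset _ _ h)
      have hcardC : (insert f ((Ft i).erase g)).card = (Ft i).card := by
        rw [Finset.card_insert_of_notMem hfni, Finset.card_erase_of_mem hg]
        have : 1 ≤ (Ft i).card := Finset.card_pos.mpr ⟨g, hg⟩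
        omega
      rw [hcardC, ← ihsum,
        Finset.sum_eq_add_sum_sdiff_singleton_of_mem (Finset.mem_univ i) (fun j => (Ft j).card)]

lemma reach_maximal (hFor : ∀ i, IsForest ends (F0 i))
    (hdis : ∀ i j, i ≠ j → Disjoint (F0 i) (F0 j)) (he0 : ∀ i, e0 ∉ F0 i)
    (hmax : ∀ G : Fin k → Finset β, (∀ i, IsForest ends (G i)) →
      (∀ i j, i ≠ j → Disjoint (G i) (G j)) → (∑ i, (G i).card) ≤ ∑ i, (F0 i).card)
    {Ft : Fin k → Finset β} {f : β} (hR : Reach ends F0 e0 Ft f) (i : Fin k) {a b : V}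
    (hf : ends f = s(a, b)) : GReach ends (Ft i) a b := by
  by_contra hn
  obtain ⟨ihFor, ihdis, ihf, ihsum⟩ := reach_inv hFor hdis he0 hR
  set G := Function.update Ft i (insert f (Ft i)) with hG
  have hGFor : ∀ j, IsForest ends (G j) := by
    intro j
    by_cases hji : j = i
    · subst hji
      rw [hG, Function.update_self]
      exact isForest_insert (ihFor j) hf hn
    · rw [hG, Function.update_of_ne hji]
      exact ihFor j
  have hGdis : ∀ j l, j ≠ l → Disjoint (G j) (G l) := by
    intro j l hjl
    by_cases hji : j = i <;> by_cases hli : l = i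
    · exact absurd (hji.trans hli.symm) hjl
    · subst hji
      rw [hG, Function.update_self, Function.update_of_ne hli]
      refine Finset.disjoint_left.mpr ?_
      intro x hx hxl
      rcases Finset.mem_insert.mp hx with rfl | hx'
      · exact ihf l hxl
      · exact Finset.disjoint_left.mp (ihdis j l hjl) hx' hxl
    · subst hli
      rw [hG, Function.update_self, Function.update_of_ne hji]
      refine Finset.disjoint_left.mpr ?_
      intro x hx hxl
      rcases Finset.mem_insert.mp hxl with heq | hx'
      · exact ihf j (heq ▸ hx)
      · exact Finset.disjoint_left.mp (ihdis j l hjl) hx hx'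
    · rw [hG, Function.update_of_ne hji, Function.update_of_ne hli]
      exact ihdis j l hjl
  have hsum : (∑ j, (G j).card) = (∑ j, (Ft j).card) + 1 := by
    rw [hG, sum_card_update, Finset.card_insert_of_notMem (ihf i),
      Finset.sum_eq_add_sum_sdiff_singleton_of_mem (Finset.mem_univ i) (fun j => (Ft j).card)]
    omega
  have := hmax G hGFor hGdis
  omega

lemma bridge_mem_RSet {Ft : Fin k → Finset β} {f : β} (hR : Reach ends F0 e0 Ft f)
    {i : Fin k} {g : β} {a b : V} (hg : g ∈ Ft i) (hf : ends f = s(a, b))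
    (hbr : ¬ GReach ends ((Ft i).erase g) a b) : g ∈ RSet ends F0 e0 :=
  mem_RSet.mpr ⟨_, Reach.step i g a b hR hg hf hbr⟩

lemma reach_conn_R (hFor : ∀ i, IsForest ends (F0 i))
    (hdis : ∀ i j, i ≠ j → Disjoint (F0 i) (F0 j)) (he0 : ∀ i, e0 ∉ F0 i)
    (hmax : ∀ G : Fin k → Finset β, (∀ i, IsForest ends (G i)) →
      (∀ i j, i ≠ j → Disjoint (G i) (G j)) → (∑ i, (G i).card) ≤ ∑ i, (F0 i).card)
    {Ft : Fin k → Finset β} {f : β} (hR : Reach ends F0 e0 Ft f) (i : Fin k) {a b : V}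
    (hf : ends f = s(a, b)) : GReach ends (Ft i ∩ RSet ends F0 e0) a b := by
  have hconn := reach_maximal hFor hdis he0 hmax hR i hf
  obtain ⟨ihFor, _, _, _⟩ := reach_inv hFor hdis he0 hR
  obtain ⟨F₀, hF₀sub, hF₀r, hF₀br⟩ := exists_bridge_subset (ihFor i) hconn
  refine greach_mono ?_ hF₀r
  intro g hgF₀
  refine Finset.mem_inter.mpr ⟨hF₀sub hgF₀, ?_⟩
  exact bridge_mem_RSet hR (hF₀sub hgF₀) hf (hF₀br g hgF₀)

lemma reach_equiv (hFor : ∀ i, IsForest ends (F0 i))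
    (hdis : ∀ i j, i ≠ j → Disjoint (F0 i) (F0 j)) (he0 : ∀ i, e0 ∉ F0 i)
    (hmax : ∀ G : Fin k → Finset β, (∀ i, IsForest ends (G i)) →
      (∀ i j, i ≠ j → Disjoint (G i) (G j)) → (∑ i, (G i).card) ≤ ∑ i, (F0 i).card)
    {Ft : Fin k → Finset β} {f : β} (hR : Reach ends F0 e0 Ft f) :
    ∀ (i : Fin k) (u v : V), GReach ends (F0 i ∩ RSet ends F0 e0) u v ↔
      GReach ends (Ft i ∩ RSet ends F0 e0) u v := by
  induction hR with
  | base => intro i u v; exact Iff.rfl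
  | step i g a b hR hg hf hbr ih =>
    rename_i Ft f
    intro j u v
    by_cases hji : j = i
    swap
    · rw [Function.update_of_ne hji]
      exact ih j u v
    subst hji
    rw [Function.update_self]
    set R := RSet ends F0 e0 with hRdef
    set C := insert f ((Ft j).erase g) with hCdef
    have hchild : Reach ends F0 e0 (Function.update Ft j C) g :=
      Reach.step j g a b hR hg hf hbr
    obtain ⟨c, d, hcd⟩ := sym2_exists (ends g)
    have hcdconn : GReach ends (C ∩ R) c d := by
      have := reach_conn_R hFor hdis he0 hmax hchild j hcd
      rwa [Function.update_self] at this
    have habconn : GReach ends (Ft j ∩ R) a b := reach_conn_R hFor hdis he0 hmax hR j hf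
    constructor
    · intro h
      have h1 := (ih j u v).mp h
      refine greach_reroute hcd ?_ hcdconn h1
      intro x hx
      obtain ⟨hxg, hx2⟩ := Finset.mem_erase.mp hx
      obtain ⟨hx3, hx4⟩ := Finset.mem_inter.mp hx2
      exact Finset.mem_inter.mpr ⟨Finset.mem_insert_of_mem
        (Finset.mem_erase.mpr ⟨hxg, hx3⟩), hx4⟩
    · intro h
      refine (ih j u v).mpr ?_
      refine greach_reroute hf ?_ habconn h
      intro x hx
      obtain ⟨hxf, hx2⟩ := Finset.mem_erase.mp hx
      obtain ⟨hx3, hx4⟩ := Finset.mem_inter.mp hx2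
      rcases Finset.mem_insert.mp hx3 with rfl | hx5
      · exact absurd rfl hxf
      · exact Finset.mem_inter.mpr ⟨Finset.erase_subset _ _ hx5, hx4⟩

lemma RSet_closure (hFor : ∀ i, IsForest ends (F0 i))
    (hdis : ∀ i j, i ≠ j → Disjoint (F0 i) (F0 j)) (he0 : ∀ i, e0 ∉ F0 i)
    (hmax : ∀ G : Fin k → Finset β, (∀ i, IsForest ends (G i)) →
      (∀ i j, i ≠ j → Disjoint (G i) (G j)) → (∑ i, (G i).card) ≤ ∑ i, (F0 i).card)
    {y : β} (hy : y ∈ RSet ends F0 e0) (i : Fin k) {a b : V} (hyab : ends y = s(a, b)) :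
    GReach ends (F0 i ∩ RSet ends F0 e0) a b := by
  obtain ⟨Ft, hR⟩ := mem_RSet.mp hy
  exact (reach_equiv hFor hdis he0 hmax hR i a b).mpr
    (reach_conn_R hFor hdis he0 hmax hR i hyab)

end NWmain

/-- **Nash-Williams' forest decomposition theorem.**  A graph `G` can be decomposed into
`k` edge-disjoint forests if and only if `γ_f(G) ≤ k`, i.e. iff
`|E(X)| / (|X| - 1) ≤ k` for every `X ⊆ V` with `|X| > 1`. -/
theorem forest_decomposition {V β : Type} [Fintype V] [Nonempty V] [Fintype β]
    (ends : β → Sym2 V) (hloopless : ∀ e : β, ¬(ends e).IsDiag) (k : ℕ) :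
    (∃ F : Fin k → Finset β,
        (∀ i j, i ≠ j → Disjoint (F i) (F j)) ∧
        (Finset.univ.biUnion F = (Finset.univ : Finset β)) ∧
        ∀ i, IsForest ends (F i)) ↔
    (∀ X : Finset V, 1 < X.card →
      ((edgesIn ends (Finset.univ : Finset β) X).card : ℚ) / ((X.card : ℚ) - 1) ≤ k) := by
  constructor
  · rintro ⟨F, hdisj, hcover, hfor⟩ X hX
    have hXne : X.Nonempty := Finset.card_pos.mp (by omega)
    have hcount : (edgesIn ends (Finset.univ : Finset β) X).card ≤ k * (X.card - 1) := by
      have hsplit : edgesIn ends (Finset.univ : Finset β) X =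
          Finset.univ.biUnion (fun i => edgesIn ends (F i) X) := by
        ext f
        simp only [mem_edgesIn, Finset.mem_biUnion]
        constructor
        · rintro ⟨-, h2⟩
          have hf : f ∈ Finset.univ.biUnion F := by rw [hcover]; exact Finset.mem_univ f
          obtain ⟨i, hi, hfi⟩ := Finset.mem_biUnion.mp hf
          exact ⟨i, hi, hfi, h2⟩
        · rintro ⟨i, -, hfi, h2⟩
          exact ⟨Finset.mem_univ f, h2⟩
      rw [hsplit, Finset.card_biUnion (fun i _ j _ hij => Finset.disjoint_left.mpr
        (fun x hx hx2 => Finset.disjoint_left.mp (hdisj i j hij)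
          (edgesIn_subset hx) (edgesIn_subset hx2)))]
      calc (∑ i, (edgesIn ends (F i) X).card) ≤ ∑ _i : Fin k, (X.card - 1) :=
            Finset.sum_le_sum fun i _ => hfor i X hXne
        _ = k * (X.card - 1) := by simp [Finset.sum_const, mul_comm]
    have hpos : (0 : ℚ) < (X.card : ℚ) - 1 := by
      have : (2 : ℚ) ≤ (X.card : ℚ) := by exact_mod_cast hX
      linarith
    rw [div_le_iff₀ hpos]
    have h1 : ((edgesIn ends (Finset.univ : Finset β) X).card : ℚ) ≤
        ((k * (X.card - 1) : ℕ) : ℚ) := by exact_mod_cast hcount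
    have h2 : ((k * (X.card - 1) : ℕ) : ℚ) = (k : ℚ) * ((X.card : ℚ) - 1) := by
      have h3 : 1 ≤ X.card := by omega
      push_cast [Nat.cast_sub h3]
      ring
    linarith [h1, h2.symm.le]
  · intro hdens
    classical
    set P : (Fin k → Finset β) → Prop := fun G =>
      (∀ i, IsForest ends (G i)) ∧ ∀ i j, i ≠ j → Disjoint (G i) (G j) with hP
    have hPempty : P (fun _ => (∅ : Finset β)) := by
      constructor
      · intro i X hXne
        have : edgesIn ends (∅ : Finset β) X = ∅ := by
          apply Finset.eq_empty_of_forall_notMem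
          intro x hx
          exact absurd (mem_edgesIn.mp hx).1 (Finset.notMem_empty x)
        simp [this]
      · intro i j _
        exact Finset.disjoint_empty_left _
    obtain ⟨F0, hF0mem, hmax0⟩ := Finset.exists_max_image
      (Finset.univ.filter P) (fun G => ∑ i, (G i).card)
      ⟨fun _ => ∅, Finset.mem_filter.mpr ⟨Finset.mem_univ _, hPempty⟩⟩
    have hF0P : P F0 := (Finset.mem_filter.mp hF0mem).2
    obtain ⟨hFor, hdis⟩ := hF0P
    have hmax : ∀ G : Fin k → Finset β, (∀ i, IsForest ends (G i)) →
        (∀ i j, i ≠ j → Disjoint (G i) (G j)) →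
        (∑ i, (G i).card) ≤ ∑ i, (F0 i).card := by
      intro G h1 h2
      exact hmax0 G (Finset.mem_filter.mpr ⟨Finset.mem_univ _, h1, h2⟩)
    refine ⟨F0, hdis, ?_, hFor⟩
    by_contra hne
    obtain ⟨e0, _, he0nb⟩ := Finset.exists_of_ssubset
      (lt_of_le_of_ne (Finset.subset_univ _) hne)
    have he0 : ∀ i, e0 ∉ F0 i := by
      intro i hi
      exact he0nb (Finset.mem_biUnion.mpr ⟨i, Finset.mem_univ _, hi⟩)
    obtain ⟨v0, v1, hv⟩ := sym2_exists (ends e0)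
    have hv01 : v0 ≠ v1 := by
      intro h
      exact hloopless e0 (by rw [hv, h]; exact Sym2.mk_isDiag_iff.mpr rfl)
    set R := RSet ends F0 e0 with hR
    have he0R : e0 ∈ R := mem_RSet.mpr ⟨F0, Reach.base⟩
    set X := Finset.univ.filter (fun w => GReach ends R v0 w) with hXdef
    have hv0X : v0 ∈ X := Finset.mem_filter.mpr ⟨Finset.mem_univ _, greach_refl⟩
    have hv1X : v1 ∈ X := Finset.mem_filter.mpr ⟨Finset.mem_univ _, greach_single he0R hv⟩
    have hXcl : ∀ z ∈ R, ∀ x y, ends z = s(x, y) → x ∈ X → y ∈ X := by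
      intro z hz x y hxy hx
      exact Finset.mem_filter.mpr ⟨Finset.mem_univ _,
        greach_trans (Finset.mem_filter.mp hx).2 (greach_single hz hxy)⟩
    have hcard2 : 2 ≤ X.card := by
      have hsub : ({v0, v1} : Finset V) ⊆ X := by
        intro x hx
        rcases Finset.mem_insert.mp hx with rfl | hx'
        · exact hv0X
        · rw [Finset.mem_singleton.mp hx']; exact hv1X
      have := Finset.card_le_card hsub
      rwa [Finset.card_pair hv01] at this
    have hforX : ∀ i : Fin k, X.card ≤ (edgesIn ends (F0 i ∩ R) X).card + 1 := by
      intro i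
      refine con_card (edgesIn ends (F0 i ∩ R) X).card _ X le_rfl
        (fun e he => (mem_edgesIn.mp he).2) ⟨v0, hv0X⟩ ?_
      intro u hu w hw
      have h1 : GReach ends R u w := greach_trans
        (greach_symm (Finset.mem_filter.mp hu).2) (Finset.mem_filter.mp hw).2
      have h2 : GReach ends (F0 i ∩ R) u w := by
        clear hw
        induction h1 with
        | refl => exact greach_refl
        | tail _ h3 ih =>
          obtain ⟨z, hzR, hz⟩ := h3
          exact greach_trans ih (RSet_closure hFor hdis he0 hmax hzR i hz)
      have hXcl' : ∀ e ∈ F0 i ∩ R, ∀ x y, ends e = s(x, y) → x ∈ X → y ∈ X :=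
        fun e he => hXcl e (Finset.mem_inter.mp he).2
      exact (greach_closed hXcl' hu h2).2
    have hbig : 1 + k * (X.card - 1) ≤ (edgesIn ends (Finset.univ : Finset β) X).card := by
      set B := Finset.univ.biUnion (fun i => edgesIn ends (F0 i ∩ R) X) with hB
      have he0B : e0 ∉ B := by
        intro h
        obtain ⟨i, _, hi⟩ := Finset.mem_biUnion.mp h
        exact he0 i (Finset.mem_inter.mp (edgesIn_subset hi)).1
      have hBcard : k * (X.card - 1) ≤ B.card := by
        rw [hB, Finset.card_biUnion (fun i _ j _ hij => Finset.disjoint_left.mpr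
          (fun x hx hx2 => Finset.disjoint_left.mp (hdis i j hij)
            (Finset.mem_inter.mp (edgesIn_subset hx)).1
            (Finset.mem_inter.mp (edgesIn_subset hx2)).1))]
        calc k * (X.card - 1) = ∑ _i : Fin k, (X.card - 1) := by
              simp [Finset.sum_const, mul_comm]
          _ ≤ ∑ i, (edgesIn ends (F0 i ∩ R) X).card :=
              Finset.sum_le_sum fun i _ => by have := hforX i; omega
      have hsub : insert e0 B ⊆ edgesIn ends (Finset.univ : Finset β) X := by
        intro x hx
        rcases Finset.mem_insert.mp hx with rfl | hx'
        · refine mem_edgesIn.mpr ⟨Finset.mem_univ _, fun v hv' => ?_⟩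
          rw [hv, Sym2.mem_iff] at hv'
          rcases hv' with rfl | rfl
          · exact hv0X
          · exact hv1X
        · obtain ⟨i, _, hi⟩ := Finset.mem_biUnion.mp hx'
          exact edgesIn_mono_left (Finset.subset_univ _) hi
      have := Finset.card_le_card hsub
      rw [Finset.card_insert_of_notMem he0B] at this
      omega
    have hd := hdens X (by omega)
    have hpos : (0 : ℚ) < (X.card : ℚ) - 1 := by
      have : (2 : ℚ) ≤ (X.card : ℚ) := by exact_mod_cast hcard2
      linarith
    rw [div_le_iff₀ hpos] at hd
    have h2 : (k : ℚ) * ((X.card : ℚ) - 1) = ((k * (X.card - 1) : ℕ) : ℚ) := by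
      have h3 : 1 ≤ X.card := by omega
      push_cast [Nat.cast_sub h3]
      ring
    rw [h2] at hd
    have hd' : (edgesIn ends (Finset.univ : Finset β) X).card ≤ k * (X.card - 1) :=
      Nat.cast_le.mp hd
    omega
end
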